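/- arXiv:1702.03340 — 7 statements merged into one kernel-verified Lean document; each statement's English description precedes it below -/
import Mathlib

section
/- Let φ be a Finsler metric on an open set U ⊆ ℝ² and p ∈ U, and suppose that for every v ∈ ℝ²∖{0} the first and second derivatives of the map x ↦ φ(x, v) vanish at x = p. Let (V, Φ) be a 3-dimensional Banach–Minkowski space and f : U → V an isometric embedding of (U, φ). Set H := range(Df_p), fix λ ∈ V*∖{0} with λ|_H = 0, and define S(v, w) := λ(D²f_p(v, w)) for v, w ∈ ℝ². Then there exists τ ∈ V with λ(τ) = 1 (in particular τ ∉ H) such that D²f_p(v, w) = S(v, w)·τ for all v, w ∈ ℝ². -/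
open Module

noncomputable section

def IsBanachMinkowski {V : Type*} [NormedAddCommGroup V] [NormedSpace ℝ V] (Φ : V → ℝ) : Prop :=
  Φ 0 = 0 ∧
  (∀ v : V, v ≠ 0 → 0 < Φ v) ∧
  (∀ t : ℝ, 0 ≤ t → ∀ v : V, Φ (t • v) = t * Φ v) ∧
  (∀ v w : V, Φ (v + w) ≤ Φ v + Φ w) ∧
  ContDiffOn ℝ (⊤ : ℕ∞) Φ {(0 : V)}ᶜ ∧
  (∀ v : V, v ≠ 0 → ∀ w : V, w ≠ 0 →
    0 < iteratedFDeriv ℝ 2 (fun u => Φ u ^ 2) v ![w, w])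

def IsFinslerMetric (U : Set (ℝ × ℝ)) (φ : ℝ × ℝ → ℝ × ℝ → ℝ) : Prop :=
  ContDiffOn ℝ (⊤ : ℕ∞) (fun q : (ℝ × ℝ) × ℝ × ℝ => φ q.1 q.2) (U ×ˢ {(0 : ℝ × ℝ)}ᶜ) ∧
  ∀ x ∈ U, IsBanachMinkowski (φ x)

def IsIsometricEmbedding (U : Set (ℝ × ℝ)) (φ : ℝ × ℝ → ℝ × ℝ → ℝ)
    {V : Type*} [NormedAddCommGroup V] [NormedSpace ℝ V] (Φ : V → ℝ)
    (f : ℝ × ℝ → V) : Prop :=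
  ContDiffOn ℝ (⊤ : ℕ∞) f U ∧ Set.InjOn f U ∧ ∀ x ∈ U, ∀ v : ℝ × ℝ, Φ (fderiv ℝ f x v) = φ x v



private lemma range_pair {V : Type*} [AddCommGroup V] [Module ℝ V] (x y : V) :
    Set.range ![x, y] = {x, y} := by
  simp [Matrix.range_cons, Matrix.range_empty, Set.pair_comm]

private lemma finrank_span_single_le {V : Type*} [NormedAddCommGroup V] [NormedSpace ℝ V]
    [FiniteDimensional ℝ V] (x : V) : Module.finrank ℝ (Submodule.span ℝ {x}) ≤ 1 := by
  by_cases hx : x = 0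
  · rw [hx, Submodule.span_zero_singleton, finrank_bot]
    omega
  · rw [finrank_span_singleton hx]

private lemma pair_dep_mem {V : Type*} [AddCommGroup V] [Module ℝ V] {x y : V}
    (h : ∃ cc : ℝ × ℝ, cc ≠ 0 ∧ cc.1 • x + cc.2 • y = 0) (hy : y ≠ 0) :
    x ∈ Submodule.span ℝ {y} := by
  obtain ⟨cc, hne, hz⟩ := h
  by_cases h1 : cc.1 = 0
  · exfalso
    rw [h1, zero_smul, zero_add] at hz
    have h2 : cc.2 ≠ 0 := by
      intro h2
      exact hne (Prod.ext h1 h2)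
    rcases smul_eq_zero.mp hz with h | h
    · exact h2 h
    · exact hy h
  · apply Submodule.mem_span_singleton.mpr
    refine ⟨-(cc.1⁻¹ * cc.2), ?_⟩
    have h' := congrArg (fun z => (cc.1)⁻¹ • z) hz
    simp only [smul_add, smul_smul, smul_zero] at h'
    rw [inv_mul_cancel₀ h1, one_smul] at h'
    have h'' := eq_neg_of_add_eq_zero_left h'
    rw [h'', ← neg_smul]

private lemma quad_closure {q : ℝ → ℝ} {c0 c1 c2 : ℝ}
    (hq : ∀ t, q t = c0 + c1 * t + c2 * t ^ 2) (h1 : q 1 ≠ 0) :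
    (0 : ℝ) ∈ closure {t | q t ≠ 0} := by
  by_contra hcl
  rw [Metric.mem_closure_iff] at hcl
  push_neg at hcl
  obtain ⟨ε, hε, hball⟩ := hcl
  have hzero : ∀ t : ℝ, |t| < ε → q t = 0 := by
    intro t ht
    by_contra h'
    have := hball t h'
    rw [Real.dist_eq] at this
    rw [abs_sub_comm] at this
    simp at this
    linarith
  have h0 : q 0 = 0 := hzero 0 (by simpa using hε)
  have hp : q (ε / 2) = 0 := hzero _ (by rw [abs_of_pos (by positivity)]; linarith)
  have hm : q (-(ε / 2)) = 0 := hzero _ (by rw [abs_neg, abs_of_pos (by positivity)]; linarith)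
  rw [hq] at h0 hp hm h1
  ring_nf at h0 hp hm h1
  have hc0 : c0 = 0 := by linarith
  have hc2 : c2 * (ε / 2) ^ 2 = 0 := by ring_nf; nlinarith
  have hc2' : c2 = 0 := by
    rcases mul_eq_zero.mp hc2 with h | h
    · exact h
    · exact absurd h (pow_ne_zero 2 (by positivity))
  have hc1 : c1 = 0 := by
    have : c1 * (ε / 2) = 0 := by nlinarith
    rcases mul_eq_zero.mp this with h | h
    · exact h
    · exact absurd h (by positivity)
  apply h1
  rw [hc0, hc1, hc2']
  ring

private lemma vanish_at_limit {h : ℝ → ℝ} {S : Set ℝ}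
    (hc : ContinuousAt h 0) (hS : (0 : ℝ) ∈ closure S) (hz : ∀ t ∈ S, h t = 0) :
    h 0 = 0 := by
  have hNe : (nhdsWithin (0:ℝ) S).NeBot := mem_closure_iff_nhdsWithin_neBot.mp hS
  have h1 : Filter.Tendsto h (nhdsWithin 0 S) (nhds (h 0)) :=
    hc.continuousWithinAt.tendsto
  have h2 : Filter.Tendsto h (nhdsWithin 0 S) (nhds 0) := by
    apply Filter.Tendsto.congr' _ tendsto_const_nhds
    filter_upwards [self_mem_nhdsWithin] with t ht
    exact (hz t ht).symm
  exact tendsto_nhds_unique h1 h2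

set_option maxHeartbeats 1000000 in
/-- Lemma: the second fundamental form has rank-one direction `τ`: for an
isometric embedding `f` of a Finsler surface that is second-order flat at `p`, there is a
vector `τ ∈ V` with `λ τ = 1` (so `τ ∉ H = range Df_p`) such that
`D²f_p(v, w) = S(v, w) • τ` where `S(v, w) = λ (D²f_p(v, w))`. -/
theorem statement5 (U : Set (ℝ × ℝ)) (hU : IsOpen U)
    (φ : ℝ × ℝ → ℝ × ℝ → ℝ) (hφ : IsFinslerMetric U φ)
    (p : ℝ × ℝ) (hp : p ∈ U)
    (hflat1 : ∀ v : ℝ × ℝ, v ≠ 0 → fderiv ℝ (fun x => φ x v) p = 0)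
    (hflat2 : ∀ v : ℝ × ℝ, v ≠ 0 → iteratedFDeriv ℝ 2 (fun x => φ x v) p = 0)
    (V : Type*) [NormedAddCommGroup V] [NormedSpace ℝ V] [FiniteDimensional ℝ V]
    (hdim : Module.finrank ℝ V = 3)
    (Φ : V → ℝ) (hΦ : IsBanachMinkowski Φ)
    (f : ℝ × ℝ → V) (hf : IsIsometricEmbedding U φ Φ f)
    (lam : V →ₗ[ℝ] ℝ) (hlam : lam ≠ 0)
    (hlamH : ∀ u ∈ Set.range (fderiv ℝ f p), lam u = 0) :
    ∃ τ : V, lam τ = 1 ∧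
      ∀ v w : ℝ × ℝ, iteratedFDeriv ℝ 2 f p ![v, w] =
        lam (iteratedFDeriv ℝ 2 f p ![v, w]) • τ := by
  classical
  obtain ⟨hfsm, hfinj, hiso⟩ := hf
  obtain ⟨hΦ0, hΦpos, hΦhom, hΦtri, hΦsm, hΦconv⟩ := hΦ
  have hUn : U ∈ nhds p := hU.mem_nhds hp
  obtain ⟨L, hLdef⟩ : ∃ L' : (ℝ × ℝ) →L[ℝ] V, L' = fderiv ℝ f p := ⟨_, rfl⟩
  obtain ⟨D2, hD2def⟩ : ∃ D' : (ℝ × ℝ) →L[ℝ] (ℝ × ℝ) →L[ℝ] V,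
      D' = fderiv ℝ (fderiv ℝ f) p := ⟨_, rfl⟩
  have hIt : ∀ v w : ℝ × ℝ, iteratedFDeriv ℝ 2 f p ![v, w] = D2 v w := by
    intro v w
    rw [iteratedFDeriv_two_apply]
    simp [hD2def]
  suffices h : ∃ τ : V, lam τ = 1 ∧ ∀ v w : ℝ × ℝ, D2 v w = lam (D2 v w) • τ by
    obtain ⟨τ, h1, h2⟩ := h
    exact ⟨τ, h1, fun v w => by rw [hIt v w]; exact h2 v w⟩
  -- positivity
  have hpos : ∀ v : ℝ × ℝ, v ≠ 0 → 0 < Φ (L v) := by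
    intro v hv
    rw [hLdef, hiso p hp v]
    exact (hφ.2 p hp).2.1 v hv
  have hLne : ∀ v : ℝ × ℝ, v ≠ 0 → L v ≠ 0 := by
    intro v hv h0
    have := hpos v hv
    rw [h0, hΦ0] at this
    exact lt_irrefl 0 this
  -- symmetry of the second derivative
  have hder : ∀ᶠ x in nhds p, HasFDerivAt f (fderiv ℝ f x) x := by
    filter_upwards [hU.eventually_mem hp] with x hx
    exact ((hfsm.contDiffAt (hU.mem_nhds hx)).differentiableAt (by simp)).hasFDerivAt
  have hd2 : HasFDerivAt (fderiv ℝ f) D2 p := by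
    rw [hD2def]
    have h1 : ContDiffAt ℝ 1 (fderiv ℝ f) p :=
      (hfsm.contDiffAt hUn).fderiv_right (by norm_cast)
    exact (h1.differentiableAt one_ne_zero).hasFDerivAt
  have hsymm : ∀ u v : ℝ × ℝ, D2 u v = D2 v u :=
    fun u v => second_derivative_symmetric_of_eventually hder hd2 u v
  -- Euler identity
  have hEuler : ∀ y : V, y ≠ 0 → fderiv ℝ Φ y y = Φ y := by
    intro y hy
    have hyn : {(0:V)}ᶜ ∈ nhds y := isOpen_compl_singleton.mem_nhds hy
    have hΦd : HasFDerivAt Φ (fderiv ℝ Φ y) y :=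
      ((hΦsm.contDiffAt hyn).differentiableAt (by simp)).hasFDerivAt
    have hcurve : HasDerivAt (fun t : ℝ => Φ (t • y)) (fderiv ℝ Φ y y) 1 := by
      have hsm : HasDerivAt (fun t : ℝ => t • y) y 1 := by
        simpa using (hasDerivAt_id (1:ℝ)).smul_const y
      have hΦd' : HasFDerivAt Φ (fderiv ℝ Φ y) ((1:ℝ) • y) := by rwa [one_smul]
      exact (hΦd'.comp_hasDerivAt (1:ℝ) hsm)
    have heq : (fun t : ℝ => Φ (t • y)) =ᶠ[nhds (1:ℝ)] fun t => t * Φ y := by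
      filter_upwards [eventually_gt_nhds (by norm_num : (0:ℝ) < 1)] with t ht
      exact hΦhom t ht.le y
    have hcurve2 : HasDerivAt (fun t : ℝ => t * Φ y) (fderiv ℝ Φ y y) 1 :=
      hcurve.congr_of_eventuallyEq heq.symm
    have hcurve3 : HasDerivAt (fun t : ℝ => t * Φ y) (Φ y) 1 := by
      simpa using (hasDerivAt_id (1:ℝ)).mul_const (Φ y)
    exact hcurve2.unique hcurve3
  -- first-order identity
  have hone : ∀ v : ℝ × ℝ, v ≠ 0 → ∀ u : ℝ × ℝ, fderiv ℝ Φ (L v) (D2 u v) = 0 := by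
    intro v hv u
    have hLvne := hLne v hv
    have hg1 : HasFDerivAt (fun x => fderiv ℝ f x v)
        ((ContinuousLinearMap.apply ℝ V v).comp D2) p :=
      (ContinuousLinearMap.apply ℝ V v).hasFDerivAt.comp p hd2
    have hΦd : HasFDerivAt Φ (fderiv ℝ Φ (L v)) (fderiv ℝ f p v) := by
      rw [← hLdef]
      exact ((hΦsm.contDiffAt (isOpen_compl_singleton.mem_nhds hLvne)).differentiableAt
        (by simp)).hasFDerivAt
    have hcomp : HasFDerivAt (fun x => Φ (fderiv ℝ f x v))
        ((fderiv ℝ Φ (L v)).comp ((ContinuousLinearMap.apply ℝ V v).comp D2)) p :=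
      hΦd.comp p hg1
    have heq : (fun x => Φ (fderiv ℝ f x v)) =ᶠ[nhds p] fun x => φ x v := by
      filter_upwards [hUn] with x hx
      exact hiso x hx v
    have hφd : HasFDerivAt (fun x => φ x v)
        ((fderiv ℝ Φ (L v)).comp ((ContinuousLinearMap.apply ℝ V v).comp D2)) p :=
      hcomp.congr_of_eventuallyEq heq.symm
    have hzero := hflat1 v hv
    have : (fderiv ℝ Φ (L v)).comp ((ContinuousLinearMap.apply ℝ V v).comp D2) = 0 := by
      rw [← hφd.fderiv]; exact hzero
    have happ := congrArg (fun (T : (ℝ × ℝ) →L[ℝ] ℝ) => T u) this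
    simpa [hsymm u v] using happ
  -- continuity of the differential of Φ
  have hcontn : ∀ y : V, y ≠ 0 → ContinuousAt (fderiv ℝ Φ) y := by
    intro y hy
    exact (hΦsm.continuousOn_fderiv_of_isOpen isOpen_compl_singleton
      (by simp)).continuousAt (isOpen_compl_singleton.mem_nhds hy)
  -- basic algebra setup
  set e₁ : ℝ × ℝ := (1, 0) with he₁
  set e₂ : ℝ × ℝ := (0, 1) with he₂
  set a : V := D2 e₁ e₁ with ha
  set b : V := D2 e₁ e₂ with hb
  set c : V := D2 e₂ e₂ with hc
  have hexp : ∀ u v : ℝ × ℝ, D2 u v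
      = (u.1 * v.1) • a + (u.1 * v.2 + u.2 * v.1) • b + (u.2 * v.2) • c := by
    intro u v
    have hu : u = u.1 • e₁ + u.2 • e₂ := by ext <;> simp [he₁, he₂]
    have hv : v = v.1 • e₁ + v.2 • e₂ := by ext <;> simp [he₁, he₂]
    have hba : D2 e₂ e₁ = b := hsymm e₂ e₁
    conv_lhs => rw [hu, hv]
    simp only [map_add, map_smul, ContinuousLinearMap.add_apply,
      ContinuousLinearMap.smul_apply, hba, ← ha, ← hb, ← hc]
    module
  set W : Submodule ℝ V := Submodule.span ℝ {a, b, c} with hWdef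
  have haW : a ∈ W := Submodule.subset_span (by simp)
  have hbW : b ∈ W := Submodule.subset_span (by simp)
  have hcW : c ∈ W := Submodule.subset_span (by simp)
  have hDW : ∀ u v : ℝ × ℝ, D2 u v ∈ W := fun u v => by
    rw [hexp u v]
    exact add_mem (add_mem (Submodule.smul_mem _ _ haW) (Submodule.smul_mem _ _ hbW))
      (Submodule.smul_mem _ _ hcW)
  -- the tangent plane as a submodule
  set HS : Submodule ℝ V := LinearMap.range (L : (ℝ × ℝ) →ₗ[ℝ] V) with hHSdef
  have hLinj : Function.Injective (L : (ℝ × ℝ) →ₗ[ℝ] V) := by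
    rw [← LinearMap.ker_eq_bot, Submodule.eq_bot_iff]
    intro v hv
    by_contra h0
    exact hLne v h0 hv
  have hHS2 : finrank ℝ HS = 2 := by
    rw [hHSdef, LinearMap.finrank_range_of_inj hLinj]
    simp
  have hkerlam : LinearMap.ker lam = HS := by
    have hle : HS ≤ LinearMap.ker lam := by
      rintro x ⟨w, rfl⟩
      apply hlamH
      exact ⟨w, by rw [← hLdef]; rfl⟩
    obtain ⟨z, hz⟩ : ∃ z, lam z ≠ 0 := by
      by_contra h'
      push_neg at h'
      exact hlam (LinearMap.ext fun z => by simp [h' z])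
    have hrange : LinearMap.range lam = ⊤ := by
      rw [Submodule.eq_top_iff']
      intro y
      exact ⟨(y / lam z) • z, by simp [map_smul, div_mul_cancel₀ _ hz, smul_eq_mul]⟩
    have hker2 : finrank ℝ (LinearMap.ker lam) = 2 := by
      have hrk := LinearMap.finrank_range_add_finrank_ker lam
      rw [hrange, hdim] at hrk
      have : finrank ℝ (⊤ : Submodule ℝ ℝ) = 1 := by simp
      omega
    exact (Submodule.eq_of_le_of_finrank_le hle (by omega)).symm
  have hlamne : ∀ z : V, z ∉ HS → lam z ≠ 0 := by
    intro z hzH h0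
    exact hzH (hkerlam ▸ LinearMap.mem_ker.mpr h0)
  have hWle : finrank ℝ W ≤ 3 := by
    have := Submodule.finrank_le W
    omega
  interval_cases hWrk : finrank ℝ W
  · -- case finrank W = 0
    have hbot : W = ⊥ := Submodule.finrank_eq_zero.mp hWrk
    have ha0 : a = 0 := by
      have := haW; rw [hbot] at this; simpa using this
    have hb0 : b = 0 := by
      have := hbW; rw [hbot] at this; simpa using this
    have hc0 : c = 0 := by
      have := hcW; rw [hbot] at this; simpa using this
    obtain ⟨z, hz⟩ : ∃ z, lam z ≠ 0 := by
      by_contra h'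
      push_neg at h'
      exact hlam (LinearMap.ext fun z => by simp [h' z])
    refine ⟨(lam z)⁻¹ • z, by simp [map_smul, smul_eq_mul, inv_mul_cancel₀ hz], ?_⟩
    intro u v
    rw [hexp u v, ha0, hb0, hc0]
    simp
  · -- case finrank W = 1
    obtain ⟨ζ0, hζ0W, hζ0ne⟩ : ∃ x ∈ W, x ≠ 0 := by
      rw [← Submodule.ne_bot_iff]
      intro hbot
      rw [hbot] at hWrk
      simp at hWrk
    have hspan : Submodule.span ℝ {ζ0} = W := by
      apply Submodule.eq_of_le_of_finrank_le
      · rw [Submodule.span_le]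
        simpa using hζ0W
      · rw [hWrk, finrank_span_singleton hζ0ne]
    obtain ⟨g, hgnorm, hg⟩ := exists_dual_vector ℝ ζ0 (norm_ne_zero_iff.mpr hζ0ne)
    set μ : V →L[ℝ] ℝ := ‖ζ0‖⁻¹ • g with hμdef
    have hμζ : μ ζ0 = 1 := by
      rw [hμdef]
      simp only [ContinuousLinearMap.smul_apply, hg]
      rw [smul_eq_mul, RCLike.ofReal_real_eq_id, id]
      exact inv_mul_cancel₀ (norm_ne_zero_iff.mpr hζ0ne)
    have hrep : ∀ x ∈ W, x = μ x • ζ0 := by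
      intro x hx
      rw [← hspan] at hx
      obtain ⟨r, rfl⟩ := Submodule.mem_span_singleton.mp hx
      rw [map_smul, smul_eq_mul, hμζ, mul_one]
    have hζH : ζ0 ∉ HS := by
      intro hmem
      obtain ⟨w₀, hw₀⟩ := hmem
      have hw₀ne : w₀ ≠ 0 := by
        rintro rfl
        apply hζ0ne
        rw [← hw₀]
        simp
      obtain ⟨vs, hvs⟩ : ∃ vs : ℝ × ℝ, μ (D2 vs vs) ≠ 0 := by
        by_contra h'
        push_neg at h'
        have ha0 : a = 0 := by
          have h2 := hrep a haW
          rw [ha, h' e₁, zero_smul] at h2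
          rw [ha]; exact h2
        have hc0 : c = 0 := by
          have h2 := hrep c hcW
          rw [hc, h' e₂, zero_smul] at h2
          rw [hc]; exact h2
        have hb0 : b = 0 := by
          have h2 := h' (e₁ + e₂)
          have hDsum : D2 (e₁ + e₂) (e₁ + e₂) = a + b + b + c := by
            simp only [map_add, ContinuousLinearMap.add_apply]
            rw [hsymm e₂ e₁, ← ha, ← hb, ← hc]
            abel
          rw [hDsum, ha0, hc0] at h2
          simp only [map_add, map_zero, zero_add, add_zero] at h2
          have hμb : μ b = 0 := by linarith
          have h3 := hrep b hbW
          rw [hμb, zero_smul] at h3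
          exact h3
        have hWbot : W = ⊥ := by
          rw [hWdef, ha0, hb0, hc0]
          simp
        rw [hWbot] at hWrk
        rw [finrank_bot] at hWrk
        exact one_ne_zero hWrk.symm
      set d : ℝ × ℝ := vs - w₀ with hd
      set vt : ℝ → ℝ × ℝ := fun t => w₀ + t • d with hvt
      have hq : ∀ t, μ (D2 (vt t) (vt t)) =
          μ (D2 w₀ w₀) + (μ (D2 w₀ d) + μ (D2 d w₀)) * t + μ (D2 d d) * t ^ 2 := by
        intro t
        rw [hvt]
        simp only [map_add, map_smul, ContinuousLinearMap.add_apply,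
          ContinuousLinearMap.smul_apply, smul_eq_mul]
        ring
      have hq1 : μ (D2 (vt 1) (vt 1)) ≠ 0 := by
        have : vt 1 = vs := by rw [hvt]; simp [hd]
        rw [this]
        exact hvs
      have hcl : (0 : ℝ) ∈ closure {t | μ (D2 (vt t) (vt t)) ≠ 0} :=
        quad_closure hq hq1
      have hvtcont : Continuous vt := by
        rw [hvt]
        exact continuous_const.add (continuous_id.smul continuous_const)
      have hOopen : IsOpen {t : ℝ | vt t ≠ 0} :=
        isOpen_compl_singleton.preimage hvtcont
      have hO0 : (0 : ℝ) ∈ {t : ℝ | vt t ≠ 0} := by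
        simp only [Set.mem_setOf_eq, hvt]
        simpa using hw₀ne
      have hcl2 : (0 : ℝ) ∈ closure ({t : ℝ | vt t ≠ 0} ∩ {t | μ (D2 (vt t) (vt t)) ≠ 0}) :=
        hOopen.inter_closure ⟨hO0, hcl⟩
      have hz : ∀ t ∈ {t : ℝ | vt t ≠ 0} ∩ {t | μ (D2 (vt t) (vt t)) ≠ 0},
          (fun t => fderiv ℝ Φ (L (vt t)) ζ0) t = 0 := by
        rintro t ⟨ht1, ht2⟩
        have hid := hone (vt t) ht1 (vt t)
        rw [hrep (D2 (vt t) (vt t)) (hDW _ _), map_smul, smul_eq_mul] at hid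
        exact (mul_eq_zero.mp hid).resolve_left ht2
      have hcont0 : ContinuousAt (fun t => fderiv ℝ Φ (L (vt t)) ζ0) 0 := by
        have hvt0 : vt 0 = w₀ := by rw [hvt]; simp
        have h1 : ContinuousAt (fun t => L (vt t)) 0 :=
          (L.continuous.comp hvtcont).continuousAt
        have hgc : ContinuousAt (fun y : V => fderiv ℝ Φ y ζ0) (L (vt 0)) := by
          rw [hvt0]
          exact (ContinuousLinearMap.apply ℝ ℝ ζ0).continuous.continuousAt.comp
            (hcontn (L w₀) (hLne w₀ hw₀ne))
        exact ContinuousAt.comp (g := fun y : V => fderiv ℝ Φ y ζ0)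
          (f := fun t => L (vt t)) hgc h1
      have h00 : fderiv ℝ Φ (L w₀) ζ0 = 0 := by
        have := vanish_at_limit hcont0 hcl2 hz
        simpa [hvt] using this
      rw [← hw₀] at h00
      have hEu := hEuler (L w₀) (hLne w₀ hw₀ne)
      rw [show ((L : (ℝ × ℝ) →ₗ[ℝ] V) w₀ : V) = L w₀ from rfl] at h00
      rw [h00] at hEu
      exact absurd hEu.symm (ne_of_gt (hpos w₀ hw₀ne))
    have hlamζ : lam ζ0 ≠ 0 := hlamne ζ0 hζH
    refine ⟨(lam ζ0)⁻¹ • ζ0, by simp [map_smul, smul_eq_mul, inv_mul_cancel₀ hlamζ], ?_⟩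
    intro u v
    have hx := hrep (D2 u v) (hDW u v)
    have hlamD : lam (D2 u v) = μ (D2 u v) * lam ζ0 := by
      conv_lhs => rw [hx]
      rw [map_smul, smul_eq_mul]
    rw [hlamD, smul_smul, mul_assoc, mul_inv_cancel₀ hlamζ, mul_one]
    exact hx
  · -- case finrank W = 2
    exfalso
    by_cases hdep : ∀ v : ℝ × ℝ, ∃ cc : ℝ × ℝ, cc ≠ 0 ∧
        cc.1 • D2 e₁ v + cc.2 • D2 e₂ v = 0
    · -- all pairs dependent : finrank W ≤ 1, contradiction
      have hD11 : D2 e₁ e₁ = a := ha.symm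
      have hD21 : D2 e₂ e₁ = b := by rw [hsymm e₂ e₁, ← hb]
      have hD12 : D2 e₁ e₂ = b := hb.symm
      have hD22 : D2 e₂ e₂ = c := hc.symm
      have hD1s : D2 e₁ (e₁ + e₂) = a + b := by rw [map_add, hD11, hD12]
      have hD2s : D2 e₂ (e₁ + e₂) = b + c := by rw [map_add, hD21, hD22]
      have hWle1 : finrank ℝ W ≤ 1 := by
        by_cases hb0 : b = 0
        · by_cases hc0 : c = 0
          · have hle : W ≤ Submodule.span ℝ {a} := by
              rw [hWdef, Submodule.span_le]
              intro x hx
              rcases hx with h | h | h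
              · rw [h]
                exact Submodule.mem_span_singleton_self a
              · rw [h, hb0]
                exact Submodule.zero_mem _
              · simp only [Set.mem_singleton_iff] at h
                rw [h, hc0]
                exact Submodule.zero_mem _
            exact le_trans (Submodule.finrank_mono hle) (finrank_span_single_le a)
          · have hac : a ∈ Submodule.span ℝ {c} := by
              apply pair_dep_mem _ hc0
              obtain ⟨cc, hne, hz⟩ := hdep (e₁ + e₂)
              rw [hD1s, hD2s, hb0, add_zero, zero_add] at hz
              exact ⟨cc, hne, hz⟩
            have hle : W ≤ Submodule.span ℝ {c} := by
              rw [hWdef, Submodule.span_le]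
              intro x hx
              rcases hx with h | h | h
              · rw [h]
                exact hac
              · rw [h, hb0]
                exact Submodule.zero_mem _
              · simp only [Set.mem_singleton_iff] at h
                rw [h]
                exact Submodule.mem_span_singleton_self c
            exact le_trans (Submodule.finrank_mono hle) (finrank_span_single_le c)
        · have hab : a ∈ Submodule.span ℝ {b} := by
            apply pair_dep_mem _ hb0
            obtain ⟨cc, hne, hz⟩ := hdep e₁
            rw [hD11, hD21] at hz
            exact ⟨cc, hne, hz⟩
          have hcb : c ∈ Submodule.span ℝ {b} := by
            apply pair_dep_mem _ hb0
            obtain ⟨cc, hne, hz⟩ := hdep e₂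
            rw [hD12, hD22] at hz
            refine ⟨(cc.2, cc.1), ?_, ?_⟩
            · intro h'
              apply hne
              have h1 : cc.2 = 0 := congrArg Prod.fst h'
              have h2 : cc.1 = 0 := congrArg Prod.snd h'
              exact Prod.ext h2 h1
            · simpa [add_comm] using hz
          have hle : W ≤ Submodule.span ℝ {b} := by
            rw [hWdef, Submodule.span_le]
            intro x hx
            rcases hx with h | h | h
            · rw [h]
              exact hab
            · rw [h]
              exact Submodule.mem_span_singleton_self b
            · simp only [Set.mem_singleton_iff] at h
              rw [h]
              exact hcb
          exact le_trans (Submodule.finrank_mono hle) (finrank_span_single_le b)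
      omega
    · -- there is v₀ with the pair independent
      push_neg at hdep
      obtain ⟨v₀, hv₀ind⟩ := hdep
      have hli2 : ∀ s u : ℝ, s • D2 e₁ v₀ + u • D2 e₂ v₀ = 0 → s = 0 ∧ u = 0 := by
        intro s u hsu
        by_contra h'
        have hne : ((s, u) : ℝ × ℝ) ≠ 0 := by
          intro h0
          apply h'
          exact ⟨congrArg Prod.fst h0, congrArg Prod.snd h0⟩
        exact (hv₀ind (s, u) hne) hsu
      -- W ∩ HS contains a nonzero vector L w₀
      obtain ⟨x0, hx0mem, hx0ne⟩ : ∃ x, x ∈ W ⊓ HS ∧ x ≠ 0 := by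
        have hsup : finrank ℝ ((W ⊔ HS : Submodule ℝ V)) ≤ 3 := by
          have := Submodule.finrank_le (W ⊔ HS)
          omega
        have heq := Submodule.finrank_sup_add_finrank_inf_eq W HS
        rw [hWrk, hHS2] at heq
        have hinf : 1 ≤ finrank ℝ ((W ⊓ HS : Submodule ℝ V)) := by omega
        have hnb : (W ⊓ HS : Submodule ℝ V) ≠ ⊥ := by
          intro h0
          rw [h0, finrank_bot] at hinf
          omega
        exact (Submodule.ne_bot_iff _).mp hnb
      obtain ⟨w₀, hw₀⟩ := hx0mem.2
      have hw₀W : (L w₀ : V) ∈ W := by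
        rw [show (L w₀ : V) = x0 from hw₀]
        exact hx0mem.1
      have hLw₀ne : (L w₀ : V) ≠ 0 := by
        rw [show (L w₀ : V) = x0 from hw₀]
        exact hx0ne
      have hw₀ne : w₀ ≠ 0 := by
        rintro rfl
        apply hLw₀ne
        simp
      -- basis of W from the independent pair
      have hliV : LinearIndependent ℝ ![D2 e₁ v₀, D2 e₂ v₀] := by
        rw [LinearIndependent.pair_iff]
        exact hli2
      have hliW : LinearIndependent ℝ
          ![(⟨D2 e₁ v₀, hDW e₁ v₀⟩ : W), (⟨D2 e₂ v₀, hDW e₂ v₀⟩ : W)] := by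
        apply LinearIndependent.of_comp W.subtype
        have hco : (W.subtype ∘ ![(⟨D2 e₁ v₀, hDW e₁ v₀⟩ : W), (⟨D2 e₂ v₀, hDW e₂ v₀⟩ : W)])
            = ![D2 e₁ v₀, D2 e₂ v₀] := by
          funext i
          fin_cases i <;> rfl
        rw [hco]
        exact hliV
      have hcard2 : Fintype.card (Fin 2) = finrank ℝ W := by rw [hWrk]; simp
      set bW : Basis (Fin 2) ℝ W := basisOfLinearIndependentOfCardEqFinrank hliW hcard2
        with hbW
      set P1 : (ℝ × ℝ) → W := fun v => ⟨D2 e₁ v, hDW e₁ v⟩ with hP1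
      set P2 : (ℝ × ℝ) → W := fun v => ⟨D2 e₂ v, hDW e₂ v⟩ with hP2
      have hP1lin : ∀ (v w : ℝ × ℝ) (s : ℝ), P1 (v + s • w) = P1 v + s • P1 w := by
        intro v w s
        apply Subtype.ext
        simp [hP1, map_add, map_smul]
      have hP2lin : ∀ (v w : ℝ × ℝ) (s : ℝ), P2 (v + s • w) = P2 v + s • P2 w := by
        intro v w s
        apply Subtype.ext
        simp [hP2, map_add, map_smul]
      set δ : (ℝ × ℝ) → ℝ := fun v =>
        bW.repr (P1 v) 0 * bW.repr (P2 v) 1 - bW.repr (P1 v) 1 * bW.repr (P2 v) 0 with hδ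
      have hδv₀ : δ v₀ = 1 := by
        have h1 : P1 v₀ = bW 0 := by
          rw [hbW, coe_basisOfLinearIndependentOfCardEqFinrank]
          rfl
        have h2 : P2 v₀ = bW 1 := by
          rw [hbW, coe_basisOfLinearIndependentOfCardEqFinrank]
          rfl
        simp only [hδ, h1, h2, Basis.repr_self]
        simp
      -- independence wherever δ ≠ 0
      have hind_t : ∀ v : ℝ × ℝ, δ v ≠ 0 → ∀ s u : ℝ,
          s • D2 e₁ v + u • D2 e₂ v = 0 → s = 0 ∧ u = 0 := by
        intro v hδv s u hsu
        have hWeq : s • P1 v + u • P2 v = 0 := by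
          apply Subtype.ext
          simpa [hP1, hP2] using hsu
        have hr := congrArg bW.repr hWeq
        rw [map_add, map_smul, map_smul, map_zero] at hr
        have hr0 := congrArg (fun g => g 0) hr
        have hr1 := congrArg (fun g => g 1) hr
        simp only [Finsupp.add_apply, Finsupp.smul_apply, smul_eq_mul,
          Finsupp.zero_apply] at hr0 hr1
        constructor
        · have hs : s * δ v = 0 := by
            simp only [hδ]
            linear_combination (bW.repr (P2 v) 1) * hr0 - (bW.repr (P2 v) 0) * hr1
          rcases mul_eq_zero.mp hs with h | h
          · exact h
          · exact absurd h hδv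
        · have hu : u * δ v = 0 := by
            simp only [hδ]
            linear_combination (-(bW.repr (P1 v) 1)) * hr0 + (bW.repr (P1 v) 0) * hr1
          rcases mul_eq_zero.mp hu with h | h
          · exact h
          · exact absurd h hδv
      -- span equals W wherever δ ≠ 0
      have hspan_t : ∀ v : ℝ × ℝ, δ v ≠ 0 →
          Submodule.span ℝ {D2 e₁ v, D2 e₂ v} = W := by
        intro v hδv
        apply Submodule.eq_of_le_of_finrank_le
        · rw [Submodule.span_le]
          intro x hx
          rcases hx with h | h
          · rw [h]
            exact hDW e₁ v
          · simp only [Set.mem_singleton_iff] at h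
            rw [h]
            exact hDW e₂ v
        · rw [hWrk]
          have hliv : LinearIndependent ℝ ![D2 e₁ v, D2 e₂ v] := by
            rw [LinearIndependent.pair_iff]
            exact hind_t v hδv
          have hfr := finrank_span_eq_card hliv
          rw [range_pair] at hfr
          rw [hfr]
          simp
      -- the limiting argument
      set d : ℝ × ℝ := v₀ - w₀ with hd
      set vt : ℝ → ℝ × ℝ := fun t => w₀ + t • d with hvt
      have hq : ∀ t : ℝ, δ (vt t) =
          (bW.repr (P1 w₀) 0 * bW.repr (P2 w₀) 1 - bW.repr (P1 w₀) 1 * bW.repr (P2 w₀) 0)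
          + ((bW.repr (P1 w₀) 0 * bW.repr (P2 d) 1 + bW.repr (P1 d) 0 * bW.repr (P2 w₀) 1)
            - (bW.repr (P1 w₀) 1 * bW.repr (P2 d) 0 + bW.repr (P1 d) 1 * bW.repr (P2 w₀) 0)) * t
          + (bW.repr (P1 d) 0 * bW.repr (P2 d) 1 - bW.repr (P1 d) 1 * bW.repr (P2 d) 0) * t ^ 2 := by
        intro t
        simp only [hδ, hvt, hP1lin w₀ d t, hP2lin w₀ d t, map_add, map_smul,
          Finsupp.add_apply, Finsupp.smul_apply, smul_eq_mul]
        ring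
      have hq1 : δ (vt 1) ≠ 0 := by
        have hvt1 : vt 1 = v₀ := by
          rw [hvt]
          simp [hd]
        rw [hvt1, hδv₀]
        norm_num
      have hcl : (0 : ℝ) ∈ closure {t | δ (vt t) ≠ 0} := quad_closure hq hq1
      have hvtcont : Continuous vt := by
        rw [hvt]
        exact continuous_const.add (continuous_id.smul continuous_const)
      have hOopen : IsOpen {t : ℝ | vt t ≠ 0} :=
        isOpen_compl_singleton.preimage hvtcont
      have hO0 : (0 : ℝ) ∈ {t : ℝ | vt t ≠ 0} := by
        simp only [Set.mem_setOf_eq, hvt]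
        simpa using hw₀ne
      have hcl2 : (0 : ℝ) ∈ closure ({t : ℝ | vt t ≠ 0} ∩ {t | δ (vt t) ≠ 0}) :=
        hOopen.inter_closure ⟨hO0, hcl⟩
      have hz : ∀ t ∈ {t : ℝ | vt t ≠ 0} ∩ {t | δ (vt t) ≠ 0},
          (fun t => fderiv ℝ Φ (L (vt t)) (L w₀)) t = 0 := by
        rintro t ⟨ht1, ht2⟩
        have hker : Submodule.span ℝ {D2 e₁ (vt t), D2 e₂ (vt t)} ≤
            LinearMap.ker (fderiv ℝ Φ (L (vt t)) : V →ₗ[ℝ] ℝ) := by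
          rw [Submodule.span_le]
          intro x hx
          rcases hx with h | h
          · rw [h]
            exact LinearMap.mem_ker.mpr (hone (vt t) ht1 e₁)
          · simp only [Set.mem_singleton_iff] at h
            rw [h]
            exact LinearMap.mem_ker.mpr (hone (vt t) ht1 e₂)
        have hmem : (L w₀ : V) ∈ Submodule.span ℝ {D2 e₁ (vt t), D2 e₂ (vt t)} := by
          rw [hspan_t (vt t) ht2]
          exact hw₀W
        exact LinearMap.mem_ker.mp (hker hmem)
      have hcont0 : ContinuousAt (fun t => fderiv ℝ Φ (L (vt t)) (L w₀)) 0 := by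
        have hvt0 : vt 0 = w₀ := by rw [hvt]; simp
        have h1 : ContinuousAt (fun t => L (vt t)) 0 :=
          (L.continuous.comp hvtcont).continuousAt
        have hgc : ContinuousAt (fun y : V => fderiv ℝ Φ y (L w₀)) (L (vt 0)) := by
          rw [hvt0]
          exact (ContinuousLinearMap.apply ℝ ℝ (L w₀ : V)).continuous.continuousAt.comp
            (hcontn (L w₀) hLw₀ne)
        exact ContinuousAt.comp (g := fun y : V => fderiv ℝ Φ y (L w₀))
          (f := fun t => L (vt t)) hgc h1
      have h00 : fderiv ℝ Φ (L w₀) (L w₀) = 0 := by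
        have := vanish_at_limit hcont0 hcl2 hz
        simpa [hvt] using this
      have hEu := hEuler (L w₀) hLw₀ne
      rw [h00] at hEu
      exact absurd hEu.symm (ne_of_gt (hpos w₀ hw₀ne))
  · -- case finrank W = 3
    exfalso
    have hrange3 : Set.range ![a, b, c] = {a, b, c} := by
      ext x
      constructor
      · rintro ⟨i, rfl⟩
        fin_cases i <;> simp
      · intro hx
        rcases hx with h | h | h
        · exact ⟨0, by simp [h]⟩
        · exact ⟨1, by simp [h]⟩
        · simp only [Set.mem_singleton_iff] at h
          exact ⟨2, by simp [h]⟩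
    have hli : LinearIndependent ℝ ![a, b, c] := by
      rw [linearIndependent_iff_card_eq_finrank_span]
      rw [Set.finrank]
      rw [hrange3]
      rw [← hWdef, hWrk]
      simp
    have hcard3 : Fintype.card (Fin 3) = finrank ℝ V := by rw [hdim]; simp
    set bV : Basis (Fin 3) ℝ V := basisOfLinearIndependentOfCardEqFinrank hli hcard3 with hbV
    set κ : Fin 3 → V →ₗ[ℝ] ℝ := fun i => bV.coord i with hκ
    have hκcont : ∀ i, Continuous (κ i) := fun i => LinearMap.continuous_of_finiteDimensional _
    set col : (ℝ × ℝ) → Fin 3 → V := fun v => ![D2 e₁ v, D2 e₂ v, L v] with hcol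
    set M : (ℝ × ℝ) → Matrix (Fin 3) (Fin 3) ℝ :=
      fun v => Matrix.of fun i j => κ i (col v j) with hM
    set F : ℝ → ℝ := fun θ => (M (Real.cos θ, Real.sin θ)).det with hF
    have hcolneg : ∀ v j, col (-v) j = -(col v j) := by
      intro v j
      fin_cases j <;> simp [hcol]
    have hMneg : ∀ v, M (-v) = -(M v) := by
      intro v
      ext i j
      simp only [hM, Matrix.of_apply, hcolneg, map_neg, Matrix.neg_apply]
    have hFcont : Continuous F := by
      simp only [hF]
      apply Continuous.matrix_det
      apply continuous_matrix
      intro i j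
      simp only [hM, Matrix.of_apply]
      apply (hκcont i).comp
      have hcs : Continuous fun θ : ℝ => (Real.cos θ, Real.sin θ) :=
        Real.continuous_cos.prodMk Real.continuous_sin
      fin_cases j
      · exact (D2 e₁).continuous.comp hcs
      · exact (D2 e₂).continuous.comp hcs
      · exact L.continuous.comp hcs
    have hFodd : F Real.pi = -(F 0) := by
      simp only [hF]
      have h1 : (Real.cos Real.pi, Real.sin Real.pi) = -((1:ℝ), (0:ℝ)) := by
        simp [Prod.ext_iff]
      have h0 : (Real.cos 0, Real.sin 0) = ((1:ℝ), (0:ℝ)) := by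
        simp [Prod.ext_iff]
      rw [h1, h0, hMneg, Matrix.det_neg]
      norm_num
    obtain ⟨θ₀, hθ₀⟩ : ∃ θ, F θ = 0 := by
      have hsub := intermediate_value_uIcc (a := 0) (b := Real.pi) (f := F)
        hFcont.continuousOn
      have h0mem : (0:ℝ) ∈ Set.uIcc (F 0) (F Real.pi) := by
        rw [hFodd]
        rcases le_total (F 0) 0 with h | h
        · exact Set.mem_uIcc.mpr (Or.inl ⟨h, by linarith⟩)
        · exact Set.mem_uIcc.mpr (Or.inr ⟨by linarith, h⟩)
      obtain ⟨θ, _, hθ⟩ := hsub h0mem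
      exact ⟨θ, hθ⟩
    set v₀ : ℝ × ℝ := (Real.cos θ₀, Real.sin θ₀) with hv₀def
    have hv₀ : v₀ ≠ 0 := by
      intro h
      have h1 : Real.cos θ₀ = 0 := congrArg Prod.fst h
      have h2 : Real.sin θ₀ = 0 := congrArg Prod.snd h
      have hsq := Real.sin_sq_add_cos_sq θ₀
      rw [h1, h2] at hsq
      norm_num at hsq
    obtain ⟨cc, hccne, hccz⟩ : ∃ cc, cc ≠ 0 ∧ (M v₀).mulVec cc = 0 :=
      Matrix.exists_mulVec_eq_zero_iff.mpr hθ₀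
    have hz : cc 0 • D2 e₁ v₀ + cc 1 • D2 e₂ v₀ + cc 2 • L v₀ = 0 := by
      have hcoords : ∀ i, κ i (cc 0 • D2 e₁ v₀ + cc 1 • D2 e₂ v₀ + cc 2 • L v₀) = 0 := by
        intro i
        have hmv := congrFun hccz i
        simp only [Matrix.mulVec, dotProduct, Fin.sum_univ_three, hM,
          Matrix.of_apply, Pi.zero_apply] at hmv
        simp only [map_add, map_smul, smul_eq_mul]
        have hc0 : col v₀ 0 = D2 e₁ v₀ := by simp [hcol]
        have hc1 : col v₀ 1 = D2 e₂ v₀ := by simp [hcol]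
        have hc2 : col v₀ 2 = L v₀ := by simp [hcol]
        rw [hc0, hc1, hc2] at hmv
        linarith [hmv]
      apply bV.ext_elem
      intro i
      rw [map_zero, Finsupp.zero_apply, ← Basis.coord_apply]
      exact hcoords i
    have hc2 : cc 2 = 0 := by
      have happ := congrArg (fderiv ℝ Φ (L v₀)) hz
      rw [map_add, map_add, map_smul, map_smul, map_smul, map_zero] at happ
      rw [hone v₀ hv₀ e₁, hone v₀ hv₀ e₂, hEuler (L v₀) (hLne v₀ hv₀)] at happ
      simp only [smul_eq_mul, mul_zero, zero_add, add_zero] at happ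
      rcases mul_eq_zero.mp happ with h | h
      · exact h
      · exact absurd h (ne_of_gt (hpos v₀ hv₀))
    have hpair : cc 0 • D2 e₁ v₀ + cc 1 • D2 e₂ v₀ = 0 := by
      rw [hc2, zero_smul, add_zero] at hz
      exact hz
    have hexp2 : (cc 0 * v₀.1) • a + (cc 0 * v₀.2 + cc 1 * v₀.1) • b + (cc 1 * v₀.2) • c
        = 0 := by
      have hE : (cc 0 * v₀.1) • a + (cc 0 * v₀.2 + cc 1 * v₀.1) • b + (cc 1 * v₀.2) • c
          = cc 0 • D2 e₁ v₀ + cc 1 • D2 e₂ v₀ := by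
        rw [hexp e₁ v₀, hexp e₂ v₀]
        simp only [he₁, he₂]
        norm_num
        module
      rw [hE, hpair]
    have hcoef : ∀ g : Fin 3 → ℝ, (g 0) • a + (g 1) • b + (g 2) • c = 0 → ∀ i, g i = 0 := by
      intro g hg
      apply Fintype.linearIndependent_iff.mp hli
      rw [Fin.sum_univ_three]
      simpa using hg
    have hg0 := hcoef ![cc 0 * v₀.1, cc 0 * v₀.2 + cc 1 * v₀.1, cc 1 * v₀.2]
      (by simpa using hexp2)
    have h1 : cc 0 * v₀.1 = 0 := by simpa using hg0 0
    have h2 : cc 0 * v₀.2 + cc 1 * v₀.1 = 0 := by simpa using hg0 1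
    have h3 : cc 1 * v₀.2 = 0 := by simpa using hg0 2
    have hv01 : v₀.1 ≠ 0 ∨ v₀.2 ≠ 0 := by
      by_contra h'
      push_neg at h'
      exact hv₀ (Prod.ext h'.1 h'.2)
    have hcc0 : cc 0 = 0 ∧ cc 1 = 0 := by
      rcases hv01 with hv | hv
      · have hc0 : cc 0 = 0 := by
          rcases mul_eq_zero.mp h1 with h | h
          · exact h
          · exact absurd h hv
        refine ⟨hc0, ?_⟩
        rw [hc0, zero_mul, zero_add] at h2
        rcases mul_eq_zero.mp h2 with h | h
        · exact h
        · exact absurd h hv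
      · have hc1 : cc 1 = 0 := by
          rcases mul_eq_zero.mp h3 with h | h
          · exact h
          · exact absurd h hv
        refine ⟨?_, hc1⟩
        rw [hc1, zero_mul, add_zero] at h2
        rcases mul_eq_zero.mp h2 with h | h
        · exact h
        · exact absurd h hv
    apply hccne
    funext i
    fin_cases i
    · exact hcc0.1
    · exact hcc0.2
    · exact hc2
end
end

section
/- Let S and S₁ be symmetric bilinear forms on ℝ². Suppose that S₁(v, w) = 0 for every pair of linearly independent vectors v, w ∈ ℝ² with S(v, w) = 0. Then there exists λ ∈ ℝ such that S₁ = λ·S. -/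
/-!
If `S v v ≠ 0`, the vector `w = (S v (0, 1), -S v (1, 0))` is `S`-orthogonal to `v` and independent
of it, so `S₁ v w = 0` says that the covectors `S v` and `S₁ v` are proportional. Along
`v = (1, t)` this is a quadratic identity in `t` that holds off the roots of the nonzero quadratic
`S v v`, hence identically; its coefficients are the components of the cross product of the Gram
entries `(a, b, c)` of `S` and `(a₁, b₁, c₁)` of `S₁`, which are therefore proportional.
If `S = 0`, every independent pair is `S`-orthogonal and `S₁ = 0`.
-/

open Polynomial Matrix

namespace Polynomial

variable {R : Type*}

theorem C_add_C_mul_X_add_C_mul_X_sq_eq_zero_iff [Semiring R] {a b c : R} :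
    C a + C b * X + C c * X ^ 2 = 0 ↔ a = 0 ∧ b = 0 ∧ c = 0 := by
  refine ⟨fun h => ⟨?_, ?_, ?_⟩, fun ⟨ha, hb, hc⟩ => by simp [ha, hb, hc]⟩
  · simpa using congr_arg (coeff · 0) h
  · simpa using congr_arg (coeff · 1) h
  · simpa using congr_arg (coeff · 2) h

theorem eq_zero_of_eval_eq_zero_of_eval_ne_zero [CommRing R] [IsDomain R] [Infinite R]
    {p q : R[X]} (hq : q ≠ 0) (h : ∀ t, q.eval t ≠ 0 → p.eval t = 0) : p = 0 := by
  have hpq : p * q = 0 := Polynomial.funext fun t => by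
    by_cases ht : q.eval t = 0 <;> simp [ht, h]
  exact (mul_eq_zero.mp hpq).resolve_right hq

end Polynomial

theorem linearIndependent_pair_of_det_ne_zero {K : Type*} [Field K] {v w : K × K} (hd : v.1 * w.2 - v.2 * w.1 ≠ 0) :
    LinearIndependent K ![v, w] := by
  have hv : v ≠ 0 := by rintro rfl; simp at hd
  refine (LinearIndependent.pair_iff' hv).mpr fun s hs => hd ?_
  subst hs
  simp only [Prod.smul_fst, Prod.smul_snd, smul_eq_mul]
  ring

namespace LinearMap

variable {K : Type*}

theorem apply_prod [CommSemiring K] {M : Type*} [AddCommMonoid M] [Module K M]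
    (f : (K × K) →ₗ[K] M) (x y : K) : f (x, y) = x • f (1, 0) + y • f (0, 1) := by
  rw [← map_smul, ← map_smul, ← map_add]
  simp

theorem apply_prod_prod [CommSemiring K] (B : (K × K) →ₗ[K] (K × K) →ₗ[K] K) (x y z t : K) :
    B (x, y) (z, t) = x * z * B (1, 0) (1, 0) + x * t * B (1, 0) (0, 1)
      + y * z * B (0, 1) (1, 0) + y * t * B (0, 1) (0, 1) := by
  rw [apply_prod B, add_apply, smul_apply, smul_apply, apply_prod (B (1, 0)),
    apply_prod (B (0, 1))]
  simp only [smul_eq_mul]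
  ring

def gramEntries [CommSemiring K] (B : (K × K) →ₗ[K] (K × K) →ₗ[K] K) : Fin 3 → K :=
  ![B (1, 0) (1, 0), B (1, 0) (0, 1), B (0, 1) (0, 1)]

theorem eq_smul_of_gramEntries_eq_smul [CommSemiring K] {B B' : (K × K) →ₗ[K] (K × K) →ₗ[K] K}
    (hB : ∀ v w, B v w = B w v) (hB' : ∀ v w, B' v w = B' w v) {c : K}
    (h : gramEntries B' = c • gramEntries B) : B' = c • B := by
  have h0 := congr_fun h 0
  have h1 := congr_fun h 1
  have h2 := congr_fun h 2
  simp only [gramEntries, Pi.smul_apply, smul_eq_mul, cons_val] at h0 h1 h2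
  refine ext_basis (Module.Basis.finTwoProd K) (Module.Basis.finTwoProd K) fun i j => ?_
  fin_cases i <;> fin_cases j <;> simp [h0, h1, h2, hB' (0, 1), hB (0, 1)]

theorem eq_zero_of_forall_linearIndependent [Field K] {B : (K × K) →ₗ[K] (K × K) →ₗ[K] K}
    (h : ∀ v w, LinearIndependent K ![v, w] → B v w = 0) : B = 0 := by
  have h' : ∀ v w : K × K, v.1 * w.2 - v.2 * w.1 ≠ 0 → B v w = 0 :=
    fun v w hd => h v w (linearIndependent_pair_of_det_ne_zero hd)
  have e01 := h' (1, 0) (0, 1) (by simp)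
  have e10 := h' (0, 1) (1, 0) (by simp)
  have e0 := h' (1, 0) (1, 1) (by simp)
  have e1 := h' (0, 1) (1, 1) (by simp)
  rw [apply_prod_prod] at e0 e1
  simp only [e01, e10, mul_one, one_mul, zero_mul, add_zero, zero_add] at e0 e1
  refine ext_basis (Module.Basis.finTwoProd K) (Module.Basis.finTwoProd K) fun i j => ?_
  fin_cases i <;> fin_cases j <;> simp [e0, e1, e01, e10]

theorem mul_apply_eq_mul_apply_of_apply_self_ne_zero [Field K]
    {S S₁ : (K × K) →ₗ[K] (K × K) →ₗ[K] K}
    (h : ∀ v w, LinearIndependent K ![v, w] → S v w = 0 → S₁ v w = 0)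
    {v : K × K} (hv : S v v ≠ 0) :
    S v (0, 1) * S₁ v (1, 0) = S v (1, 0) * S₁ v (0, 1) := by
  set w : K × K := (S v (0, 1), -S v (1, 0))
  have hSw : S v w = 0 := by rw [apply_prod (S v)]; simp only [smul_eq_mul]; ring
  have hdet : v.1 * w.2 - v.2 * w.1 = -S v v := by
    rw [show S v v = S v (v.1, v.2) from rfl, apply_prod (S v)]
    simp only [w, smul_eq_mul]
    ring
  have hS₁w := h v w (linearIndependent_pair_of_det_ne_zero (hdet ▸ neg_ne_zero.mpr hv)) hSw
  rw [apply_prod (S₁ v)] at hS₁w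
  simp only [smul_eq_mul] at hS₁w
  linear_combination hS₁w

theorem cross_gramEntries_eq_zero [Field K] [CharZero K] {S S₁ : (K × K) →ₗ[K] (K × K) →ₗ[K] K}
    (hS : ∀ v w, S v w = S w v) (hS₁ : ∀ v w, S₁ v w = S₁ w v)
    (h : ∀ v w, LinearIndependent K ![v, w] → S v w = 0 → S₁ v w = 0)
    (hS0 : gramEntries S ≠ 0) : gramEntries S ⨯₃ gramEntries S₁ = 0 := by
  set g := gramEntries S
  set g₁ := gramEntries S₁
  have hq : C (g 0) + C (2 * g 1) * X + C (g 2) * X ^ 2 ≠ 0 := by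
    rw [Ne, C_add_C_mul_X_add_C_mul_X_sq_eq_zero_iff, mul_eq_zero, or_iff_right two_ne_zero]
    contrapose! hS0
    ext i; fin_cases i <;> simp [hS0]
  have hp : C (g₁ 0 * g 1 - g 0 * g₁ 1) + C (g₁ 0 * g 2 - g 0 * g₁ 2) * X
      + C (g₁ 1 * g 2 - g 1 * g₁ 2) * X ^ 2 = 0 := by
    refine eq_zero_of_eval_eq_zero_of_eval_ne_zero hq fun t ht => ?_
    simp only [g, g₁, gramEntries, cons_val, eval_add, eval_mul, eval_pow, eval_C,
      eval_X] at ht ⊢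
    have hv : S (1, t) (1, t) ≠ 0 := by
      rw [apply_prod_prod S 1 t 1 t, hS (0, 1)]
      contrapose! ht
      linear_combination ht
    have e := mul_apply_eq_mul_apply_of_apply_self_ne_zero h hv
    rw [apply_prod_prod S 1 t 0 1, apply_prod_prod S 1 t 1 0, apply_prod_prod S₁ 1 t 1 0,
      apply_prod_prod S₁ 1 t 0 1, hS (0, 1), hS₁ (0, 1)] at e
    linear_combination e
  obtain ⟨h01, h02, h12⟩ := C_add_C_mul_X_add_C_mul_X_sq_eq_zero_iff.mp hp
  simp only [cross_apply, Matrix.cons_eq_zero_iff, zero_empty, and_true]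
  exact ⟨by linear_combination -h12, by linear_combination h02, by linear_combination -h01⟩

end LinearMap

open LinearMap in
/-- Fact about bilinear forms on ℝ²: if a symmetric bilinear form `S₁`
vanishes on every pair of linearly independent `S`-orthogonal vectors, then `S₁ = λ • S`
for some real `λ`. -/
theorem statement6 (S S₁ : (ℝ × ℝ) →ₗ[ℝ] (ℝ × ℝ) →ₗ[ℝ] ℝ)
    (hS : ∀ v w : ℝ × ℝ, S v w = S w v)
    (hS₁ : ∀ v w : ℝ × ℝ, S₁ v w = S₁ w v)
    (h : ∀ v w : ℝ × ℝ, LinearIndependent ℝ ![v, w] → S v w = 0 → S₁ v w = 0) :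
    ∃ lam : ℝ, S₁ = lam • S := by
  by_cases hS0 : gramEntries S = 0
  · have hS_zero : S = 0 := by
      simpa using eq_smul_of_gramEntries_eq_smul hS₁ hS (c := 0) (by simp [hS0])
    refine ⟨0, ?_⟩
    rw [zero_smul]
    exact eq_zero_of_forall_linearIndependent fun v w hvw => h v w hvw (by simp [hS_zero])
  · have hcross := cross_gramEntries_eq_zero hS hS₁ h hS0
    rw [← not_ne_iff, crossProduct_ne_zero_iff_linearIndependent,
      LinearIndependent.pair_iff' hS0, not_forall_not] at hcross
    obtain ⟨lam, hlam⟩ := hcross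
    exact ⟨lam, eq_smul_of_gramEntries_eq_smul hS hS₁ hlam.symm⟩
end

section
/- Let φ be a Finsler metric on an open set U ⊆ ℝ² and p ∈ U with vanishing first and second derivatives at p of x ↦ φ(x, v) for every v ≠ 0. Let (V, Φ) be a 3-dimensional Banach–Minkowski space, f : U → V an isometric embedding of (U, φ), H := range(Df_p), λ ∈ V*∖{0} with λ|_H = 0, and S(v, w) := λ(D²f_p(v, w)). Assume S ≠ 0 and let τ ∈ V satisfy D²f_p(v, w) = S(v, w)·τ for all v, w ∈ ℝ². Then DΦ_{Df_p(v)}(τ) = 0 for every v ∈ ℝ²∖{0}; that is, τ is tangent to the unit sphere of Φ at every point of the curve H ∩ {Φ = 1}. -/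
noncomputable section

/-- in the second-order flat situation, if the scalar second fundamental
form `S` is nonzero and `D²f_p(v, w) = S(v, w) • τ`, then `τ` is tangent to the unit sphere
of `Φ` at every point of `H ∩ {Φ = 1}`, i.e. `DΦ_{Df_p v}(τ) = 0` for all `v ≠ 0`. -/
theorem statement7 (U : Set (ℝ × ℝ)) (hU : IsOpen U)
    (φ : ℝ × ℝ → ℝ × ℝ → ℝ) (hφ : IsFinslerMetric U φ)
    (p : ℝ × ℝ) (hp : p ∈ U)
    (hflat1 : ∀ v : ℝ × ℝ, v ≠ 0 → fderiv ℝ (fun x => φ x v) p = 0)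
    (hflat2 : ∀ v : ℝ × ℝ, v ≠ 0 → iteratedFDeriv ℝ 2 (fun x => φ x v) p = 0)
    (V : Type*) [NormedAddCommGroup V] [NormedSpace ℝ V] [FiniteDimensional ℝ V]
    (hdim : Module.finrank ℝ V = 3)
    (Φ : V → ℝ) (hΦ : IsBanachMinkowski Φ)
    (f : ℝ × ℝ → V) (hf : IsIsometricEmbedding U φ Φ f)
    (lam : V →ₗ[ℝ] ℝ) (hlam : lam ≠ 0)
    (hlamH : ∀ u ∈ Set.range (fderiv ℝ f p), lam u = 0)
    (hSne : ∃ v w : ℝ × ℝ, lam (iteratedFDeriv ℝ 2 f p ![v, w]) ≠ 0)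
    (τ : V)
    (hτ : ∀ v w : ℝ × ℝ, iteratedFDeriv ℝ 2 f p ![v, w] =
      lam (iteratedFDeriv ℝ 2 f p ![v, w]) • τ) :
    ∀ v : ℝ × ℝ, v ≠ 0 → fderiv ℝ Φ (fderiv ℝ f p v) τ = 0 := by
  -- notation
  set L : (ℝ × ℝ) →L[ℝ] V := fderiv ℝ f p with hL
  set B : (ℝ × ℝ) →L[ℝ] (ℝ × ℝ) →L[ℝ] V := fderiv ℝ (fderiv ℝ f) p with hB
  set g : ℝ × ℝ → ℝ := fun v => fderiv ℝ Φ (L v) τ with hg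
  -- smoothness of f at p
  have hfC : ContDiffAt ℝ (⊤ : ℕ∞) f p := (hf.1 p hp).contDiffAt (hU.mem_nhds hp)
  have hfd2 : ContDiffAt ℝ 1 (fderiv ℝ f) p := hfC.fderiv_right (by exact WithTop.coe_le_coe.mpr le_top)
  have hdB : DifferentiableAt ℝ (fderiv ℝ f) p := hfd2.differentiableAt one_ne_zero
  -- iteratedFDeriv relation
  have hB2 : ∀ v w : ℝ × ℝ, iteratedFDeriv ℝ 2 f p ![v, w] = B v w := by
    intro v w
    rw [iteratedFDeriv_two_apply]
    simp [hB]
  -- L v ≠ 0 for v ≠ 0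
  have hLne : ∀ v : ℝ × ℝ, v ≠ 0 → L v ≠ 0 := by
    intro v hv hLv
    have h1 : Φ (L v) = φ p v := hf.2.2 p hp v
    have h2 : 0 < φ p v := ((hφ.2 p hp).2.1) v hv
    rw [hLv, hΦ.1] at h1
    linarith
  -- key identity: for v ≠ 0 and any w, lam (B w v) * g v = 0
  have key : ∀ v : ℝ × ℝ, v ≠ 0 → ∀ w : ℝ × ℝ, lam (B w v) * g v = 0 := by
    intro v hv w
    have hΦd : HasFDerivAt Φ (fderiv ℝ Φ (L v)) (L v) := by
      have : ContDiffAt ℝ (⊤ : ℕ∞) Φ (L v) :=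
        hΦ.2.2.2.2.1.contDiffAt (isOpen_compl_singleton.mem_nhds (hLne v hv))
      exact (this.differentiableAt (by simp)).hasFDerivAt
    -- derivative of x ↦ fderiv f x v at p
    set A : ((ℝ × ℝ) →L[ℝ] V) →L[ℝ] V := ContinuousLinearMap.apply ℝ V v with hA
    have hGd : HasFDerivAt (fun x => fderiv ℝ f x v) (A.comp B) p :=
      A.hasFDerivAt.comp p hdB.hasFDerivAt
    have hcomp : HasFDerivAt (fun x => Φ (fderiv ℝ f x v))
        ((fderiv ℝ Φ (L v)).comp (A.comp B)) p := hΦd.comp p hGd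
    have heq : (fun x => φ x v) =ᶠ[nhds p] (fun x => Φ (fderiv ℝ f x v)) := by
      filter_upwards [hU.mem_nhds hp] with x hx
      exact (hf.2.2 x hx v).symm
    have hφd : HasFDerivAt (fun x => φ x v)
        ((fderiv ℝ Φ (L v)).comp (A.comp B)) p :=
      hcomp.congr_of_eventuallyEq heq
    have h0 : ((fderiv ℝ Φ (L v)).comp (A.comp B)) = 0 := by
      rw [← hφd.fderiv]; exact hflat1 v hv
    have := congrFun (congrArg DFunLike.coe h0) w
    simp only [ContinuousLinearMap.comp_apply, ContinuousLinearMap.zero_apply] at this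
    have hAB : A (B w) = B w v := rfl
    rw [hAB] at this
    have hBwv : B w v = lam (B w v) • τ := by
      have := hτ w v
      rwa [hB2 w v] at this
    rw [hBwv, map_smul] at this
    simpa [hg] using this
  -- continuity of g at nonzero points
  have hgcont : ∀ v : ℝ × ℝ, v ≠ 0 → ContinuousAt g v := by
    intro v hv
    have h1 : ContinuousAt (fun u : V => fderiv ℝ Φ u) (L v) := by
      have : ContDiffAt ℝ (⊤ : ℕ∞) Φ (L v) :=
        hΦ.2.2.2.2.1.contDiffAt (isOpen_compl_singleton.mem_nhds (hLne v hv))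
      exact (this.fderiv_right (m := 1) (by exact WithTop.coe_le_coe.mpr le_top)).continuousAt
    have h2 : ContinuousAt (fun u : ℝ × ℝ => fderiv ℝ Φ (L u)) v :=
      h1.comp L.continuous.continuousAt
    exact ((ContinuousLinearMap.apply ℝ ℝ τ).continuous.continuousAt).comp h2
  -- main argument
  intro v hv
  obtain ⟨v₀, w₀, hS⟩ := hSne
  rw [hB2 v₀ w₀] at hS
  by_cases hker : ∃ w : ℝ × ℝ, lam (B w v) ≠ 0
  · obtain ⟨w, hw⟩ := hker
    have := key v hv w
    exact (mul_eq_zero.1 this).resolve_left hw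
  · push_neg at hker
    -- v is in the kernel; approximate by v + t • w₀
    set u : ℝ → ℝ × ℝ := fun t => v + t • w₀ with hu
    have hucont : Filter.Tendsto u (nhdsWithin 0 {(0:ℝ)}ᶜ) (nhds v) := by
      have : Filter.Tendsto u (nhds 0) (nhds v) := by
        have : Continuous u := continuous_const.add (continuous_id.smul continuous_const)
        simpa [hu] using this.tendsto 0
      exact this.mono_left nhdsWithin_le_nhds
    have hune : ∀ᶠ t in nhdsWithin 0 {(0:ℝ)}ᶜ, u t ≠ 0 := by
      have : ∀ᶠ x in nhds v, x ≠ 0 := isOpen_compl_singleton.eventually_mem hv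
      exact hucont.eventually this
    have hgu : ∀ᶠ t in nhdsWithin 0 {(0:ℝ)}ᶜ, g (u t) = 0 := by
      filter_upwards [hune, self_mem_nhdsWithin] with t hut (ht : t ≠ 0)
      have hlamne : lam (B v₀ (u t)) ≠ 0 := by
        have : B v₀ (u t) = B v₀ v + t • B v₀ w₀ := by
          simp [hu, map_add, map_smul]
        rw [this, map_add, map_smul, hker v₀]
        simpa using mul_ne_zero ht hS
      have hkey := key (u t) hut v₀
      exact (mul_eq_zero.1 hkey).resolve_left hlamne
    have h1 : Filter.Tendsto (fun t => g (u t)) (nhdsWithin 0 {(0:ℝ)}ᶜ) (nhds (g v)) :=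
      (hgcont v hv).tendsto.comp hucont
    have h2 : Filter.Tendsto (fun t => g (u t)) (nhdsWithin 0 {(0:ℝ)}ᶜ) (nhds 0) := by
      exact Filter.Tendsto.congr' (Filter.EventuallyEq.symm hgu) tendsto_const_nhds
    exact tendsto_nhds_unique h1 h2
end
end

section
/- Let φ be a Finsler metric on an open set U ⊆ ℝ² and p ∈ U with vanishing first and second derivatives at p of x ↦ φ(x, v) for every v ≠ 0. Let (V, Φ) be a 3-dimensional Banach–Minkowski space, f : U → V an isometric embedding of (U, φ), H := range(Df_p), λ ∈ V*∖{0} with λ|_H = 0, and S(v, w) := λ(D²f_p(v, w)). Assume S ≠ 0 and let τ ∈ V∖H satisfy D²f_p(v, w) = S(v, w)·τ for all v, w. Let P : V → V be the linear projection with range H and P(τ) = 0, and define T(v, w, w₁) := P(D³f_p(v, w, w₁)), where D³f_p is the third derivative of f at p. If v, w ∈ ℝ² are linearly independent, φ(p, v) = φ(p, w) = 1, and S(v, w) = 0, then T(v, w, w₁) = 0 for all w₁ ∈ ℝ². -/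
noncomputable section

open Filter Set

section Aux

variable {E : Type*} [NormedAddCommGroup E] [NormedSpace ℝ E]
variable {V : Type*} [NormedAddCommGroup V] [NormedSpace ℝ V]
variable {W : Type*} [NormedAddCommGroup W] [NormedSpace ℝ W]

/-- helper: derivative of pointwise application of a CLM-valued map to a constant. -/
lemma fderiv_apply_const' {F : E → (E →L[ℝ] W)} {x : E} (hF : DifferentiableAt ℝ F x)
    (u z : E) : fderiv ℝ (fun y => F y u) x z = fderiv ℝ F x z u := by
  have : fderiv ℝ (fun y => F y u) x
      = (ContinuousLinearMap.apply ℝ W u).comp (fderiv ℝ F x) :=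
    ((ContinuousLinearMap.apply ℝ W u).hasFDerivAt.comp x hF.hasFDerivAt).fderiv
  rw [this]; rfl

lemma ifd_two_eq (q : E → W) (p : E) (a b : E) :
    iteratedFDeriv ℝ 2 q p ![a,b] = fderiv ℝ (fderiv ℝ q) p a b := by
  rw [iteratedFDeriv_succ_apply_right]
  rw [show Fin.init ![a,b] = ![a] by funext i; fin_cases i; simp [Fin.init]]
  rw [iteratedFDeriv_one_apply]
  rfl

lemma ifd_three_eq (q : E → W) (p : E) (a b c : E) :
    iteratedFDeriv ℝ 3 q p ![a,b,c] = fderiv ℝ (fderiv ℝ (fderiv ℝ q)) p a b c := by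
  rw [iteratedFDeriv_succ_apply_right]
  rw [show Fin.init ![a,b,c] = ![a,b] by funext i; fin_cases i <;> simp [Fin.init]]
  rw [iteratedFDeriv_succ_apply_right]
  rw [show Fin.init ![a,b] = ![a] by funext i; fin_cases i; simp [Fin.init]]
  rw [iteratedFDeriv_one_apply]
  rfl

/-- Euler identity for a positively 2-homogeneous function smooth away from `0`. -/
lemma euler_two {G : V → ℝ} (hG : ContDiffOn ℝ (⊤ : ℕ∞) G {(0:V)}ᶜ)
    (hhom : ∀ t : ℝ, 0 ≤ t → ∀ x : V, G (t • x) = t^2 * G x)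
    {x : V} (hx : x ≠ 0) : fderiv ℝ G x x = 2 * G x := by
  have hdiff : DifferentiableAt ℝ G x := by
    have := (hG.contDiffAt (isOpen_compl_singleton.mem_nhds (by simpa using hx)))
    exact this.differentiableAt (by simp)
  have h1 : HasDerivAt (fun t : ℝ => G (t • x)) (fderiv ℝ G x x) 1 := by
    have hline : HasDerivAt (fun t : ℝ => t • x) x 1 := by
      simpa using (hasDerivAt_id (1:ℝ)).smul_const x
    have hF : HasFDerivAt G (fderiv ℝ G x) ((fun t : ℝ => t • x) 1) := by
      simpa using hdiff.hasFDerivAt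
    exact hF.comp_hasDerivAt 1 hline
  have h2 : HasDerivAt (fun t : ℝ => t^2 * G x) (2 * G x) 1 := by
    simpa using (hasDerivAt_pow 2 (1:ℝ)).mul_const (G x)
  have heq : (fun t : ℝ => G (t • x)) =ᶠ[nhds 1] (fun t : ℝ => t^2 * G x) := by
    filter_upwards [eventually_gt_nhds (show (0:ℝ) < 1 by norm_num)] with t ht
    exact hhom t ht.le x
  exact (h1.congr_of_eventuallyEq heq.symm).unique h2

/-- positive 1-homogeneity of the derivative of a positively 2-homogeneous function. -/
lemma fderiv_homog {G : V → ℝ} (hG : ContDiffOn ℝ (⊤ : ℕ∞) G {(0:V)}ᶜ)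
    (hhom : ∀ t : ℝ, 0 ≤ t → ∀ x : V, G (t • x) = t^2 * G x)
    {x : V} (hx : x ≠ 0) {c : ℝ} (hc : 0 < c) :
    fderiv ℝ G (c • x) = c • fderiv ℝ G x := by
  have hcx : c • x ≠ 0 := smul_ne_zero hc.ne' hx
  have hdiff : ∀ {y : V}, y ≠ 0 → DifferentiableAt ℝ G y := fun {y} hy =>
    (hG.contDiffAt (isOpen_compl_singleton.mem_nhds (by simpa using hy))).differentiableAt (by simp)
  have h1 : HasFDerivAt (fun y => G (c • y))
      ((fderiv ℝ G (c • x)).comp (c • ContinuousLinearMap.id ℝ V)) x := by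
    have hs : HasFDerivAt (fun y : V => c • y) (c • ContinuousLinearMap.id ℝ V) x := by
      exact ((c • ContinuousLinearMap.id ℝ V).hasFDerivAt (x := x))
    exact ((hdiff hcx).hasFDerivAt).comp x hs
  have h2 : HasFDerivAt (fun y => c^2 * G y) (c^2 • fderiv ℝ G x) x := by
    simpa using ((hdiff hx).hasFDerivAt).const_mul (c^2)
  have hfun : (fun y => G (c • y)) = fun y => c^2 * G y := funext fun y => hhom c hc.le y
  rw [hfun] at h1
  have := h1.unique h2
  ext y
  have hy := congrArg (fun (T : V →L[ℝ] ℝ) => T y) this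
  simp only [ContinuousLinearMap.comp_apply, ContinuousLinearMap.smul_apply,
    ContinuousLinearMap.coe_smul', Pi.smul_apply, ContinuousLinearMap.id_apply] at hy ⊢
  have h3 : fderiv ℝ G (c • x) (c • y) = c^2 * fderiv ℝ G x y := by simpa [smul_eq_mul] using hy
  rw [map_smul] at h3
  have hc' : c ≠ 0 := hc.ne'
  have := mul_left_cancel₀ hc' (by simpa [smul_eq_mul, pow_two, mul_assoc] using h3)
  simpa [smul_eq_mul] using this

/-- strict support inequality from quadratic strict convexity. -/
lemma support_lt {G : V → ℝ} (hG : ContDiffOn ℝ (⊤ : ℕ∞) G {(0:V)}ᶜ)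
    (hpos : ∀ x : V, x ≠ 0 → ∀ d : V, d ≠ 0 → 0 < iteratedFDeriv ℝ 2 G x ![d,d])
    (heuler : ∀ z : V, z ≠ 0 → fderiv ℝ G z z = 2 * G z)
    {x y : V} (hxy : LinearIndependent ℝ ![x, y]) (hGx : G x = 1) (hGy : G y = 1) :
    fderiv ℝ G x y < 2 := by
  have hpair := LinearIndependent.pair_iff.1 hxy
  have hx0 : x ≠ 0 := by
    intro h; obtain ⟨h1, -⟩ := hpair 1 0 (by simp [h]); norm_num at h1
  set d := y - x with hd_def
  have hd : d ≠ 0 := by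
    intro h
    have h' : y - x = 0 := h
    obtain ⟨h1, -⟩ := hpair (-1) 1
      (by rw [neg_one_smul, one_smul, add_comm, ← sub_eq_add_neg]; exact h')
    norm_num at h1
  set l : ℝ → V := fun t => x + t • d with hl_def
  have hl : ∀ t : ℝ, l t ≠ 0 := by
    intro t h
    have h' : x + t • (y - x) = 0 := h
    have : (1 - t) • x + t • y = 0 := by linear_combination (norm := module) h'
    obtain ⟨h1, h2⟩ := hpair _ _ this
    rw [h2, sub_zero] at h1; norm_num at h1
  have hGdiff : ∀ {z : V}, z ≠ 0 → DifferentiableAt ℝ G z := fun {z} hz =>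
    (hG.contDiffAt (isOpen_compl_singleton.mem_nhds (by simpa using hz))).differentiableAt (by simp)
  have hG' : ContDiffOn ℝ (⊤ : ℕ∞) (fderiv ℝ G) {(0:V)}ᶜ :=
    hG.fderiv_of_isOpen isOpen_compl_singleton (by simp)
  have hG'diff : ∀ {z : V}, z ≠ 0 → DifferentiableAt ℝ (fderiv ℝ G) z := fun {z} hz =>
    (hG'.contDiffAt (isOpen_compl_singleton.mem_nhds (by simpa using hz))).differentiableAt (by simp)
  have hline : ∀ t : ℝ, HasDerivAt l d t := by
    intro t
    have h := ((hasDerivAt_id t).smul_const d).const_add x; rw [one_smul] at h; exact h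
  set σ : ℝ → ℝ := fun t => G (l t) with hσ_def
  set σ' : ℝ → ℝ := fun t => fderiv ℝ G (l t) d with hσ'_def
  set σ'' : ℝ → ℝ := fun t => fderiv ℝ (fderiv ℝ G) (l t) d d with hσ''_def
  have hs1 : ∀ t : ℝ, HasDerivAt σ (σ' t) t := by
    intro t
    have hF : HasFDerivAt G (fderiv ℝ G (l t)) (l t) := (hGdiff (hl t)).hasFDerivAt
    exact hF.comp_hasDerivAt t (hline t)
  have hs2 : ∀ t : ℝ, HasDerivAt σ' (σ'' t) t := by
    intro t
    have hF : HasFDerivAt (fderiv ℝ G) (fderiv ℝ (fderiv ℝ G) (l t)) (l t) :=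
      (hG'diff (hl t)).hasFDerivAt
    have h1 : HasDerivAt (fun s => fderiv ℝ G (l s)) (fderiv ℝ (fderiv ℝ G) (l t) d) t :=
      hF.comp_hasDerivAt t (hline t)
    exact ((ContinuousLinearMap.apply ℝ ℝ d).hasFDerivAt.comp_hasDerivAt t h1)
  have hpos' : ∀ t : ℝ, 0 < σ'' t := by
    intro t
    have := hpos (l t) (hl t) d hd
    rwa [ifd_two_eq] at this
  have hσ0 : σ 0 = 1 := by simp [hσ_def, hl_def, hGx]
  have hσ1 : σ 1 = 1 := by
    have : l 1 = y := by simp [hl_def, hd_def]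
    simp [hσ_def, this, hGy]
  obtain ⟨ξ, hξ, hslope⟩ := exists_hasDerivAt_eq_slope σ σ' zero_lt_one
    (fun t _ => (hs1 t).continuousAt.continuousWithinAt) (fun t _ => hs1 t)
  rw [hσ1, hσ0] at hslope
  simp only [sub_self, sub_zero, div_one, zero_div] at hslope
  obtain ⟨ζ, hζ, hslope2⟩ := exists_hasDerivAt_eq_slope σ' σ'' hξ.1
    (fun t _ => (hs2 t).continuousAt.continuousWithinAt) (fun t _ => hs2 t)
  have hξpos : (0:ℝ) < ξ := hξ.1
  rw [sub_zero, eq_div_iff (ne_of_gt hξpos)] at hslope2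
  have hσ'0 : σ' 0 < 0 := by nlinarith [hpos' ζ, hslope2, hslope]
  have hx' : l 0 = x := by simp [hl_def]
  have h2 : σ' 0 = fderiv ℝ G x y - 2 := by
    show fderiv ℝ G (l 0) d = _
    rw [hx', hd_def, map_sub, heuler x hx0, hGx]
    ring
  linarith [h2 ▸ hσ'0]

/-- two independent functionals on `ℝ × ℝ` have trivial common kernel. -/
lemma indep_functionals_inj {L M : (ℝ × ℝ) →L[ℝ] ℝ}
    (h : LinearIndependent ℝ ![L, M]) {x : ℝ × ℝ} (hL : L x = 0) (hM : M x = 0) :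
    x = 0 := by
  by_contra hx
  have hLne : L ≠ 0 := by
    intro h0
    exact (h.ne_zero 0) (by simpa using h0)
  have hrepr : ∀ (T : (ℝ × ℝ) →L[ℝ] ℝ) (z : ℝ × ℝ),
      T z = z.1 * T (1, 0) + z.2 * T (0, 1) := by
    intro T z
    have hz : z = z.1 • ((1:ℝ), (0:ℝ)) + z.2 • ((0:ℝ), (1:ℝ)) := by
      ext <;> simp
    calc T z = T (z.1 • ((1:ℝ), (0:ℝ)) + z.2 • ((0:ℝ), (1:ℝ))) := by rw [← hz]
    _ = z.1 * T (1, 0) + z.2 * T (0, 1) := by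
        rw [map_add, map_smul, map_smul]; simp [smul_eq_mul]
  set α := L (1, 0); set β := L (0, 1); set γ := M (1, 0); set δ := M (0, 1)
  have hLx : x.1 * α + x.2 * β = 0 := by rw [← hrepr L x]; exact hL
  have hMx : x.1 * γ + x.2 * δ = 0 := by rw [← hrepr M x]; exact hM
  have hdet : α * δ - β * γ = 0 := by
    rcases Prod.mk.injEq x.1 x.2 0 0 ▸ (show ¬(x.1 = 0 ∧ x.2 = 0) from fun hc =>
      hx (Prod.ext hc.1 hc.2)) with h'
    by_cases h1 : x.1 = 0
    · have h2 : x.2 ≠ 0 := fun hc => hx (Prod.ext h1 hc)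
      have hβ : β = 0 := by
        have := hLx; rw [h1] at this; simpa [h2] using this
      have hδ : δ = 0 := by
        have := hMx; rw [h1] at this; simpa [h2] using this
      rw [hβ, hδ]; ring
    · have hα : α = -(x.2 * β) / x.1 := by field_simp; linarith [hLx]
      have hγ : γ = -(x.2 * δ) / x.1 := by field_simp; linarith [hMx]
      rw [hα, hγ]; field_simp; ring
  -- M is a multiple of L, or L = 0
  have hdep : ∃ c : ℝ, M = c • L := by
    by_cases hβ0 : β = 0
    · by_cases hα0 : α = 0
      · exfalso; apply hLne
        refine ContinuousLinearMap.ext fun z => ?_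
        rw [hrepr L z]
        show z.1 * α + z.2 * β = 0
        rw [hα0, hβ0]; ring
      · -- δ = γ * β / α  with β = 0: hdet: αδ = βγ = 0 ⇒ δ = 0
        have hδ0 : δ = 0 := by
          have : α * δ = 0 := by rw [hβ0] at hdet; linarith [hdet]
          exact (mul_eq_zero.1 this).resolve_left hα0
        refine ⟨γ / α, ?_⟩
        refine ContinuousLinearMap.ext fun z => ?_
        rw [hrepr M z, ContinuousLinearMap.smul_apply, hrepr L z]
        show z.1 * γ + z.2 * δ = (γ / α) • (z.1 * α + z.2 * β)
        rw [hδ0, hβ0, smul_eq_mul]; field_simp; ring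
    · refine ⟨δ / β, ?_⟩
      refine ContinuousLinearMap.ext fun z => ?_
      rw [hrepr M z, ContinuousLinearMap.smul_apply, hrepr L z]
      show z.1 * γ + z.2 * δ = (δ / β) • (z.1 * α + z.2 * β)
      have hγ' : γ = δ * α / β := by field_simp; nlinarith [hdet]
      rw [hγ', smul_eq_mul]; field_simp
  obtain ⟨c, hc⟩ := hdep
  have h2 := linearIndependent_fin2.1 h
  have hMM : (![L, M] 1) = M := by simp
  have hLL : (![L, M] 0) = L := by simp
  by_cases hc0 : c = 0
  · exact h2.1 (by rw [hMM, hc, hc0, zero_smul])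
  · exact h2.2 c⁻¹ (by rw [hMM, hLL, hc, smul_smul, inv_mul_cancel₀ hc0, one_smul])

/-- arithmetic pigeonhole for the three support functionals. -/
lemma pigeonhole_arith {m a₂ a₃ l1w l2v l2u l3w : ℝ}
    (hm : 0 < m)
    (e_v : a₂ * l2v = 2)
    (e_w : a₂ * 2 = l1w)
    (e_u : a₂ * l2u = -(2 * m⁻¹))
    (e3_u : a₃ * 2 = -(2 * m⁻¹))
    (e3_w : a₃ * l3w = l1w)
    (h1w : l1w < 2) (h2v : l2v < 2) (h2u : l2u < 2) (h3w : l3w < 2) : False := by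
  have hinv : 0 < m⁻¹ := inv_pos.2 hm
  rcases lt_trichotomy a₂ 0 with ha | ha | ha
  · have ha₃ : a₃ < 0 := by linarith
    have ha₂0 : a₂ ≠ 0 := ne_of_lt ha
    have ha₃0 : a₃ ≠ 0 := ne_of_lt ha₃
    have hw23 : a₂ * 2 = a₃ * l3w := by rw [e_w, ← e3_w]
    have hu23 : a₂ * l2u = a₃ * 2 := by rw [e_u, ← e3_u]
    have h3pos : 0 < l3w := by
      rcases le_or_gt l3w 0 with hle | hlt
      · exfalso; nlinarith [mul_nonneg (neg_nonneg.2 ha₃.le) (neg_nonneg.2 hle)]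
      · exact hlt
    have h2pos : 0 < l2u := by
      rcases le_or_gt l2u 0 with hle | hlt
      · exfalso; nlinarith [mul_nonneg (neg_nonneg.2 ha.le) (neg_nonneg.2 hle)]
      · exact hlt
    have h3eq : l3w = 2 * a₂ / a₃ := by field_simp; linarith
    have h2eq : l2u = 2 * a₃ / a₂ := by field_simp; linarith
    have heq4 : l3w * l2u = 4 := by rw [h3eq, h2eq]; field_simp; ring
    nlinarith [mul_lt_mul'' h3w h2u h3pos.le h2pos.le]
  · rw [ha, zero_mul] at e_v; norm_num at e_v
  · nlinarith [mul_lt_mul_of_pos_left h2v ha]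

end Aux

set_option maxHeartbeats 1000000 in
/-- Lemma: `T(v,w,·) = 0` for `S`-orthogonal unit vectors: in the
second-order flat situation with `D²f_p = S • τ`, `S ≠ 0`, and `P` the projection of `V`
onto `H = range Df_p` killing `τ`, the tangential part `T(v,w,w₁) = P (D³f_p(v,w,w₁))`
vanishes whenever `v, w` are linearly independent `φ(p,·)`-unit vectors with `S(v,w) = 0`. -/
theorem statement8 (U : Set (ℝ × ℝ)) (hU : IsOpen U)
    (φ : ℝ × ℝ → ℝ × ℝ → ℝ) (hφ : IsFinslerMetric U φ)
    (p : ℝ × ℝ) (hp : p ∈ U)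
    (hflat1 : ∀ v : ℝ × ℝ, v ≠ 0 → fderiv ℝ (fun x => φ x v) p = 0)
    (hflat2 : ∀ v : ℝ × ℝ, v ≠ 0 → iteratedFDeriv ℝ 2 (fun x => φ x v) p = 0)
    (V : Type*) [NormedAddCommGroup V] [NormedSpace ℝ V] [FiniteDimensional ℝ V]
    (hdim : Module.finrank ℝ V = 3)
    (Φ : V → ℝ) (hΦ : IsBanachMinkowski Φ)
    (f : ℝ × ℝ → V) (hf : IsIsometricEmbedding U φ Φ f)
    (lam : V →ₗ[ℝ] ℝ) (hlam : lam ≠ 0)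
    (hlamH : ∀ u ∈ Set.range (fderiv ℝ f p), lam u = 0)
    (hSne : ∃ v w : ℝ × ℝ, lam (iteratedFDeriv ℝ 2 f p ![v, w]) ≠ 0)
    (τ : V) (hτH : τ ∉ Set.range (fderiv ℝ f p))
    (hτ : ∀ v w : ℝ × ℝ, iteratedFDeriv ℝ 2 f p ![v, w] =
      lam (iteratedFDeriv ℝ 2 f p ![v, w]) • τ)
    (P : V →ₗ[ℝ] V)
    (hPrange : ∀ u : V, P u ∈ Set.range (fderiv ℝ f p))
    (hPid : ∀ u ∈ Set.range (fderiv ℝ f p), P u = u)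
    (hPτ : P τ = 0)
    (v w : ℝ × ℝ) (hvw : LinearIndependent ℝ ![v, w])
    (hv1 : φ p v = 1) (hw1 : φ p w = 1)
    (hSvw : lam (iteratedFDeriv ℝ 2 f p ![v, w]) = 0) :
    ∀ w₁ : ℝ × ℝ, P (iteratedFDeriv ℝ 3 f p ![v, w, w₁]) = 0 := by
  classical
  set F1 := fderiv ℝ f with hF1_def
  set F2 := fderiv ℝ F1 with hF2_def
  set F3 := fderiv ℝ F2 with hF3_def
  -- smoothness bookkeeping
  have hfU : ContDiffOn ℝ (⊤ : ℕ∞) f U := hf.1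
  have hF1U : ContDiffOn ℝ (⊤ : ℕ∞) F1 U := hfU.fderiv_of_isOpen hU (by simp)
  have hF2U : ContDiffOn ℝ (⊤ : ℕ∞) F2 U := hF1U.fderiv_of_isOpen hU (by simp)
  have hfd : ∀ x ∈ U, DifferentiableAt ℝ f x := fun x hx =>
    (hfU.contDiffAt (hU.mem_nhds hx)).differentiableAt (by simp)
  have hF1d : ∀ x ∈ U, DifferentiableAt ℝ F1 x := fun x hx =>
    (hF1U.contDiffAt (hU.mem_nhds hx)).differentiableAt (by simp)
  have hF2d : ∀ x ∈ U, DifferentiableAt ℝ F2 x := fun x hx =>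
    (hF2U.contDiffAt (hU.mem_nhds hx)).differentiableAt (by simp)
  -- the square of Φ
  set G : V → ℝ := fun u => Φ u ^ 2 with hG_def
  have hGC : ContDiffOn ℝ (⊤ : ℕ∞) G {(0:V)}ᶜ := hΦ.2.2.2.2.1.pow 2
  have hGpos0 : ∀ x : V, x ≠ 0 → ∀ d : V, d ≠ 0 → 0 < iteratedFDeriv ℝ 2 G x ![d,d] :=
    hΦ.2.2.2.2.2
  have hGhom : ∀ t : ℝ, 0 ≤ t → ∀ x : V, G (t • x) = t^2 * G x := by
    intro t ht x
    show Φ (t • x) ^ 2 = t ^ 2 * Φ x ^ 2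
    rw [hΦ.2.2.1 t ht x]; ring
  have hGd : ∀ {z : V}, z ≠ 0 → DifferentiableAt ℝ G z := fun {z} hz =>
    (hGC.contDiffAt (isOpen_compl_singleton.mem_nhds (by simpa using hz))).differentiableAt (by simp)
  have hG'C : ContDiffOn ℝ (⊤ : ℕ∞) (fderiv ℝ G) {(0:V)}ᶜ :=
    hGC.fderiv_of_isOpen isOpen_compl_singleton (by simp)
  have hG'd : ∀ {z : V}, z ≠ 0 → DifferentiableAt ℝ (fderiv ℝ G) z := fun {z} hz =>
    (hG'C.contDiffAt (isOpen_compl_singleton.mem_nhds (by simpa using hz))).differentiableAt (by simp)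
  have heulerG : ∀ z : V, z ≠ 0 → fderiv ℝ G z z = 2 * G z := fun z hz =>
    euler_two hGC hGhom hz
  -- Finsler data at p
  have hφp := hφ.2 p hp
  have hiso : ∀ x ∈ U, ∀ u : ℝ × ℝ, Φ (F1 x u) = φ x u := hf.2.2
  have hφpos : ∀ u : ℝ × ℝ, u ≠ 0 → 0 < φ p u := hφp.2.1
  have hGval : ∀ x ∈ U, ∀ u : ℝ × ℝ, G (F1 x u) = (φ x u)^2 := by
    intro x hx u
    show Φ (F1 x u) ^ 2 = (φ x u)^2
    rw [hiso x hx u]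
  have hA0 : ∀ u : ℝ × ℝ, u ≠ 0 → F1 p u ≠ 0 := by
    intro u hu h0
    have h1 := hiso p hp u
    rw [h0, hΦ.1] at h1
    exact absurd h1.symm (ne_of_gt (hφpos u hu))
  have hψC : ∀ u : ℝ × ℝ, u ≠ 0 → ContDiffOn ℝ (⊤ : ℕ∞) (fun x => φ x u) U := by
    intro u hu
    have hmap : ContDiff ℝ (⊤ : ℕ∞) (fun x : ℝ × ℝ => (x, u)) := contDiff_id.prodMk contDiff_const
    have hmt : Set.MapsTo (fun x : ℝ × ℝ => (x, u)) U (U ×ˢ {(0:ℝ×ℝ)}ᶜ) :=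
      fun x hx => ⟨hx, by simpa using hu⟩
    exact hφ.1.comp hmap.contDiffOn hmt
  -- iterated derivative conversions
  have hB2 : ∀ y z : ℝ × ℝ, iteratedFDeriv ℝ 2 f p ![y, z] = F2 p y z := fun y z =>
    ifd_two_eq f p y z
  have hB3 : ∀ a b c : ℝ × ℝ, iteratedFDeriv ℝ 3 f p ![a, b, c] = F3 p a b c := fun a b c =>
    ifd_three_eq f p a b c
  have hτ' : ∀ y z : ℝ × ℝ, F2 p y z = lam (F2 p y z) • τ := by
    intro y z
    have := hτ y z
    rwa [hB2 y z] at this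
  have hSvw' : lam (F2 p v w) = 0 := by rw [← hB2 v w]; exact hSvw
  -- symmetry of the second derivative on U
  have hsym2 : ∀ x ∈ U, ∀ b c : ℝ × ℝ, F2 x b c = F2 x c b := by
    intro x hx b c
    have hev : ∀ᶠ y in nhds x, HasFDerivAt f (F1 y) y := by
      filter_upwards [hU.mem_nhds hx] with y hy using (hfd y hy).hasFDerivAt
    exact second_derivative_symmetric_of_eventually_of_real hev (hF1d x hx).hasFDerivAt b c
  have hSwv' : lam (F2 p w v) = 0 := by rw [hsym2 p hp w v]; exact hSvw'
  -- symmetry of the third derivative in the first two slots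
  have hsym12 : ∀ a b : ℝ × ℝ, F3 p a b = F3 p b a := by
    intro a b
    have hev : ∀ᶠ y in nhds p, HasFDerivAt F1 (F2 y) y := by
      filter_upwards [hU.mem_nhds hp] with y hy using (hF1d y hy).hasFDerivAt
    exact second_derivative_symmetric_of_eventually_of_real hev (hF2d p hp).hasFDerivAt a b
  -- applied derivative of x ↦ F2 x b c
  have hstep3 : ∀ b c a : ℝ × ℝ, fderiv ℝ (fun x => F2 x b c) p a = F3 p a b c := by
    intro b c a
    have hH : DifferentiableAt ℝ (fun x => F2 x b) p :=
      (hF2d p hp).clm_apply (differentiableAt_const b)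
    have h1 : fderiv ℝ (fun x => F2 x b c) p a = fderiv ℝ (fun x => F2 x b) p a c :=
      fderiv_apply_const' hH c a
    have h2 : fderiv ℝ (fun x => F2 x b) p a = F3 p a b := fderiv_apply_const' (hF2d p hp) b a
    rw [h1, h2]
  -- symmetry of the third derivative in the last two slots
  have hsym23 : ∀ a b c : ℝ × ℝ, F3 p a b c = F3 p a c b := by
    intro a b c
    have hd1 : DifferentiableAt ℝ (fun x => F2 x b c) p :=
      ((hF2d p hp).clm_apply (differentiableAt_const b)).clm_apply (differentiableAt_const c)
    have hd2 : DifferentiableAt ℝ (fun x => F2 x c b) p :=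
      ((hF2d p hp).clm_apply (differentiableAt_const c)).clm_apply (differentiableAt_const b)
    have hzero : fderiv ℝ (fun x => F2 x b c - F2 x c b) p = 0 := by
      have hev : (fun x => F2 x b c - F2 x c b) =ᶠ[nhds p] (fun _ => (0:V)) := by
        filter_upwards [hU.mem_nhds hp] with y hy
        rw [hsym2 y hy b c, sub_self]
      rw [hev.fderiv_eq]
      exact fderiv_const_apply 0
    have hsub : fderiv ℝ (fun x => F2 x b c - F2 x c b) p
        = fderiv ℝ (fun x => F2 x b c) p - fderiv ℝ (fun x => F2 x c b) p :=
      fderiv_sub hd1 hd2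
    have := hsub ▸ hzero
    have happ := congrArg (fun (T : (ℝ×ℝ) →L[ℝ] V) => T a) this
    simp only [ContinuousLinearMap.sub_apply, ContinuousLinearMap.zero_apply] at happ
    have h1 := hstep3 b c a
    have h2 := hstep3 c b a
    rw [h1, h2] at happ
    exact sub_eq_zero.1 happ
  -- ===== the key first/second order identities =====
  have hGUkey : ∀ (u : ℝ × ℝ), u ≠ 0 →
      (∀ z : ℝ × ℝ, fderiv ℝ G (F1 p u) (F2 p z u) = 0) ∧
      (∀ y z : ℝ × ℝ, fderiv ℝ (fderiv ℝ G) (F1 p u) (F2 p y u) (F2 p z u)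
          + fderiv ℝ G (F1 p u) (F3 p y z u) = 0) := by
    intro u hu
    set gu : ℝ × ℝ → V := fun x => F1 x u with hgu_def
    have hgup : gu p = F1 p u := rfl
    have hgud : ∀ x ∈ U, DifferentiableAt ℝ gu x := fun x hx =>
      (hF1d x hx).clm_apply (differentiableAt_const u)
    have hgu_cont : ContinuousOn gu U := fun x hx =>
      (hgud x hx).continuousAt.continuousWithinAt
    set N : Set (ℝ × ℝ) := U ∩ gu ⁻¹' {(0:V)}ᶜ with hN_def
    have hNopen : IsOpen N := hgu_cont.isOpen_inter_preimage hU isOpen_compl_singleton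
    have hpN : p ∈ N := ⟨hp, by simpa [hgu_def] using hA0 u hu⟩
    have hNU : N ⊆ U := Set.inter_subset_left
    have hNne : ∀ x ∈ N, gu x ≠ 0 := fun x hx => by simpa using hx.2
    have hNnhds : N ∈ nhds p := hNopen.mem_nhds hpN
    have hdgu : ∀ x ∈ U, ∀ z : ℝ × ℝ, fderiv ℝ gu x z = F2 x z u := by
      intro x hx z
      exact fderiv_apply_const' (hF1d x hx) u z
    set ψ : ℝ × ℝ → ℝ := fun x => φ x u with hψ_def
    have hψCU : ContDiffOn ℝ (⊤ : ℕ∞) ψ U := hψC u hu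
    have hψd : ∀ x ∈ U, DifferentiableAt ℝ ψ x := fun x hx =>
      (hψCU.contDiffAt (hU.mem_nhds hx)).differentiableAt (by simp)
    have hψ'U : ContDiffOn ℝ (⊤ : ℕ∞) (fderiv ℝ ψ) U := hψCU.fderiv_of_isOpen hU (by simp)
    have hψ'd : ∀ x ∈ U, DifferentiableAt ℝ (fderiv ℝ ψ) x := fun x hx =>
      (hψ'U.contDiffAt (hU.mem_nhds hx)).differentiableAt (by simp)
    have hflatψ1 : fderiv ℝ ψ p = 0 := by rw [hψ_def]; exact hflat1 u hu
    -- fderiv of the composite, applied, at any x ∈ N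
    have hcompz : ∀ x ∈ N, ∀ z : ℝ × ℝ,
        fderiv ℝ (fun x' => G (gu x')) x z = fderiv ℝ G (gu x) (F2 x z u) := by
      intro x hx z
      have h1 : DifferentiableAt ℝ G (gu x) := hGd (hNne x hx)
      have hcc : fderiv ℝ (fun x' => G (gu x')) x
          = (fderiv ℝ G (gu x)).comp (fderiv ℝ gu x) := by
        have := fderiv_comp x h1 (hgud x (hNU hx))
        simpa [Function.comp_def] using this
      rw [hcc]
      simp only [ContinuousLinearMap.comp_apply]
      rw [hdgu x (hNU hx) z]
    -- the composite agrees with ψ * ψ near any point of N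
    have heqN : ∀ x ∈ N, (fun x' => G (gu x')) =ᶠ[nhds x] (fun x' => ψ x' * ψ x') := by
      intro x hx
      filter_upwards [hNopen.mem_nhds hx] with x' hx'
      have := hGval x' (hNU hx') u
      calc G (gu x') = (φ x' u)^2 := this
        _ = ψ x' * ψ x' := by rw [pow_two]
    -- first order identity
    have key1 : ∀ z : ℝ × ℝ, fderiv ℝ G (F1 p u) (F2 p z u) = 0 := by
      intro z
      have h1 := hcompz p hpN z
      have h2 : fderiv ℝ (fun x' => G (gu x')) p = fderiv ℝ (fun x' => ψ x' * ψ x') p :=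
        (heqN p hpN).fderiv_eq
      have h3 : fderiv ℝ (fun x' => ψ x' * ψ x') p = 0 := by
        rw [fderiv_fun_mul (hψd p hp) (hψd p hp), hflatψ1]
        simp
      rw [hgup] at h1
      rw [← h1, h2, h3]
      rfl
    refine ⟨key1, ?_⟩
    intro y z
    -- q x = fderiv G (gu x) (F2 x z u)
    set c : ℝ × ℝ → (V →L[ℝ] ℝ) := fun x => fderiv ℝ G (gu x) with hc_def
    set b : ℝ × ℝ → V := fun x => F2 x z u with hb_def
    set q : ℝ × ℝ → ℝ := fun x => c x (b x) with hq_def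
    have hgu_p_ne : gu p ≠ 0 := hNne p hpN
    have hcd : DifferentiableAt ℝ c p := by
      have h1 : DifferentiableAt ℝ (fderiv ℝ G) (gu p) := hG'd hgu_p_ne
      have := fderiv_comp p h1 (hgud p hp)
      exact (h1.comp p (hgud p hp))
    have hbH : DifferentiableAt ℝ (fun x => F2 x z) p :=
      (hF2d p hp).clm_apply (differentiableAt_const z)
    have hbd : DifferentiableAt ℝ b p :=
      hbH.clm_apply (differentiableAt_const u)
    -- LHS evaluation of fderiv q p y
    have hql : fderiv ℝ q p y = fderiv ℝ G (F1 p u) (F3 p y z u)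
        + fderiv ℝ (fderiv ℝ G) (F1 p u) (F2 p y u) (F2 p z u) := by
      have h0 : fderiv ℝ q p = (c p).comp (fderiv ℝ b p) + (fderiv ℝ c p).flip (b p) :=
        fderiv_clm_apply hcd hbd
      have happ := congrArg (fun (T : (ℝ×ℝ) →L[ℝ] ℝ) => T y) h0
      simp only [ContinuousLinearMap.add_apply, ContinuousLinearMap.comp_apply,
        ContinuousLinearMap.flip_apply] at happ
      have hfb : fderiv ℝ b p y = F3 p y z u := by
        have e1 : fderiv ℝ b p y = fderiv ℝ (fun x => F2 x z) p y u :=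
          fderiv_apply_const' hbH u y
        have e2 : fderiv ℝ (fun x => F2 x z) p y = F3 p y z :=
          fderiv_apply_const' (hF2d p hp) z y
        rw [e1, e2]
      have hfc : fderiv ℝ c p y = fderiv ℝ (fderiv ℝ G) (F1 p u) (F2 p y u) := by
        have h1 : DifferentiableAt ℝ (fderiv ℝ G) (gu p) := hG'd hgu_p_ne
        have h2 : fderiv ℝ c p = (fderiv ℝ (fderiv ℝ G) (gu p)).comp (fderiv ℝ gu p) := by
          have := fderiv_comp p h1 (hgud p hp)
          simpa [hc_def, Function.comp_def] using this
        rw [h2]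
        simp only [ContinuousLinearMap.comp_apply]
        rw [hdgu p hp y, hgup]
      rw [happ, hfb, hfc]
    -- RHS: q is eventually the z-derivative of ψ * ψ
    have hqr : q =ᶠ[nhds p] (fun x => ψ x * fderiv ℝ ψ x z + ψ x * fderiv ℝ ψ x z) := by
      filter_upwards [hNnhds, hU.mem_nhds hp] with x hx hxU
      have h1 : q x = fderiv ℝ (fun x' => G (gu x')) x z := (hcompz x hx z).symm
      have h2 : fderiv ℝ (fun x' => G (gu x')) x = fderiv ℝ (fun x' => ψ x' * ψ x') x :=
        (heqN x hx).fderiv_eq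
      have h3 : fderiv ℝ (fun x' => ψ x' * ψ x') x
          = ψ x • fderiv ℝ ψ x + ψ x • fderiv ℝ ψ x := fderiv_mul (hψd x hxU) (hψd x hxU)
      rw [h1, h2, h3]
      simp [smul_eq_mul]
    have hq0 : fderiv ℝ q p y = 0 := by
      rw [hqr.fderiv_eq]
      have hDzd : DifferentiableAt ℝ (fun x => fderiv ℝ ψ x z) p :=
        (hψ'd p hp).clm_apply (differentiableAt_const z)
      have hDzp : fderiv ℝ ψ p z = 0 := by rw [hflatψ1]; rfl
      have hfDz : fderiv ℝ (fun x => fderiv ℝ ψ x z) p = 0 := by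
        refine ContinuousLinearMap.ext fun y' => ?_
        have e1 : fderiv ℝ (fun x => fderiv ℝ ψ x z) p y' = fderiv ℝ (fderiv ℝ ψ) p y' z :=
          fderiv_apply_const' (hψ'd p hp) z y'
        have e2 : fderiv ℝ (fderiv ℝ ψ) p y' z = iteratedFDeriv ℝ 2 ψ p ![y', z] :=
          (ifd_two_eq ψ p y' z).symm
        rw [e1, e2, hψ_def, hflat2 u hu]
        rfl
      have hmul : fderiv ℝ (fun x => ψ x * fderiv ℝ ψ x z) p = 0 := by
        rw [fderiv_fun_mul (hψd p hp) hDzd, hfDz, hDzp]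
        simp
      have hall : fderiv ℝ (fun x => ψ x * fderiv ℝ ψ x z + ψ x * fderiv ℝ ψ x z) p = 0 := by
        rw [fderiv_fun_add (𝕜 := ℝ) (f := fun x => ψ x * fderiv ℝ ψ x z)
          (g := fun x => ψ x * fderiv ℝ ψ x z) ((hψd p hp).mul hDzd) ((hψd p hp).mul hDzd), hmul]
        simp
      rw [hall]
      exact ContinuousLinearMap.zero_apply y
    linarith [hql, hq0]
  -- ===== τ is killed by all derivative functionals =====
  have hkill : ∀ u : ℝ × ℝ, u ≠ 0 → fderiv ℝ G (F1 p u) τ = 0 := by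
    obtain ⟨v₀, w₀, hvw₀⟩ := hSne
    have hvw₀' : lam (F2 p v₀ w₀) ≠ 0 := by rwa [hB2 v₀ w₀] at hvw₀
    have hstep : ∀ u : ℝ × ℝ, u ≠ 0 → lam (F2 p v₀ u) ≠ 0 → fderiv ℝ G (F1 p u) τ = 0 := by
      intro u hu hl
      have h1 := (hGUkey u hu).1 v₀
      rw [hτ' v₀ u, map_smul, smul_eq_mul] at h1
      exact (mul_eq_zero.1 h1).resolve_left hl
    intro u hu
    by_cases hcase : lam (F2 p v₀ u) ≠ 0
    · exact hstep u hu hcase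
    push_neg at hcase
    have hTc : ContinuousAt (fun s : ℝ × ℝ => fderiv ℝ G (F1 p s) τ) u := by
      have hG'cont : ContinuousOn (fderiv ℝ G) {(0:V)}ᶜ :=
        hGC.continuousOn_fderiv_of_isOpen isOpen_compl_singleton (by simp)
      have h1 : ContinuousAt (fderiv ℝ G) (F1 p u) :=
        hG'cont.continuousAt (isOpen_compl_singleton.mem_nhds (by simpa using hA0 u hu))
      have h2 : ContinuousAt (fun s : ℝ × ℝ => fderiv ℝ G (F1 p s)) u :=
        h1.comp (F1 p).continuous.continuousAt
      exact ((ContinuousLinearMap.apply ℝ ℝ τ).continuous.continuousAt).comp h2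
    have hseq : Filter.Tendsto (fun t : ℝ => u + t • w₀) (nhdsWithin 0 {(0:ℝ)}ᶜ) (nhds u) := by
      have h1 : Filter.Tendsto (fun t : ℝ => u + t • w₀) (nhds 0) (nhds u) := by
        have hc : Continuous (fun t : ℝ => u + t • w₀) :=
          continuous_const.add (continuous_id.smul continuous_const)
        have := hc.tendsto 0
        simpa using this
      exact h1.mono_left nhdsWithin_le_nhds
    have hne : ∀ᶠ t in nhdsWithin (0:ℝ) {(0:ℝ)}ᶜ, u + t • w₀ ≠ 0 := by
      have hmem : {s : ℝ × ℝ | s ≠ 0} ∈ nhds u :=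
        isOpen_compl_singleton.mem_nhds (by simpa using hu)
      exact hseq.eventually (Filter.eventually_iff.2 hmem)
    have hev : ∀ᶠ t in nhdsWithin (0:ℝ) {(0:ℝ)}ᶜ,
        fderiv ℝ G (F1 p (u + t • w₀)) τ = 0 := by
      filter_upwards [hne, self_mem_nhdsWithin] with t ht ht0
      apply hstep _ ht
      have e1 : F2 p v₀ (u + t • w₀) = F2 p v₀ u + t • F2 p v₀ w₀ := by
        rw [map_add, map_smul]
      rw [e1, map_add, map_smul, smul_eq_mul, hcase, zero_add]
      exact mul_ne_zero (by simpa using ht0) hvw₀'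
    have hlim : Filter.Tendsto (fun t : ℝ => fderiv ℝ G (F1 p (u + t • w₀)) τ)
        (nhdsWithin 0 {(0:ℝ)}ᶜ) (nhds (fderiv ℝ G (F1 p u) τ)) := hTc.tendsto.comp hseq
    have hlim0 : Filter.Tendsto (fun t : ℝ => fderiv ℝ G (F1 p (u + t • w₀)) τ)
        (nhdsWithin 0 {(0:ℝ)}ᶜ) (nhds 0) :=
      Filter.Tendsto.congr' (Filter.EventuallyEq.symm hev) tendsto_const_nhds
    exact tendsto_nhds_unique hlim hlim0
  -- ===== basic nonvanishing =====
  have hv0 : v ≠ 0 := by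
    intro h
    obtain ⟨h1, -⟩ := (LinearIndependent.pair_iff.1 hvw) 1 0 (by simp [h])
    norm_num at h1
  have hw0 : w ≠ 0 := by
    intro h
    obtain ⟨-, h2⟩ := (LinearIndependent.pair_iff.1 hvw) 0 1 (by simp [h])
    norm_num at h2
  have hτ0 : τ ≠ 0 := by
    intro h
    exact hτH ⟨0, by simp [h]⟩
  have hAinj : Function.Injective (F1 p) := by
    intro a b hab
    by_contra hne
    exact hA0 (a - b) (sub_ne_zero.2 hne) (by rw [map_sub, hab, sub_self])
  -- ===== kernel of P is spanned by τ =====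
  have hkerP : ∀ Z : V, P Z = 0 → ∃ cz : ℝ, Z = cz • τ := by
    have hAlin_inj : Function.Injective ((F1 p).toLinearMap) := hAinj
    have hrangeP : LinearMap.range P = LinearMap.range ((F1 p).toLinearMap) := by
      apply le_antisymm
      · rintro x ⟨y, rfl⟩
        obtain ⟨zz, hz⟩ := hPrange y
        exact ⟨zz, hz⟩
      · rintro x ⟨y, rfl⟩
        exact ⟨(F1 p) y, hPid _ ⟨y, rfl⟩⟩
    have h2 : Module.finrank ℝ (LinearMap.range ((F1 p).toLinearMap)) = 2 := by
      rw [LinearMap.finrank_range_of_inj hAlin_inj]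
      simp
    have h3 := LinearMap.finrank_range_add_finrank_ker P
    rw [hrangeP, h2, hdim] at h3
    have hker1 : Module.finrank ℝ (LinearMap.ker P) = 1 := by omega
    have hspan : (Submodule.span ℝ {τ} : Submodule ℝ V) = LinearMap.ker P := by
      apply Submodule.eq_of_le_of_finrank_le
      · rw [Submodule.span_le, Set.singleton_subset_iff]
        exact hPτ
      · rw [hker1, finrank_span_singleton hτ0]
    intro Z hZ
    have : Z ∈ Submodule.span ℝ ({τ} : Set V) := by rw [hspan]; exact hZ
    obtain ⟨cz, hcz⟩ := Submodule.mem_span_singleton.1 this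
    exact ⟨cz, hcz.symm⟩
  -- ===== the key vanishing equations =====
  have keyeq : ∀ (u : ℝ × ℝ), u ≠ 0 → ∀ y z : ℝ × ℝ,
      lam (F2 p y u) = 0 ∨ lam (F2 p z u) = 0 →
      fderiv ℝ G (F1 p u) (F3 p y z u) = 0 := by
    intro u hu y z hcase
    have h := (hGUkey u hu).2 y z
    have hzero : fderiv ℝ (fderiv ℝ G) (F1 p u) (F2 p y u) (F2 p z u) = 0 := by
      rcases hcase with h0 | h0
      · rw [hτ' y u, h0, zero_smul, map_zero, ContinuousLinearMap.zero_apply]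
      · rw [hτ' z u, h0, zero_smul]
        exact ContinuousLinearMap.map_zero _
    linarith [h, hzero]
  have hSw_negv : lam (F2 p w (-v)) = 0 := by
    have e1 : F2 p w (-v) = -(F2 p w v) := by rw [map_neg]
    rw [e1, map_neg, hSwv', neg_zero]
  -- ===== the two target vectors and their kill equations =====
  set X₁ : V := F3 p v w v with hX₁
  set X₂ : V := F3 p v w w with hX₂
  have hX₁' : F3 p v v w = X₁ := (hsym23 v w v).symm
  have hX₂' : F3 p w w v = X₂ := by
    have e1 : F3 p v w w = F3 p w v w :=
      congrArg (fun (T : (ℝ×ℝ) →L[ℝ] V) => T w) (hsym12 v w)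
    rw [hX₂, e1, hsym23 w v w]
  have hkv1 : fderiv ℝ G (F1 p v) X₁ = 0 := keyeq v hv0 v w (Or.inr hSwv')
  have hkw1 : fderiv ℝ G (F1 p w) X₁ = 0 := by
    have := keyeq w hw0 v v (Or.inl hSvw')
    rwa [hX₁'] at this
  have hknegv1 : fderiv ℝ G (F1 p (-v)) X₁ = 0 := by
    have h := keyeq (-v) (neg_ne_zero.2 hv0) v w (Or.inr hSw_negv)
    have e1 : F3 p v w (-v) = -X₁ := by rw [map_neg, hX₁]
    rw [e1] at h
    simpa using h
  have hkv2 : fderiv ℝ G (F1 p v) X₂ = 0 := by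
    have := keyeq v hv0 w w (Or.inl hSwv')
    rwa [hX₂'] at this
  have hkw2 : fderiv ℝ G (F1 p w) X₂ = 0 := keyeq w hw0 v w (Or.inl hSvw')
  have hknegv2 : fderiv ℝ G (F1 p (-v)) X₂ = 0 := by
    have h := keyeq (-v) (neg_ne_zero.2 hv0) w w (Or.inl hSw_negv)
    have e1 : F3 p w w (-v) = -X₂ := by rw [map_neg, hX₂']
    rw [e1] at h
    simpa using h
  -- ===== the normalized opposite point u₃ =====
  set m₃ : ℝ := φ p (-v) with hm₃
  have hm₃pos : 0 < m₃ := hφpos _ (neg_ne_zero.2 hv0)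
  set u₃ : ℝ × ℝ := m₃⁻¹ • (-v) with hu₃
  have hu₃0 : u₃ ≠ 0 := smul_ne_zero (inv_ne_zero hm₃pos.ne') (neg_ne_zero.2 hv0)
  have hu₃1 : φ p u₃ = 1 := by
    rw [hu₃, hφp.2.2.1 _ (inv_nonneg.2 hm₃pos.le), ← hm₃]
    field_simp
  have hAu₃ : F1 p u₃ = m₃⁻¹ • F1 p (-v) := by rw [hu₃, map_smul]
  have hl3 : fderiv ℝ G (F1 p (-v)) = m₃ • fderiv ℝ G (F1 p u₃) := by
    have h1 : F1 p (-v) = m₃ • F1 p u₃ := by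
      rw [hAu₃, smul_inv_smul₀ hm₃pos.ne']
    rw [h1]
    exact fderiv_homog hGC hGhom (hA0 u₃ hu₃0) hm₃pos
  have hku₃1 : fderiv ℝ G (F1 p u₃) X₁ = 0 := by
    have h := hknegv1
    rw [hl3] at h
    simp only [ContinuousLinearMap.smul_apply, smul_eq_mul] at h
    exact (mul_eq_zero.1 h).resolve_left hm₃pos.ne'
  have hku₃2 : fderiv ℝ G (F1 p u₃) X₂ = 0 := by
    have h := hknegv2
    rw [hl3] at h
    simp only [ContinuousLinearMap.smul_apply, smul_eq_mul] at h
    exact (mul_eq_zero.1 h).resolve_left hm₃pos.ne'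
  -- ===== the functionals on ℝ² and their numeric data =====
  have hGv : G (F1 p v) = 1 := by rw [hGval p hp v, hv1]; norm_num
  have hGw : G (F1 p w) = 1 := by rw [hGval p hp w, hw1]; norm_num
  have hGu₃ : G (F1 p u₃) = 1 := by rw [hGval p hp u₃, hu₃1]; norm_num
  have hmap_indep : ∀ {a b : ℝ × ℝ}, LinearIndependent ℝ ![a, b] →
      LinearIndependent ℝ ![F1 p a, F1 p b] := by
    intro a b hab
    have h1 := hab.map' ((F1 p).toLinearMap) (LinearMap.ker_eq_bot.2 hAinj)
    have hcomp : (((F1 p).toLinearMap) ∘ ![a, b]) = ![F1 p a, F1 p b] := by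
      funext i; fin_cases i <;> rfl
    rwa [hcomp] at h1
  have hswap : ∀ {a b : ℝ × ℝ}, LinearIndependent ℝ ![a, b] → LinearIndependent ℝ ![b, a] := by
    intro a b hab
    rw [LinearIndependent.pair_iff]
    intro s t hst
    obtain ⟨h1, h2⟩ := (LinearIndependent.pair_iff.1 hab) t s
      (by linear_combination (norm := module) hst)
    exact ⟨h2, h1⟩
  have hwu₃ : LinearIndependent ℝ ![w, u₃] := by
    rw [LinearIndependent.pair_iff]
    intro s t hst
    have h1 : (-(t * m₃⁻¹)) • v + s • w = 0 := by
      rw [hu₃] at hst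
      linear_combination (norm := module) hst
    obtain ⟨h2, h3⟩ := (LinearIndependent.pair_iff.1 hvw) _ _ h1
    refine ⟨h3, ?_⟩
    have hmne : m₃⁻¹ ≠ 0 := inv_ne_zero hm₃pos.ne'
    have := neg_eq_zero.1 h2
    rcases mul_eq_zero.1 this with h | h
    · exact h
    · exact absurd h hmne
  set L₁ : (ℝ×ℝ) →L[ℝ] ℝ := (fderiv ℝ G (F1 p v)).comp (F1 p) with hL₁
  set L₂ : (ℝ×ℝ) →L[ℝ] ℝ := (fderiv ℝ G (F1 p w)).comp (F1 p) with hL₂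
  set L₃ : (ℝ×ℝ) →L[ℝ] ℝ := (fderiv ℝ G (F1 p u₃)).comp (F1 p) with hL₃
  have hL₁v : L₁ v = 2 := by
    rw [hL₁, ContinuousLinearMap.comp_apply, heulerG _ (hA0 v hv0), hGv]
    norm_num
  have hL₂w : L₂ w = 2 := by
    rw [hL₂, ContinuousLinearMap.comp_apply, heulerG _ (hA0 w hw0), hGw]
    norm_num
  have hL₃u₃ : L₃ u₃ = 2 := by
    rw [hL₃, ContinuousLinearMap.comp_apply, heulerG _ (hA0 u₃ hu₃0), hGu₃]
    norm_num
  have hL₁w : L₁ w < 2 := by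
    rw [hL₁, ContinuousLinearMap.comp_apply]
    exact support_lt hGC hGpos0 heulerG (hmap_indep hvw) hGv hGw
  have hL₂v : L₂ v < 2 := by
    rw [hL₂, ContinuousLinearMap.comp_apply]
    exact support_lt hGC hGpos0 heulerG (hmap_indep (hswap hvw)) hGw hGv
  have hL₂u₃ : L₂ u₃ < 2 := by
    rw [hL₂, ContinuousLinearMap.comp_apply]
    exact support_lt hGC hGpos0 heulerG (hmap_indep hwu₃) hGw hGu₃
  have hL₃w : L₃ w < 2 := by
    rw [hL₃, ContinuousLinearMap.comp_apply]
    exact support_lt hGC hGpos0 heulerG (hmap_indep (hswap hwu₃)) hGu₃ hGw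
  have hAu₃v : F1 p u₃ = (-m₃⁻¹) • F1 p v := by
    rw [hAu₃, map_neg, smul_neg, neg_smul]
  have hL₁u₃ : L₁ u₃ = -(2 * m₃⁻¹) := by
    rw [hL₁, ContinuousLinearMap.comp_apply, hAu₃v, map_smul, heulerG _ (hA0 v hv0), hGv,
      smul_eq_mul]
    ring
  have hL₃v : L₃ v = -(2 * m₃) := by
    have hAv : F1 p v = (-m₃) • F1 p u₃ := by
      rw [hAu₃v, smul_smul]
      have : (-m₃) * (-m₃⁻¹) = 1 := by field_simp
      rw [this, one_smul]
    rw [hL₃, ContinuousLinearMap.comp_apply, hAv, map_smul, heulerG _ (hA0 u₃ hu₃0), hGu₃,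
      smul_eq_mul]
    ring
  -- ===== conclusion: the three functionals force the tangential part to vanish =====
  have hfinal : ∀ X : V, fderiv ℝ G (F1 p v) X = 0 → fderiv ℝ G (F1 p w) X = 0 →
      fderiv ℝ G (F1 p u₃) X = 0 → P X = 0 := by
    intro X h1 h2 h3
    obtain ⟨xb, hxb⟩ := hPrange X
    obtain ⟨cz, hcz⟩ := hkerP (X - P X)
      (by rw [map_sub, hPid _ (hPrange X), sub_self])
    have hXdec : X = F1 p xb + cz • τ := by
      calc X = P X + (X - P X) := by abel
      _ = F1 p xb + cz • τ := by rw [hcz, ← hxb]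
    have ekey : ∀ s : ℝ × ℝ, s ≠ 0 → fderiv ℝ G (F1 p s) X = 0 →
        fderiv ℝ G (F1 p s) (F1 p xb) = 0 := by
      intro s hs hXk
      have h : fderiv ℝ G (F1 p s) (F1 p xb) + cz * fderiv ℝ G (F1 p s) τ = 0 := by
        rw [← smul_eq_mul, ← map_smul, ← map_add, ← hXdec]
        exact hXk
      rw [hkill s hs, mul_zero, add_zero] at h
      exact h
    have e1 : L₁ xb = 0 := by simpa [hL₁] using ekey v hv0 h1
    have e2 : L₂ xb = 0 := by simpa [hL₂] using ekey w hw0 h2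
    have e3 : L₃ xb = 0 := by simpa [hL₃] using ekey u₃ hu₃0 h3
    have hxb0 : xb = 0 := by
      by_cases c12 : LinearIndependent ℝ ![L₁, L₂]
      · exact indep_functionals_inj c12 e1 e2
      by_cases c13 : LinearIndependent ℝ ![L₁, L₃]
      · exact indep_functionals_inj c13 e1 e3
      by_cases c23 : LinearIndependent ℝ ![L₂, L₃]
      · exact indep_functionals_inj c23 e2 e3
      exfalso
      have hL₂0 : L₂ ≠ 0 := by
        intro h0
        rw [h0] at hL₂w
        simp at hL₂w
      have hL₃0 : L₃ ≠ 0 := by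
        intro h0
        rw [h0] at hL₃u₃
        simp at hL₃u₃
      have hget : ∀ {A B : (ℝ×ℝ) →L[ℝ] ℝ}, ¬LinearIndependent ℝ ![A, B] → B ≠ 0 →
          ∃ a : ℝ, a • B = A := by
        intro A B hnind hB0
        rw [linearIndependent_fin2] at hnind
        push_neg at hnind
        have hB : (![A, B] 1) = B := by simp
        have hA : (![A, B] 0) = A := by simp
        rw [hB, hA] at hnind
        exact hnind hB0
      obtain ⟨a₂, ha₂⟩ := hget c12 hL₂0
      obtain ⟨a₃, ha₃⟩ := hget c13 hL₃0
      have hap : ∀ s : ℝ × ℝ, a₂ * L₂ s = L₁ s := by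
        intro s
        have := congrArg (fun (T : (ℝ×ℝ) →L[ℝ] ℝ) => T s) ha₂
        simpa [smul_eq_mul] using this
      have hap3 : ∀ s : ℝ × ℝ, a₃ * L₃ s = L₁ s := by
        intro s
        have := congrArg (fun (T : (ℝ×ℝ) →L[ℝ] ℝ) => T s) ha₃
        simpa [smul_eq_mul] using this
      have e_v : a₂ * L₂ v = 2 := by rw [hap v, hL₁v]
      have e_w : a₂ * 2 = L₁ w := by rw [← hL₂w]; exact hap w
      have e_u : a₂ * L₂ u₃ = -(2 * m₃⁻¹) := by rw [hap u₃, hL₁u₃]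
      have e3_u : a₃ * 2 = -(2 * m₃⁻¹) := by
        have h := hap3 u₃
        rw [hL₃u₃, hL₁u₃] at h
        exact h
      have e3_w : a₃ * L₃ w = L₁ w := hap3 w
      exact pigeonhole_arith hm₃pos e_v e_w e_u e3_u e3_w hL₁w hL₂v hL₂u₃ hL₃w
    rw [← hxb, hxb0, map_zero]
  -- ===== assembly =====
  have hPX₁ : P X₁ = 0 := hfinal X₁ hkv1 hkw1 hku₃1
  have hPX₂ : P X₂ = 0 := hfinal X₂ hkv2 hkw2 hku₃2
  intro w₁
  rw [hB3 v w w₁]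
  have hsp : Submodule.span ℝ (Set.range ![v, w]) = ⊤ :=
    hvw.span_eq_top_of_card_eq_finrank (by simp)
  have hw₁mem : w₁ ∈ Submodule.span ℝ ({v, w} : Set (ℝ×ℝ)) := by
    have hr : (Set.range ![v, w] : Set (ℝ×ℝ)) = {v, w} := by
      simp [Matrix.range_cons, Matrix.range_empty]
      exact Set.pair_comm w v
    rw [← hr, hsp]
    trivial
  obtain ⟨a, b, hab⟩ := Submodule.mem_span_pair.1 hw₁mem
  have hdec : F3 p v w w₁ = a • X₁ + b • X₂ := by
    rw [← hab, map_add, map_smul, map_smul, hX₁, hX₂]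
  rw [hdec, map_add, map_smul, map_smul, hPX₁, hPX₂, smul_zero, smul_zero, add_zero]
end
end

section
/- Let (V, Φ) be a 3-dimensional Banach–Minkowski space and Γ any set of 2-dimensional linear subspaces of V such that for every H ∈ Γ the restriction Φ|_H is a Euclidean norm. Then there exists a quadratic form Q on V (not necessarily positive definite) such that Φ(v)² = Q(v) for every v ∈ ⋃_{H∈Γ} H. -/
noncomputable section

namespace Stmt14Aux

variable {V : Type*} [NormedAddCommGroup V] [NormedSpace ℝ V]

lemma euclid_expand (f : V → ℝ) (H : Submodule ℝ V) (q : QuadraticForm ℝ H)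
    (hq : ∀ v : H, f v = q v) {x y : V} (hx : x ∈ H) (hy : y ∈ H) (a b : ℝ) :
    f (a • x + b • y) = a^2 * f x + b^2 * f y + a * b * (f (x + y) - f x - f y) := by
  have h1 : (a • x + b • y) = ((a • (⟨x,hx⟩:H) + b • ⟨y,hy⟩ : H) : V) := by simp
  have h2 : (x + y) = (((⟨x,hx⟩:H) + ⟨y,hy⟩ : H) : V) := rfl
  have hx' : f x = q ⟨x,hx⟩ := hq ⟨x,hx⟩
  have hy' : f y = q ⟨y,hy⟩ := hq ⟨y,hy⟩
  rw [h1, h2, hq, hq, hx', hy']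
  have hpol : q ((⟨x,hx⟩:H) + ⟨y,hy⟩) = q ⟨x,hx⟩ + q ⟨y,hy⟩ + QuadraticMap.polar q ⟨x,hx⟩ ⟨y,hy⟩ := by
    simp [QuadraticMap.polar]
  have hadd : q (a • (⟨x,hx⟩:H) + b • ⟨y,hy⟩)
      = q (a • (⟨x,hx⟩:H)) + q (b • (⟨y,hy⟩:H)) + QuadraticMap.polar q (a • ⟨x,hx⟩) (b • ⟨y,hy⟩) := by
    simp [QuadraticMap.polar]
  rw [hadd, hpol, QuadraticMap.map_smul, QuadraticMap.map_smul,
    QuadraticMap.polar_smul_left, QuadraticMap.polar_smul_right]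
  simp [smul_eq_mul]
  ring


/-- the curve `t ↦ f (x + t • y)` and its derivative at 0 -/
lemma hasDerivAt_line (f : V → ℝ) {x : V} (hd : DifferentiableAt ℝ f x) (y : V) :
    HasDerivAt (fun t : ℝ => f (x + t • y)) (fderiv ℝ f x y) 0 := by
  have hc : HasDerivAt (fun t : ℝ => x + t • y) y 0 := by
    simpa using ((hasDerivAt_id (0:ℝ)).smul_const y).const_add x
  have hd' : HasFDerivAt f (fderiv ℝ f x) (x + (0:ℝ) • y) := by
    simpa using hd.hasFDerivAt
  have := hd'.comp_hasDerivAt (x := (0:ℝ)) hc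
  exact this

lemma fderiv_eq_polar (f : V → ℝ) (H : Submodule ℝ V) (q : QuadraticForm ℝ H)
    (hq : ∀ v : H, f v = q v) {x y : V} (hx : x ∈ H) (hy : y ∈ H)
    (hd : DifferentiableAt ℝ f x) :
    fderiv ℝ f x y = f (x + y) - f x - f y := by
  set P : ℝ := f (x + y) - f x - f y with hP
  have h1 : HasDerivAt (fun t : ℝ => f (x + t • y)) (fderiv ℝ f x y) 0 :=
    hasDerivAt_line f hd y
  have heq : (fun t : ℝ => f (x + t • y)) = fun t : ℝ => f x + (t * t * f y + t * P) := by
    funext t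
    have := euclid_expand f H q hq hx hy 1 t
    simp only [one_smul, one_pow, one_mul] at this
    rw [this]; ring
  have h2 : HasDerivAt (fun t : ℝ => f x + (t * t * f y + t * P)) P 0 := by
    have ha : HasDerivAt (fun t : ℝ => t * t * f y) ((1*0+0*1) * f y) 0 :=
      ((hasDerivAt_id (0:ℝ)).mul (hasDerivAt_id (0:ℝ))).mul_const (f y)
    have hb : HasDerivAt (fun t : ℝ => t * P) P 0 := hasDerivAt_mul_const P
    simpa using (ha.add hb).const_add (f x)
  rw [heq] at h1
  exact h1.unique h2

lemma second_deriv (f : V → ℝ) (hf : ContDiffOn ℝ (⊤ : ℕ∞) f {(0:V)}ᶜ)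
    (H : Submodule ℝ V) (q : QuadraticForm ℝ H)
    (hq : ∀ v : H, f v = q v) {x y : V} (hx : x ∈ H) (hy : y ∈ H) (hx0 : x ≠ 0) :
    (fderiv ℝ (fderiv ℝ f) x y) y = 2 * f y := by
  have hdiffat : ∀ z : V, z ≠ 0 → DifferentiableAt ℝ f z := fun z hz =>
    (hf.contDiffAt (isOpen_compl_singleton.mem_nhds hz)).differentiableAt (by simp)
  have hD2 : DifferentiableAt ℝ (fderiv ℝ f) x := by
    have h1 : ContDiffAt ℝ (⊤ : ℕ∞) f x := hf.contDiffAt (isOpen_compl_singleton.mem_nhds hx0)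
    exact (h1.fderiv_right (m := 1) (WithTop.coe_le_coe.mpr le_top)).differentiableAt one_ne_zero
  -- curve of derivatives
  have hc : HasDerivAt (fun t : ℝ => x + t • y) y 0 := by
    simpa using ((hasDerivAt_id (0:ℝ)).smul_const y).const_add x
  have h1 : HasDerivAt (fun t : ℝ => fderiv ℝ f (x + t • y)) (fderiv ℝ (fderiv ℝ f) x y) 0 := by
    have hD2' : HasFDerivAt (fderiv ℝ f) (fderiv ℝ (fderiv ℝ f) x) (x + (0:ℝ) • y) := by
      simpa using hD2.hasFDerivAt
    have := hD2'.comp_hasDerivAt (x := (0:ℝ)) hc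
    exact this
  have h2 : HasDerivAt (fun t : ℝ => (fderiv ℝ f (x + t • y)) y)
      ((fderiv ℝ (fderiv ℝ f) x y) y) 0 := by
    have := h1.clm_apply (hasDerivAt_const (0:ℝ) y)
    simpa using this
  -- eventually equal to affine function
  have hev : (fun t : ℝ => (fderiv ℝ f (x + t • y)) y)
      =ᶠ[nhds (0:ℝ)] fun t : ℝ => (f (x+y) - f x - f y) + t * (2 * f y) := by
    have hopen : IsOpen {t : ℝ | x + t • y ≠ 0} :=
      isOpen_compl_singleton.preimage (by fun_prop)
    have hmem : (0:ℝ) ∈ {t : ℝ | x + t • y ≠ 0} := by simpa using hx0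
    filter_upwards [hopen.mem_nhds hmem] with t ht
    have hxty : x + t • y ∈ H := H.add_mem hx (H.smul_mem t hy)
    have hk := fderiv_eq_polar f H q hq hxty hy (hdiffat _ ht)
    rw [hk]
    have e1 : x + t • y + y = (1:ℝ) • x + (t+1) • y := by
      rw [add_smul, one_smul, one_smul]; abel
    have e2 : x + t • y = (1:ℝ) • x + t • y := by rw [one_smul]
    rw [e1, e2, euclid_expand f H q hq hx hy 1 (t+1), euclid_expand f H q hq hx hy 1 t]
    ring
  have h3 : HasDerivAt (fun t : ℝ => (f (x+y) - f x - f y) + t * (2 * f y)) (2 * f y) 0 := by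
    simpa using (hasDerivAt_mul_const (2 * f y)).const_add (f (x+y) - f x - f y)
  have h2' := h2.congr_of_eventuallyEq hev.symm
  exact h2'.unique h3

lemma span_pair_eq [FiniteDimensional ℝ V] (H : Submodule ℝ V)
    (hH : Module.finrank ℝ H = 2) {x y : V} (hx : x ∈ H) (hy : y ∈ H)
    (hli : LinearIndependent ℝ ![x, y]) : Submodule.span ℝ {x, y} = H := by
  have hsp : Submodule.span ℝ {x, y} ≤ H := by
    rw [Submodule.span_le]
    rintro z (rfl | rfl) <;> assumption
  have hrange : Set.range ![x, y] = {x, y} := by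
    ext z
    simp [Fin.exists_fin_two, or_comm]
  have hfr : Module.finrank ℝ (Submodule.span ℝ {x, y}) = 2 := by
    rw [← hrange, finrank_span_eq_card hli]; simp
  exact Submodule.eq_of_le_of_finrank_le hsp (by rw [hH, hfr])

lemma span2 [FiniteDimensional ℝ V] (H : Submodule ℝ V) (hH : Module.finrank ℝ H = 2)
    {x y : V} (hx : x ∈ H) (hy : y ∈ H) (hli : LinearIndependent ℝ ![x, y]) :
    ∀ v ∈ H, ∃ a b : ℝ, v = a • x + b • y := by
  intro v hv
  rw [← span_pair_eq H hH hx hy hli] at hv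
  obtain ⟨a, b, hab⟩ := Submodule.mem_span_pair.mp hv
  exact ⟨a, b, hab.symm⟩

lemma inf_nonzero [FiniteDimensional ℝ V] (hV : Module.finrank ℝ V = 3)
    (H K : Submodule ℝ V) (hH : Module.finrank ℝ H = 2) (hK : Module.finrank ℝ K = 2) :
    ∃ u, u ∈ H ⊓ K ∧ u ≠ 0 := by
  have h1 : Module.finrank ℝ ↥(H ⊔ K) + Module.finrank ℝ ↥(H ⊓ K)
      = Module.finrank ℝ H + Module.finrank ℝ K :=
    Submodule.finrank_sup_add_finrank_inf_eq H K
  have h2 : Module.finrank ℝ ↥(H ⊔ K) ≤ 3 := hV ▸ Submodule.finrank_le _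
  have h3 : 0 < Module.finrank ℝ ↥(H ⊓ K) := by omega
  have h4 : H ⊓ K ≠ ⊥ := by
    intro h
    rw [h, finrank_bot] at h3
    omega
  exact Submodule.exists_mem_ne_zero_of_ne_bot h4

lemma inf_eq_span [FiniteDimensional ℝ V] (hV : Module.finrank ℝ V = 3)
    (H K : Submodule ℝ V) (hH : Module.finrank ℝ H = 2) (hK : Module.finrank ℝ K = 2)
    (hne : H ≠ K) {e : V} (he : e ∈ H ⊓ K) (he0 : e ≠ 0) :
    H ⊓ K = Submodule.span ℝ {e} := by
  have h1 : Module.finrank ℝ ↥(H ⊔ K) + Module.finrank ℝ ↥(H ⊓ K)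
      = Module.finrank ℝ H + Module.finrank ℝ K :=
    Submodule.finrank_sup_add_finrank_inf_eq H K
  have h2 : Module.finrank ℝ ↥(H ⊔ K) ≤ 3 := hV ▸ Submodule.finrank_le _
  have hsup : 3 ≤ Module.finrank ℝ ↥(H ⊔ K) := by
    by_contra h
    push_neg at h
    have hHsup : H = H ⊔ K :=
      Submodule.eq_of_le_of_finrank_le le_sup_left (by omega)
    have hKH : K ≤ H := hHsup ▸ le_sup_right
    exact hne (Submodule.eq_of_le_of_finrank_le hKH (by omega)).symm
  have hinf : Module.finrank ℝ ↥(H ⊓ K) = 1 := by omega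
  have hsp : Submodule.span ℝ {e} ≤ H ⊓ K := by
    rw [Submodule.span_le]; simpa using he
  exact (Submodule.eq_of_le_of_finrank_le hsp
    (by rw [hinf, finrank_span_singleton he0])).symm

def bform (c : Fin 3 → (V →ₗ[ℝ] ℝ)) (M : Fin 3 → Fin 3 → ℝ) : LinearMap.BilinMap ℝ V ℝ :=
  LinearMap.mk₂ ℝ (fun v w => ∑ i, ∑ j, M i j * (c i v) * (c j w))
    (fun v v' w => by
      simp only [map_add, ← Finset.sum_add_distrib]
      exact Finset.sum_congr rfl fun i _ => Finset.sum_congr rfl fun j _ => by ring)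
    (fun a v w => by
      simp only [map_smul, smul_eq_mul, Finset.mul_sum]
      exact Finset.sum_congr rfl fun i _ => Finset.sum_congr rfl fun j _ => by ring)
    (fun v w w' => by
      simp only [map_add, ← Finset.sum_add_distrib]
      exact Finset.sum_congr rfl fun i _ => Finset.sum_congr rfl fun j _ => by ring)
    (fun a v w => by
      simp only [map_smul, smul_eq_mul, Finset.mul_sum]
      exact Finset.sum_congr rfl fun i _ => Finset.sum_congr rfl fun j _ => by ring)

lemma bform_apply (c : Fin 3 → (V →ₗ[ℝ] ℝ)) (M : Fin 3 → Fin 3 → ℝ) (v w : V) :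
    bform c M v w = ∑ i, ∑ j, M i j * (c i v) * (c j w) := rfl

lemma bform_basis [FiniteDimensional ℝ V] (b : Module.Basis (Fin 3) ℝ V) (M : Fin 3 → Fin 3 → ℝ)
    (i j : Fin 3) : bform b.coord M (b i) (b j) = M i j := by
  have hc : ∀ k l : Fin 3, b.coord k (b l) = if l = k then 1 else 0 := by
    intro k l
    rw [Module.Basis.coord_apply, Module.Basis.repr_self, Finsupp.single_apply]
  rw [bform_apply]
  simp only [hc, Fin.sum_univ_three]
  fin_cases i <;> fin_cases j <;> norm_num [Fin.ext_iff] <;> rfl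

lemma bform_symm (c : Fin 3 → (V →ₗ[ℝ] ℝ)) (M : Fin 3 → Fin 3 → ℝ)
    (hM : ∀ i j, M i j = M j i) (v w : V) : bform c M v w = bform c M w v := by
  rw [bform_apply, bform_apply, Finset.sum_comm]
  exact Finset.sum_congr rfl fun j _ => Finset.sum_congr rfl fun i _ => by rw [hM]; ring

def hessform (f : V → ℝ) (e : V) : LinearMap.BilinMap ℝ V ℝ :=
  LinearMap.mk₂ ℝ (fun v w => (fderiv ℝ (fderiv ℝ f) e v) w / 2)
    (fun v v' w => by simp [add_div])
    (fun a v w => by simp [smul_eq_mul]; ring)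
    (fun v w w' => by simp [add_div])
    (fun a v w => by simp [smul_eq_mul]; ring)

lemma hessform_apply (f : V → ℝ) (e : V) (v w : V) :
    hessform f e v w = (fderiv ℝ (fderiv ℝ f) e v) w / 2 := rfl

end Stmt14Aux

open Stmt14Aux

/-- Remark after Lemma 4.1: without the interior assumption, for any
family `Γ` of 2-dimensional subspaces on which `Φ` restricts to Euclidean norms, there is
a (not necessarily positive definite) quadratic form `Q` on `V` with `Φ² = Q` on the
union of the planes of `Γ`. -/
theorem statement14 (V : Type*) [NormedAddCommGroup V] [NormedSpace ℝ V]
    [FiniteDimensional ℝ V] (hdim : Module.finrank ℝ V = 3)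
    (Φ : V → ℝ) (hΦ : IsBanachMinkowski Φ)
    (Γ : Set (Submodule ℝ V)) (hΓdim : ∀ H ∈ Γ, Module.finrank ℝ H = 2)
    (heucl : ∀ H ∈ Γ, ∃ q : QuadraticForm ℝ H, q.PosDef ∧
      ∀ v : H, Φ (v : V) ^ 2 = q v) :
    ∃ Q : QuadraticForm ℝ V, ∀ v ∈ ⋃ H ∈ Γ, (H : Set V), Φ v ^ 2 = Q v := by
  classical
  set f : V → ℝ := fun v => Φ v ^ 2 with hfdef
  have hsmooth : ContDiffOn ℝ (⊤ : ℕ∞) f {(0 : V)}ᶜ := hΦ.2.2.2.2.1.pow 2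
  have hdiffat : ∀ z : V, z ≠ 0 → DifferentiableAt ℝ f z := fun z hz =>
    (hsmooth.contDiffAt (isOpen_compl_singleton.mem_nhds hz)).differentiableAt (by simp)
  choose q hqpos hq using heucl
  have hE : ∀ H (hH : H ∈ Γ), ∀ x y : V, x ∈ H → y ∈ H → ∀ a b : ℝ,
      f (a • x + b • y) = a^2 * f x + b^2 * f y + a * b * (f (x + y) - f x - f y) :=
    fun H hH x y hx hy a b =>
      euclid_expand f H (q H hH) (fun v => hq H hH v) hx hy a b
  have hK : ∀ H (hH : H ∈ Γ), ∀ x y : V, x ∈ H → y ∈ H → x ≠ 0 →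
      fderiv ℝ f x y = f (x + y) - f x - f y :=
    fun H hH x y hx hy hx0 =>
      fderiv_eq_polar f H (q H hH) (fun v => hq H hH v) hx hy (hdiffat x hx0)
  have hL2 : ∀ H (hH : H ∈ Γ), ∀ x y : V, x ∈ H → y ∈ H → x ≠ 0 →
      (fderiv ℝ (fderiv ℝ f) x y) y = 2 * f y :=
    fun H hH x y hx hy hx0 =>
      second_deriv f hsmooth H (q H hH) (fun v => hq H hH v) hx hy hx0
  have hdiag : ∀ H (hH : H ∈ Γ), ∀ z : V, z ∈ H → f (z + z) = 4 * f z := by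
    intro H hH z hz
    have h := hE H hH z z hz hz 2 0
    have h2 : (2:ℝ) • z + (0:ℝ) • z = z + z := by
      rw [zero_smul, add_zero, two_smul]
    rw [h2] at h
    rw [h]; ring
  rcases Set.eq_empty_or_nonempty Γ with hΓe | ⟨H1, hH1⟩
  · refine ⟨0, fun v hv => ?_⟩
    simp [hΓe] at hv
  by_cases hA : ∃ e : V, e ≠ 0 ∧ ∀ H ∈ Γ, e ∈ H
  · -- pencil case: Hessian at common point
    obtain ⟨e, he0, heall⟩ := hA
    refine ⟨(hessform f e).toQuadraticMap, fun v hv => ?_⟩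
    rw [Set.mem_iUnion₂] at hv
    obtain ⟨H, hH, hvH⟩ := hv
    rw [LinearMap.BilinMap.toQuadraticMap_apply, hessform_apply,
      hL2 H hH e v (heall H hH) hvH he0]
    show f v = 2 * f v / 2
    ring
  · -- case B
    push_neg at hA
    -- find a second plane distinct from H1
    have hH2ex : ∃ H2 ∈ Γ, H2 ≠ H1 := by
      by_contra h
      push_neg at h
      obtain ⟨e, hem, he0⟩ := inf_nonzero hdim H1 H1 (hΓdim _ hH1) (hΓdim _ hH1)
      obtain ⟨H, hH, heH⟩ := hA e he0
      exact heH ((h H hH) ▸ hem.1)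
    obtain ⟨H2, hH2, hne21⟩ := hH2ex
    obtain ⟨e3, he3m, he30⟩ := inf_nonzero hdim H1 H2 (hΓdim _ hH1) (hΓdim _ hH2)
    have h12span : H1 ⊓ H2 = Submodule.span ℝ {e3} :=
      inf_eq_span hdim H1 H2 (hΓdim _ hH1) (hΓdim _ hH2) (Ne.symm hne21) he3m he30
    obtain ⟨H3, hH3, he3H3⟩ := hA e3 he30
    have hne13 : H1 ≠ H3 := fun h => he3H3 (h ▸ he3m.1)
    have hne23 : H2 ≠ H3 := fun h => he3H3 (h ▸ he3m.2)
    obtain ⟨e1, he1m, he10⟩ := inf_nonzero hdim H2 H3 (hΓdim _ hH2) (hΓdim _ hH3)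
    obtain ⟨e2, he2m, he20⟩ := inf_nonzero hdim H1 H3 (hΓdim _ hH1) (hΓdim _ hH3)
    have h23span : H2 ⊓ H3 = Submodule.span ℝ {e1} :=
      inf_eq_span hdim H2 H3 (hΓdim _ hH2) (hΓdim _ hH3) hne23 he1m he10
    have h13span : H1 ⊓ H3 = Submodule.span ℝ {e2} :=
      inf_eq_span hdim H1 H3 (hΓdim _ hH1) (hΓdim _ hH3) hne13 he2m he20
    -- helpers for singleton spans
    have hmemspan : ∀ (z w : V) (K : Submodule ℝ V), w ∈ Submodule.span ℝ {z} → z ∈ K → w ∈ K :=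
      fun z w K hw hz => (Submodule.span_singleton_le_iff_mem z K).mpr hz hw
    have hflip : ∀ z w : V, z ≠ 0 → z ∈ Submodule.span ℝ {w} → w ∈ Submodule.span ℝ {z} := by
      intro z w hz hm
      obtain ⟨c, hc⟩ := Submodule.mem_span_singleton.mp hm
      have hc0 : c ≠ 0 := by rintro rfl; rw [zero_smul] at hc; exact hz hc.symm
      exact Submodule.mem_span_singleton.mpr ⟨c⁻¹, by rw [← hc, smul_smul, inv_mul_cancel₀ hc0, one_smul]⟩
    -- non-membership facts
    have ne1H1 : e1 ∉ H1 := by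
      intro h
      have : e1 ∈ Submodule.span ℝ {e3} := h12span ▸ (Submodule.mem_inf.mpr ⟨h, he1m.1⟩)
      exact he3H3 (hmemspan e1 e3 H3 (hflip e1 e3 he10 this) he1m.2)
    have ne2H2 : e2 ∉ H2 := by
      intro h
      have : e2 ∈ Submodule.span ℝ {e3} := h12span ▸ (Submodule.mem_inf.mpr ⟨he2m.1, h⟩)
      exact he3H3 (hmemspan e2 e3 H3 (hflip e2 e3 he20 this) he2m.2)
    -- pairwise linear independence
    have li23 : LinearIndependent ℝ ![e2, e3] := by
      rw [linearIndependent_fin2]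
      refine ⟨by simpa using he30, fun a ha => ?_⟩
      simp only [Matrix.cons_val_one, Matrix.head_cons, Matrix.cons_val_zero] at ha
      exact ne2H2 (ha ▸ H2.smul_mem a he3m.2)
    have li13 : LinearIndependent ℝ ![e1, e3] := by
      rw [linearIndependent_fin2]
      refine ⟨by simpa using he30, fun a ha => ?_⟩
      simp only [Matrix.cons_val_one, Matrix.head_cons, Matrix.cons_val_zero] at ha
      exact ne1H1 (ha ▸ H1.smul_mem a he3m.1)
    have li12 : LinearIndependent ℝ ![e1, e2] := by
      rw [linearIndependent_fin2]
      refine ⟨by simpa using he20, fun a ha => ?_⟩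
      simp only [Matrix.cons_val_one, Matrix.head_cons, Matrix.cons_val_zero] at ha
      exact ne1H1 (ha ▸ H1.smul_mem a he2m.1)
    have liE : LinearIndependent ℝ ![e1, e2, e3] := by
      rw [show (![e1, e2, e3] : Fin 3 → V) = Fin.cons e1 ![e2, e3] from rfl,
        linearIndependent_fin_cons]
      refine ⟨li23, fun h => ?_⟩
      have hr : Set.range ![e2, e3] = {e2, e3} := by
        ext z
        simp [Fin.exists_fin_two, or_comm]
      rw [hr] at h
      have hle : Submodule.span ℝ ({e2, e3} : Set V) ≤ H1 := by
        rw [Submodule.span_le]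
        rintro z (rfl | rfl)
        · exact he2m.1
        · exact he3m.1
      exact ne1H1 (hle h)
    -- basis and bilinear form
    set b : Module.Basis (Fin 3) ℝ V :=
      basisOfLinearIndependentOfCardEqFinrank liE (by simp [hdim]) with hbdef
    have hb : ⇑b = ![e1, e2, e3] := coe_basisOfLinearIndependentOfCardEqFinrank liE _
    set E : Fin 3 → V := ![e1, e2, e3] with hEdef
    set Mm : Fin 3 → Fin 3 → ℝ :=
      fun i j => (f (E i + E j) - f (E i) - f (E j)) / 2 with hMm
    have hMsymm : ∀ i j, Mm i j = Mm j i := by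
      intro i j
      simp only [hMm]
      rw [add_comm]
      ring
    set B : LinearMap.BilinMap ℝ V ℝ := bform b.coord Mm with hBdef
    set Q : QuadraticForm ℝ V := B.toQuadraticMap with hQdef
    have hBsymm : ∀ x y : V, B x y = B y x := fun x y => bform_symm b.coord Mm hMsymm x y
    have hBval : ∀ i j, B (E i) (E j) = (f (E i + E j) - f (E i) - f (E j)) / 2 := by
      intro i j
      have h := bform_basis b Mm i j
      rw [hb] at h
      exact h
    have hE0 : E 0 = e1 := rfl
    have hE1v : E 1 = e2 := rfl
    have hE2v : E 2 = e3 := rfl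
    have hEk0 : ∀ k : Fin 3, E k ≠ 0 := by
      intro k
      fin_cases k
      · exact he10
      · exact he20
      · exact he30
    have hcommon : ∀ k i : Fin 3, ∃ W, W ∈ Γ ∧ E k ∈ W ∧ E i ∈ W := by
      intro k i
      fin_cases k <;> fin_cases i
      · exact ⟨H2, hH2, he1m.1, he1m.1⟩
      · exact ⟨H3, hH3, he1m.2, he2m.2⟩
      · exact ⟨H2, hH2, he1m.1, he3m.2⟩
      · exact ⟨H3, hH3, he2m.2, he1m.2⟩
      · exact ⟨H1, hH1, he2m.1, he2m.1⟩
      · exact ⟨H1, hH1, he2m.1, he3m.1⟩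
      · exact ⟨H2, hH2, he3m.2, he1m.1⟩
      · exact ⟨H1, hH1, he3m.1, he2m.1⟩
      · exact ⟨H1, hH1, he3m.1, he3m.1⟩
    have hPBk : ∀ k : Fin 3, ∀ w : V, 2 * B (E k) w = fderiv ℝ f (E k) w := by
      intro k
      have hlin : ((2:ℝ) • (B (E k)) : V →ₗ[ℝ] ℝ)
          = (fderiv ℝ f (E k) : V →L[ℝ] ℝ).toLinearMap := by
        apply b.ext
        intro i
        have hbi : b i = E i := by rw [hb]
        rw [hbi]
        obtain ⟨W, hWΓ, hkW, hiW⟩ := hcommon k i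
        simp only [LinearMap.smul_apply, smul_eq_mul, ContinuousLinearMap.coe_coe]
        rw [hBval k i, hK W hWΓ (E k) (E i) hkW hiW (hEk0 k)]
        ring
      intro w
      have h := LinearMap.congr_fun hlin w
      simpa [smul_eq_mul] using h
    have hQE : ∀ k : Fin 3, Q (E k) = f (E k) := by
      intro k
      obtain ⟨W, hWΓ, hkW, _⟩ := hcommon k k
      rw [hQdef, LinearMap.BilinMap.toQuadraticMap_apply, hBval k k, hdiag W hWΓ _ hkW]
      ring
    have hcrossE : ∀ i j, 2 * B (E i) (E j) = f (E i + E j) - f (E i) - f (E j) := by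
      intro i j
      rw [hBval i j]
      ring
    have hplane : ∀ K (hKΓ : K ∈ Γ), ∀ x y : V, x ∈ K → y ∈ K →
        LinearIndependent ℝ ![x, y] → Q x = f x → Q y = f y →
        2 * B x y = f (x + y) - f x - f y → ∀ v ∈ K, f v = Q v := by
      intro K hKΓ x y hx hy hli hQx hQy hcross v hv
      obtain ⟨a, c, rfl⟩ := span2 K (hΓdim K hKΓ) hx hy hli v hv
      have hBxx : B x x = f x := by
        rw [← LinearMap.BilinMap.toQuadraticMap_apply, ← hQdef]; exact hQx
      have hByy : B y y = f y := by
        rw [← LinearMap.BilinMap.toQuadraticMap_apply, ← hQdef]; exact hQy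
      have hsym := hBsymm x y
      rw [hE K hKΓ x y hx hy a c, hQdef, LinearMap.BilinMap.toQuadraticMap_apply]
      simp only [map_add, map_smul, LinearMap.add_apply, LinearMap.smul_apply, smul_eq_mul]
      linear_combination (-(a^2)) * hBxx + (-(c^2)) * hByy + (-(a*c)) * hcross + (a*c) * hsym
    have hQH1 : ∀ v ∈ H1, f v = Q v :=
      hplane H1 hH1 e2 e3 he2m.1 he3m.1 li23 (hQE 1) (hQE 2) (hcrossE 1 2)
    have hQH2 : ∀ v ∈ H2, f v = Q v :=
      hplane H2 hH2 e1 e3 he1m.1 he3m.2 li13 (hQE 0) (hQE 2) (hcrossE 0 2)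
    have hQH3 : ∀ v ∈ H3, f v = Q v :=
      hplane H3 hH3 e1 e2 he1m.2 he2m.2 li12 (hQE 0) (hQE 1) (hcrossE 0 1)
    refine ⟨Q, fun v hv => ?_⟩
    rw [Set.mem_iUnion₂] at hv
    obtain ⟨H, hHΓ, hvH⟩ := hv
    by_cases h3 : e3 ∈ H
    · by_cases h2 : e2 ∈ H
      · have hHeq : H = H1 :=
          (span_pair_eq H (hΓdim H hHΓ) h2 h3 li23).symm.trans
            (span_pair_eq H1 (hΓdim H1 hH1) he2m.1 he3m.1 li23)
        exact hQH1 v (hHeq ▸ hvH)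
      · by_cases h1 : e1 ∈ H
        · have hHeq : H = H2 :=
            (span_pair_eq H (hΓdim H hHΓ) h1 h3 li13).symm.trans
              (span_pair_eq H2 (hΓdim H2 hH2) he1m.1 he3m.2 li13)
          exact hQH2 v (hHeq ▸ hvH)
        · -- only e3 ∈ H; partner plane H3
          obtain ⟨u, hum, hu0⟩ := inf_nonzero hdim H H3 (hΓdim _ hHΓ) (hΓdim _ hH3)
          have liu : LinearIndependent ℝ ![e3, u] := by
            rw [linearIndependent_fin2]
            refine ⟨by simpa using hu0, fun a ha => ?_⟩
            simp only [Matrix.cons_val_one, Matrix.head_cons, Matrix.cons_val_zero] at ha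
            exact he3H3 (ha ▸ H3.smul_mem a hum.2)
          have hQu : Q u = f u := (hQH3 u hum.2).symm
          have hcr : 2 * B e3 u = f (e3 + u) - f e3 - f u := by
            have h := hPBk 2 u
            rw [hE2v] at h
            rw [h, hK H hHΓ e3 u h3 hum.1 he30]
          exact hplane H hHΓ e3 u h3 hum.1 liu (hE2v ▸ hQE 2) hQu hcr v hvH
    · by_cases h2 : e2 ∈ H
      · by_cases h1 : e1 ∈ H
        · have hHeq : H = H3 :=
            (span_pair_eq H (hΓdim H hHΓ) h1 h2 li12).symm.trans
              (span_pair_eq H3 (hΓdim H3 hH3) he1m.2 he2m.2 li12)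
          exact hQH3 v (hHeq ▸ hvH)
        · -- only e2 ∈ H; partner plane H2
          obtain ⟨u, hum, hu0⟩ := inf_nonzero hdim H H2 (hΓdim _ hHΓ) (hΓdim _ hH2)
          have liu : LinearIndependent ℝ ![e2, u] := by
            rw [linearIndependent_fin2]
            refine ⟨by simpa using hu0, fun a ha => ?_⟩
            simp only [Matrix.cons_val_one, Matrix.head_cons, Matrix.cons_val_zero] at ha
            exact ne2H2 (ha ▸ H2.smul_mem a hum.2)
          have hQu : Q u = f u := (hQH2 u hum.2).symm
          have hcr : 2 * B e2 u = f (e2 + u) - f e2 - f u := by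
            have h := hPBk 1 u
            rw [hE1v] at h
            rw [h, hK H hHΓ e2 u h2 hum.1 he20]
          exact hplane H hHΓ e2 u h2 hum.1 liu (hE1v ▸ hQE 1) hQu hcr v hvH
      · by_cases h1 : e1 ∈ H
        · -- only e1 ∈ H; partner plane H1
          obtain ⟨u, hum, hu0⟩ := inf_nonzero hdim H H1 (hΓdim _ hHΓ) (hΓdim _ hH1)
          have liu : LinearIndependent ℝ ![e1, u] := by
            rw [linearIndependent_fin2]
            refine ⟨by simpa using hu0, fun a ha => ?_⟩
            simp only [Matrix.cons_val_one, Matrix.head_cons, Matrix.cons_val_zero] at ha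
            exact ne1H1 (ha ▸ H1.smul_mem a hum.2)
          have hQu : Q u = f u := (hQH1 u hum.2).symm
          have hcr : 2 * B e1 u = f (e1 + u) - f e1 - f u := by
            have h := hPBk 0 u
            rw [hE0] at h
            rw [h, hK H hHΓ e1 u h1 hum.1 he10]
          exact hplane H hHΓ e1 u h1 hum.1 liu (hE0 ▸ hQE 0) hQu hcr v hvH
        · -- none of e1, e2, e3 in H
          obtain ⟨u1, hum1, hu10⟩ := inf_nonzero hdim H H1 (hΓdim _ hHΓ) (hΓdim _ hH1)
          obtain ⟨u2, hum2, hu20⟩ := inf_nonzero hdim H H2 (hΓdim _ hHΓ) (hΓdim _ hH2)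
          obtain ⟨u3, hum3, hu30⟩ := inf_nonzero hdim H H3 (hΓdim _ hHΓ) (hΓdim _ hH3)
          have liu : LinearIndependent ℝ ![u1, u2] := by
            rw [linearIndependent_fin2]
            refine ⟨by simpa using hu20, fun a ha => ?_⟩
            simp only [Matrix.cons_val_one, Matrix.head_cons, Matrix.cons_val_zero] at ha
            have hu1H2 : u1 ∈ H2 := ha ▸ H2.smul_mem a hum2.2
            have : u1 ∈ Submodule.span ℝ {e3} :=
              h12span ▸ (Submodule.mem_inf.mpr ⟨hum1.2, hu1H2⟩)
            exact h3 (hmemspan u1 e3 H (hflip u1 e3 hu10 this) hum1.1)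
          obtain ⟨a, c, hu3⟩ := span2 H (hΓdim H hHΓ) hum1.1 hum2.1 liu u3 hum3.1
          have ha0 : a ≠ 0 := by
            rintro rfl
            rw [zero_smul, zero_add] at hu3
            have hu3H2 : u3 ∈ H2 := hu3 ▸ H2.smul_mem c hum2.2
            have : u3 ∈ Submodule.span ℝ {e1} :=
              h23span ▸ (Submodule.mem_inf.mpr ⟨hu3H2, hum3.2⟩)
            exact h1 (hmemspan u3 e1 H (hflip u3 e1 hu30 this) hum3.1)
          have hc0 : c ≠ 0 := by
            rintro rfl
            rw [zero_smul, add_zero] at hu3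
            have hu3H1 : u3 ∈ H1 := hu3 ▸ H1.smul_mem a hum1.2
            have : u3 ∈ Submodule.span ℝ {e2} :=
              h13span ▸ (Submodule.mem_inf.mpr ⟨hu3H1, hum3.2⟩)
            exact h2 (hmemspan u3 e2 H (hflip u3 e2 hu30 this) hum3.1)
          have hQu1 : Q u1 = f u1 := (hQH1 u1 hum1.2).symm
          have hQu2 : Q u2 = f u2 := (hQH2 u2 hum2.2).symm
          have hQu3 : Q u3 = f u3 := (hQH3 u3 hum3.2).symm
          have hBu1 : B u1 u1 = f u1 := by
            rw [← LinearMap.BilinMap.toQuadraticMap_apply, ← hQdef]; exact hQu1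
          have hBu2 : B u2 u2 = f u2 := by
            rw [← LinearMap.BilinMap.toQuadraticMap_apply, ← hQdef]; exact hQu2
          have hexp : Q u3 = a * (a * B u1 u1 + c * B u2 u1)
              + c * (a * B u1 u2 + c * B u2 u2) := by
            rw [hu3, hQdef, LinearMap.BilinMap.toQuadraticMap_apply]
            simp only [map_add, map_smul, LinearMap.add_apply, LinearMap.smul_apply, smul_eq_mul]
          have hfu3 : f u3 = a^2 * f u1 + c^2 * f u2
              + a * c * (f (u1 + u2) - f u1 - f u2) := by
            rw [hu3]
            exact hE H hHΓ u1 u2 hum1.1 hum2.1 a c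
          have hsym : B u1 u2 = B u2 u1 := hBsymm u1 u2
          have hcr : 2 * B u1 u2 = f (u1 + u2) - f u1 - f u2 := by
            apply mul_left_cancel₀ (mul_ne_zero ha0 hc0)
            linear_combination hQu3 - hexp + hfu3 - a^2 * hBu1 - c^2 * hBu2 + a * c * hsym
          exact hplane H hHΓ u1 u2 hum1.1 hum2.1 liu hQu1 hQu2 hcr v hvH
end
end

section
/- Let φ₀ be a Banach–Minkowski norm on ℝ² and A : ℝ² → ℝ² a nonzero linear map such that D(φ₀)_v(A(v)) = 0 for every v ∈ ℝ²∖{0} (the linear vector field v ↦ A(v) is tangent to every level curve of φ₀). Then φ₀ is a Euclidean norm: there is a positive definite quadratic form q on ℝ² with φ₀(v)² = q(v) for all v ∈ ℝ², so the unit circle of φ₀ is an ellipse centered at 0. -/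
noncomputable section

/-- Auxiliary quadratic form `v ↦ r²·((v₁ - k v₂)² + (c v₂)²)`. -/
def auxBilin (k c r : ℝ) : (ℝ × ℝ) →ₗ[ℝ] (ℝ × ℝ) →ₗ[ℝ] ℝ :=
  LinearMap.mk₂ ℝ
    (fun v u : ℝ × ℝ => r^2 * ((v.1 - k*v.2) * (u.1 - k*u.2) + (c*v.2) * (c*u.2)))
    (fun m₁ m₂ n => by simp only [Prod.fst_add, Prod.snd_add, smul_eq_mul]; ring)
    (fun t m n => by simp only [Prod.smul_fst, Prod.smul_snd, smul_eq_mul]; ring)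
    (fun m n₁ n₂ => by simp only [Prod.fst_add, Prod.snd_add, smul_eq_mul]; ring)
    (fun t m n => by simp only [Prod.smul_fst, Prod.smul_snd, smul_eq_mul]; ring)

def auxForm (k c r : ℝ) : QuadraticForm ℝ (ℝ × ℝ) :=
  LinearMap.BilinMap.toQuadraticMap (auxBilin k c r)

lemma auxForm_apply (k c r : ℝ) (v : ℝ × ℝ) :
    auxForm k c r v = r^2 * ((v.1 - k*v.2) * (v.1 - k*v.2) + (c*v.2) * (c*v.2)) := by
  rw [auxForm, LinearMap.BilinMap.toQuadraticMap_apply, auxBilin, LinearMap.mk₂_apply]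

set_option maxHeartbeats 2000000 in
/-- auxiliary: a linear field tangent to the unit circle forces the norm
to be Euclidean: if a nonzero linear map `A : ℝ² → ℝ²` satisfies `D(φ₀)_v(A v) = 0` for
all `v ≠ 0`, then the Banach–Minkowski norm `φ₀` on ℝ² is Euclidean, i.e. `φ₀² ` is a
positive definite quadratic form (its unit circle is a centered ellipse). -/
theorem statement18 (φ₀ : ℝ × ℝ → ℝ) (hφ₀ : IsBanachMinkowski φ₀)
    (A : (ℝ × ℝ) →ₗ[ℝ] (ℝ × ℝ)) (hA : A ≠ 0)
    (htangent : ∀ v : ℝ × ℝ, v ≠ 0 → fderiv ℝ φ₀ v (A v) = 0) :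
    ∃ q : QuadraticForm ℝ (ℝ × ℝ), q.PosDef ∧ ∀ v : ℝ × ℝ, φ₀ v ^ 2 = q v := by
  obtain ⟨h0, hpos, hhomog, hadd, hsmooth, -⟩ := hφ₀
  -- differentiability away from the origin
  have hdiff : ∀ v : ℝ × ℝ, v ≠ 0 → DifferentiableAt ℝ φ₀ v := by
    intro v hv
    exact (hsmooth.contDiffAt (isOpen_compl_singleton.mem_nhds (by simpa using hv))).differentiableAt
      (by simp)
  -- Euler's relation
  have hEuler : ∀ v : ℝ × ℝ, v ≠ 0 → fderiv ℝ φ₀ v v = φ₀ v := by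
    intro v hv
    have h1 : HasDerivAt (fun t : ℝ => t • v) v 1 := by
      simpa using (hasDerivAt_id (1:ℝ)).smul_const v
    have hf : HasFDerivAt φ₀ (fderiv ℝ φ₀ v) ((1:ℝ) • v) := by
      simpa using (hdiff v hv).hasFDerivAt
    have h2 : HasDerivAt (fun t : ℝ => φ₀ (t • v)) (fderiv ℝ φ₀ v v) 1 := by
      exact hf.comp_hasDerivAt 1 h1
    have h3 : HasDerivAt (fun t : ℝ => t * φ₀ v) (φ₀ v) 1 := by
      simpa using (hasDerivAt_id (1:ℝ)).mul_const (φ₀ v)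
    have heq : (fun t : ℝ => t * φ₀ v) =ᶠ[nhds 1] fun t : ℝ => φ₀ (t • v) := by
      filter_upwards [Ioi_mem_nhds (by norm_num : (0:ℝ) < 1)] with t ht
      exact (hhomog t (le_of_lt ht) v).symm
    exact (h2.congr_of_eventuallyEq heq).unique h3
  -- every real eigenvalue of A is 0
  have hEig : ∀ w : ℝ × ℝ, w ≠ 0 → ∀ lam : ℝ, A w = lam • w → lam = 0 := by
    intro w hw lam hl
    have h1 := htangent w hw
    rw [hl, map_smul, smul_eq_mul, hEuler w hw] at h1
    rcases mul_eq_zero.1 h1 with h | h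
    · exact h
    · exact absurd h (hpos w hw).ne'
  -- curves tangent to the field keep φ₀ constant
  have hconst : ∀ u : ℝ → ℝ × ℝ, (∀ t, u t ≠ 0) → (∀ t, HasDerivAt u (A (u t)) t) →
      ∀ t, φ₀ (u t) = φ₀ (u 0) := by
    intro u hne hu t
    have hd : ∀ x : ℝ, HasDerivAt (fun r => φ₀ (u r)) 0 x := by
      intro x
      have h1 := ((hdiff (u x) (hne x)).hasFDerivAt).comp_hasDerivAt x (hu x)
      rw [htangent (u x) (hne x)] at h1
      exact h1
    exact is_const_of_deriv_eq_zero (fun x => (hd x).differentiableAt) (fun x => (hd x).deriv) t 0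
  -- matrix entries and Cayley–Hamilton
  have hAxy : ∀ x y : ℝ, A (x, y) =
      (x * (A (1,0)).1 + y * (A (0,1)).1, x * (A (1,0)).2 + y * (A (0,1)).2) := by
    intro x y
    have h : (x, y) = x • ((1:ℝ),(0:ℝ)) + y • ((0:ℝ),(1:ℝ)) := by
      ext <;> simp
    rw [h, map_add, map_smul, map_smul]
    ext <;> simp [Prod.smul_fst, Prod.smul_snd, smul_eq_mul] <;> ring
  set s : ℝ := ((A (1,0)).1 + (A (0,1)).2) / 2 with hs
  set dt : ℝ := (A (1,0)).1 * (A (0,1)).2 - (A (0,1)).1 * (A (1,0)).2 with hdt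
  have hCH : ∀ v : ℝ × ℝ, A (A v) = (2*s) • A v - dt • v := by
    intro v
    obtain ⟨x, y⟩ := v
    rw [hAxy x y, hAxy]
    ext <;> simp [hs, hdt, Prod.smul_fst, Prod.smul_snd, smul_eq_mul] <;> ring
  set κ : ℝ := s^2 - dt with hκ
  rcases lt_trichotomy κ 0 with hκneg | hκ0 | hκpos
  · -- complex eigenvalues: the main case
    set ω : ℝ := Real.sqrt (-κ) with hωdef
    have hωpos : 0 < ω := Real.sqrt_pos.2 (by linarith)
    have hω2 : ω^2 = -κ := Real.sq_sqrt (by linarith)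
    have hdt2 : dt = s^2 + ω^2 := by
      rw [hω2]; rw [hκ]; ring
    -- the flow curves
    have hcurve : ∀ v : ℝ × ℝ, v ≠ 0 → ∀ t : ℝ,
        φ₀ ((Real.exp (s*t) * Real.cos (ω*t)) • v +
          (Real.exp (s*t) * Real.sin (ω*t)) • (ω⁻¹ • (A v - s • v))) = φ₀ v := by
      intro v hv t
      set w : ℝ × ℝ := ω⁻¹ • (A v - s • v) with hw
      have hAv : A v = s • v + ω • w := by
        rw [hw, smul_smul, mul_inv_cancel₀ hωpos.ne', one_smul]
        abel
      have hAw : A w = s • w - ω • v := by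
        rw [hw, map_smul, map_sub, map_smul, hCH v]
        match_scalars
        · field_simp
          ring
        · rw [hdt2]
          field_simp
          ring
      have hf : ∀ r : ℝ, HasDerivAt (fun t : ℝ => Real.exp (s*t) * Real.cos (ω*t))
          (s * (Real.exp (s*r) * Real.cos (ω*r)) - ω * (Real.exp (s*r) * Real.sin (ω*r))) r := by
        intro r
        have hst : HasDerivAt (fun t : ℝ => s * t) s r := by
          simpa using (hasDerivAt_id r).const_mul s
        have hωt : HasDerivAt (fun t : ℝ => ω * t) ω r := by
          simpa using (hasDerivAt_id r).const_mul ω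
        have hE : HasDerivAt (fun t : ℝ => Real.exp (s*t)) (Real.exp (s*r) * s) r := by
          exact (Real.hasDerivAt_exp (s*r)).comp r hst
        have hC : HasDerivAt (fun t : ℝ => Real.cos (ω*t)) (-Real.sin (ω*r) * ω) r := by
          exact (Real.hasDerivAt_cos (ω*r)).comp r hωt
        have := hE.mul hC
        refine this.congr_deriv ?_
        ring
      have hg : ∀ r : ℝ, HasDerivAt (fun t : ℝ => Real.exp (s*t) * Real.sin (ω*t))
          (s * (Real.exp (s*r) * Real.sin (ω*r)) + ω * (Real.exp (s*r) * Real.cos (ω*r))) r := by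
        intro r
        have hst : HasDerivAt (fun t : ℝ => s * t) s r := by
          simpa using (hasDerivAt_id r).const_mul s
        have hωt : HasDerivAt (fun t : ℝ => ω * t) ω r := by
          simpa using (hasDerivAt_id r).const_mul ω
        have hE : HasDerivAt (fun t : ℝ => Real.exp (s*t)) (Real.exp (s*r) * s) r := by
          exact (Real.hasDerivAt_exp (s*r)).comp r hst
        have hS : HasDerivAt (fun t : ℝ => Real.sin (ω*t)) (Real.cos (ω*r) * ω) r := by
          exact (Real.hasDerivAt_sin (ω*r)).comp r hωt
        have := hE.mul hS
        refine this.congr_deriv ?_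
        ring
      have hu : ∀ r : ℝ, HasDerivAt
          (fun t : ℝ => (Real.exp (s*t) * Real.cos (ω*t)) • v +
            (Real.exp (s*t) * Real.sin (ω*t)) • w)
          (A ((Real.exp (s*r) * Real.cos (ω*r)) • v + (Real.exp (s*r) * Real.sin (ω*r)) • w))
          r := by
        intro r
        have h1 := ((hf r).smul_const v).add ((hg r).smul_const w)
        have h2 : A ((Real.exp (s*r) * Real.cos (ω*r)) • v +
            (Real.exp (s*r) * Real.sin (ω*r)) • w) =
            (s * (Real.exp (s*r) * Real.cos (ω*r)) - ω * (Real.exp (s*r) * Real.sin (ω*r))) • v +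
            (s * (Real.exp (s*r) * Real.sin (ω*r)) + ω * (Real.exp (s*r) * Real.cos (ω*r))) • w := by
        -- fill
          rw [map_add, map_smul, map_smul, hAv, hAw]
          match_scalars <;> ring
        rw [h2]
        exact h1
      have hne : ∀ r : ℝ, (Real.exp (s*r) * Real.cos (ω*r)) • v +
          (Real.exp (s*r) * Real.sin (ω*r)) • w ≠ 0 := by
        intro r h
        have hE : Real.exp (s*r) ≠ 0 := (Real.exp_pos _).ne'
        have h2 : Real.cos (ω*r) • v + Real.sin (ω*r) • w = 0 := by
          have h3 := congrArg (fun z : ℝ × ℝ => (Real.exp (s*r))⁻¹ • z) h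
          simpa [smul_add, smul_smul, ← mul_assoc, inv_mul_cancel₀ hE] using h3
        by_cases hsin : Real.sin (ω*r) = 0
        · have hcos2 : Real.cos (ω*r) ^ 2 = 1 := by
            have := Real.sin_sq_add_cos_sq (ω*r)
            rw [hsin] at this
            nlinarith
          have h4 : Real.cos (ω*r) • v = 0 := by
            rw [hsin] at h2
            simpa using h2
          rcases smul_eq_zero.1 h4 with h5 | h5
          · rw [h5] at hcos2; norm_num at hcos2
          · exact hv h5
        · set lam : ℝ := -(Real.cos (ω*r)) / Real.sin (ω*r) with hlam
          have hw2 : w = lam • v := by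
            have h3 : Real.sin (ω*r) • w = -(Real.cos (ω*r) • v) := by
              have := eq_neg_of_add_eq_zero_right h2
              exact this
            calc w = (Real.sin (ω*r))⁻¹ • (Real.sin (ω*r) • w) := by
                  rw [smul_smul, inv_mul_cancel₀ hsin, one_smul]
              _ = lam • v := by
                  rw [h3, hlam]
                  match_scalars
                  field_simp
          have hA1 : A w = (lam*s + ω*lam^2) • v := by
            rw [hw2, map_smul, hAv, hw2]
            match_scalars
            ring
          have hA2 : A w = (s*lam - ω) • v := by
            rw [hAw, hw2]
            match_scalars
            ring
          have h4 : (ω*lam^2 + ω) • v = 0 := by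
            have h5 : ((lam*s + ω*lam^2) - (s*lam - ω)) • v = 0 := by
              rw [sub_smul, ← hA1, ← hA2, sub_self]
            have h6 : (lam*s + ω*lam^2) - (s*lam - ω) = ω*lam^2 + ω := by ring
            rwa [h6] at h5
          rcases smul_eq_zero.1 h4 with h5 | h5
          · nlinarith [sq_nonneg lam]
          · exact hv h5
      have hcst := hconst _ hne hu t
      simpa using hcst
    -- the flow is periodic, so s = 0
    have hs0 : s = 0 := by
      have h1 := hcurve ((1:ℝ),(0:ℝ)) (by norm_num) (2 * Real.pi / ω)
      have hω' : ω * (2 * Real.pi / ω) = 2 * Real.pi := by field_simp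
      rw [hω', Real.cos_two_pi, Real.sin_two_pi] at h1
      simp only [mul_one, mul_zero, zero_smul, add_zero] at h1
      rw [hhomog _ (Real.exp_pos _).le] at h1
      have hp := hpos ((1:ℝ),(0:ℝ)) (by norm_num)
      have h2 : Real.exp (s*(2 * Real.pi / ω)) = 1 := by
        have h3 : Real.exp (s*(2 * Real.pi / ω)) * φ₀ ((1:ℝ),(0:ℝ)) = 1 * φ₀ ((1:ℝ),(0:ℝ)) := by
          rw [one_mul]; exact h1
        exact mul_right_cancel₀ hp.ne' h3
      have h4 : s * (2*Real.pi/ω) = 0 := (Real.exp_eq_one_iff _).1 h2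
      have h5 : 2*Real.pi/ω ≠ 0 := by positivity
      exact (mul_eq_zero.1 h4).resolve_right h5
    -- rotation invariance
    have hinv : ∀ v : ℝ × ℝ, v ≠ 0 → ∀ θ : ℝ,
        φ₀ ((Real.cos θ) • v + (Real.sin θ) • (ω⁻¹ • A v)) = φ₀ v := by
      intro v hv θ
      have h1 := hcurve v hv (θ/ω)
      rw [hs0] at h1
      have hθ : ω * (θ/ω) = θ := by field_simp
      simp only [zero_mul, Real.exp_zero, one_mul, zero_smul, sub_zero, hθ] at h1
      exact h1
    -- the invariant Euclidean structure
    set w0 : ℝ × ℝ := ω⁻¹ • A ((1:ℝ),(0:ℝ)) with hw0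
    set r : ℝ := φ₀ ((1:ℝ),(0:ℝ)) with hr
    have hrpos : 0 < r := hpos _ (by norm_num)
    have hAe1 : A ((1:ℝ),(0:ℝ)) = ω • w0 := by
      rw [hw0, smul_smul, mul_inv_cancel₀ hωpos.ne', one_smul]
    have hAw0 : A w0 = (-ω) • ((1:ℝ),(0:ℝ)) := by
      rw [hw0, map_smul, hCH ((1:ℝ),(0:ℝ)), hs0, hdt2, hs0]
      match_scalars
      · field_simp
        ring
      · field_simp
        ring
    have hw02 : w0.2 ≠ 0 := by
      intro h
      obtain ⟨x, hx⟩ : ∃ x : ℝ, w0 = x • ((1:ℝ),(0:ℝ)) := ⟨w0.1, by ext <;> simp [h]⟩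
      have h2 := hAw0
      rw [hx, map_smul, hAe1, hx, smul_smul, smul_smul] at h2
      have h4 : x * ω * x = -ω := by
        have h5 := congrArg Prod.fst h2
        simpa using h5
      nlinarith [sq_nonneg x, hωpos, h4]
    have hkey : ∀ x y : ℝ, φ₀ (x • ((1:ℝ),(0:ℝ)) + y • w0) = r * Real.sqrt (x^2 + y^2) := by
      intro x y
      by_cases hp : x = 0 ∧ y = 0
      · rw [hp.1, hp.2]
        simp [h0]
      · set z : ℂ := ⟨x, y⟩ with hz
        have hre : z.re = x := rfl
        have him : z.im = y := rfl
        have hz0 : z ≠ 0 := by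
          intro h
          apply hp
          have h1 := congrArg Complex.re h
          have h2 := congrArg Complex.im h
          rw [hre] at h1; rw [him] at h2
          simpa using ⟨h1, h2⟩
        have habspos : 0 < ‖z‖ := by
          simpa using norm_pos_iff.mpr hz0
        have habs : ‖z‖ = Real.sqrt (x^2 + y^2) := by
          rw [Complex.norm_def, Complex.normSq_apply, hre, him]
          congr 1
          ring
        have hcos : Real.cos z.arg = x / ‖z‖ := by
          rw [Complex.cos_arg hz0, hre]
        have hsin : Real.sin z.arg = y / ‖z‖ := by
          rw [Complex.sin_arg, him]
        have hdecomp : x • ((1:ℝ),(0:ℝ)) + y • w0 =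
            (‖z‖) • ((Real.cos z.arg) • ((1:ℝ),(0:ℝ)) + (Real.sin z.arg) • w0) := by
          rw [hcos, hsin]
          match_scalars <;> field_simp <;> ring
        rw [hdecomp, hhomog _ habspos.le]
        have hi := hinv ((1:ℝ),(0:ℝ)) (by norm_num) z.arg
        rw [← hw0] at hi
        rw [hi, habs, hr]
        ring
    have hGT : ∀ v : ℝ × ℝ, (v.1 - (w0.1/w0.2)*v.2) • ((1:ℝ),(0:ℝ)) + ((1/w0.2)*v.2) • w0 = v := by
      intro v
      ext
      · simp only [Prod.fst_add, Prod.smul_fst, smul_eq_mul]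
        field_simp
        ring
      · simp only [Prod.snd_add, Prod.smul_snd, smul_eq_mul]
        field_simp
        ring
    have hφval : ∀ v : ℝ × ℝ,
        φ₀ v = r * Real.sqrt ((v.1 - (w0.1/w0.2)*v.2)^2 + ((1/w0.2)*v.2)^2) := by
      intro v
      have h1 := hkey (v.1 - (w0.1/w0.2)*v.2) ((1/w0.2)*v.2)
      rw [hGT v] at h1
      exact h1
    refine ⟨auxForm (w0.1/w0.2) (1/w0.2) r, ?_, ?_⟩
    · intro v hv
      rw [auxForm_apply]
      have h1 : (v.1 - (w0.1/w0.2)*v.2) ≠ 0 ∨ ((1/w0.2)*v.2) ≠ 0 := by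
        by_cases h2 : v.2 = 0
        · left
          have h3 : v.1 ≠ 0 := by
            intro h4
            exact hv (Prod.ext h4 h2)
          rw [h2]
          simpa using h3
        · right
          exact mul_ne_zero (by simpa using hw02) h2
      have h5 : 0 < (v.1 - (w0.1/w0.2)*v.2) * (v.1 - (w0.1/w0.2)*v.2) +
          ((1/w0.2)*v.2) * ((1/w0.2)*v.2) := by
        rcases h1 with h | h
        · nlinarith [mul_self_pos.2 h, mul_self_nonneg ((1/w0.2)*v.2)]
        · nlinarith [mul_self_pos.2 h, mul_self_nonneg (v.1 - (w0.1/w0.2)*v.2)]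
      have h6 : 0 < r^2 := by positivity
      exact mul_pos h6 h5
    · intro v
      rw [auxForm_apply]
      rw [hφval v, mul_pow, Real.sq_sqrt (by positivity)]
      ring

  · -- κ = 0 : nilpotent-type, contradiction
    exfalso
    have hs0 : s = 0 := by
      by_cases hz : ∃ z : ℝ × ℝ, A z - s • z ≠ 0
      · obtain ⟨z, hz⟩ := hz
        refine hEig _ hz _ ?_
        rw [map_sub, map_smul, hCH z]
        match_scalars
        · ring
        · linear_combination hκ0 - hκ
      · push_neg at hz
        exact hEig _ (by norm_num) _ (sub_eq_zero.1 (hz ((1:ℝ),(0:ℝ))))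
    have hdt0 : dt = 0 := by
      have h1 := hκ
      rw [hκ0, hs0] at h1
      linarith
    have hA2 : ∀ v : ℝ × ℝ, A (A v) = 0 := by
      intro v
      rw [hCH v, hs0, hdt0]
      simp
    obtain ⟨v, hAv⟩ : ∃ v : ℝ × ℝ, A v ≠ 0 := by
      by_contra h
      push_neg at h
      exact hA (LinearMap.ext fun v => by simp [h v])
    have hvne : v ≠ 0 := by rintro rfl; simp at hAv
    have hune : ∀ t : ℝ, v + t • A v ≠ 0 := by
      intro t h
      apply hAv
      have h2 : A (v + t • A v) = A v := by
        rw [map_add, map_smul, hA2, smul_zero, add_zero]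
      rw [h, map_zero] at h2
      exact h2.symm
    have hu : ∀ t : ℝ, HasDerivAt (fun t : ℝ => v + t • A v) (A (v + t • A v)) t := by
      intro t
      have h1 : HasDerivAt (fun t : ℝ => v + t • A v) (A v) t := by
        simpa using ((hasDerivAt_id t).smul_const (A v)).const_add v
      have h2 : A (v + t • A v) = A v := by
        rw [map_add, map_smul, hA2, smul_zero, add_zero]
      rwa [h2]
    have hcst : ∀ t : ℝ, φ₀ (v + t • A v) = φ₀ v := by
      intro t
      have := hconst _ hune hu t
      simpa using this
    have hlim1 : Filter.Tendsto (fun t : ℝ => φ₀ (t⁻¹ • v + A v)) Filter.atTop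
        (nhds (φ₀ (A v))) := by
      have h1 : Filter.Tendsto (fun t : ℝ => t⁻¹ • v + A v) Filter.atTop (nhds (A v)) := by
        have h2 : (0:ℝ) • v + A v = A v := by simp
        have h3 := ((tendsto_inv_atTop_zero :
          Filter.Tendsto (fun r : ℝ => r⁻¹) Filter.atTop (nhds 0)).smul_const v).add_const (A v)
        rwa [h2] at h3
      exact ((hdiff (A v) hAv).continuousAt).tendsto.comp h1
    have hlim2 : Filter.Tendsto (fun t : ℝ => φ₀ (t⁻¹ • v + A v)) Filter.atTop (nhds 0) := by
      have hbase : Filter.Tendsto (fun t : ℝ => φ₀ v * t⁻¹) Filter.atTop (nhds 0) := by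
        simpa using tendsto_inv_atTop_zero.const_mul (φ₀ v)
      refine hbase.congr' ?_
      filter_upwards [Filter.eventually_gt_atTop (0:ℝ)] with t ht
      have h2 : φ₀ (t • (t⁻¹ • v + A v)) = t * φ₀ (t⁻¹ • v + A v) := hhomog t ht.le _
      have h3 : t • (t⁻¹ • v + A v) = v + t • A v := by
        rw [smul_add, smul_smul, mul_inv_cancel₀ ht.ne']
        simp
      rw [h3, hcst t] at h2
      rw [h2]
      field_simp
    have := tendsto_nhds_unique hlim1 hlim2
    exact (hpos _ hAv).ne' this
  · -- κ > 0 : real eigenvalues, contradiction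
    exfalso
    set μ : ℝ := Real.sqrt κ with hμdef
    have hμpos : 0 < μ := Real.sqrt_pos.2 hκpos
    have hμ2 : μ^2 = κ := Real.sq_sqrt hκpos.le
    have hplus : s + μ = 0 := by
      by_cases hz : ∃ z : ℝ × ℝ, A z + (μ - s) • z ≠ 0
      · obtain ⟨z, hz⟩ := hz
        refine hEig _ hz _ ?_
        rw [map_add, map_smul, hCH z]
        match_scalars
        · ring
        · linear_combination -hμ2 - hκ
      · push_neg at hz
        exfalso
        have h1 : A ((1:ℝ),(0:ℝ)) = (s - μ) • ((1:ℝ),(0:ℝ)) := by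
          have h2 : A ((1:ℝ),(0:ℝ)) = -((μ - s) • ((1:ℝ),(0:ℝ))) :=
            eq_neg_of_add_eq_zero_left (hz _)
          rw [h2]; match_scalars; ring
        have h3 : s - μ = 0 := hEig _ (by norm_num) _ h1
        apply hA
        refine LinearMap.ext fun z => ?_
        have h4 : A z = -((μ - s) • z) := eq_neg_of_add_eq_zero_left (hz z)
        have h5 : μ - s = 0 := by linarith
        simp [h4, h5]
    have hminus : s - μ = 0 := by
      by_cases hz : ∃ z : ℝ × ℝ, A z - (μ + s) • z ≠ 0
      · obtain ⟨z, hz⟩ := hz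
        refine hEig _ hz _ ?_
        rw [map_sub, map_smul, hCH z]
        match_scalars
        · ring
        · linear_combination -hμ2 - hκ
      · push_neg at hz
        exfalso
        have h1 : A ((1:ℝ),(0:ℝ)) = (μ + s) • ((1:ℝ),(0:ℝ)) := by
          have h2 := sub_eq_zero.1 (hz ((1:ℝ),(0:ℝ)))
          exact h2
        have h3 : μ + s = 0 := hEig _ (by norm_num) _ h1
        apply hA
        refine LinearMap.ext fun z => ?_
        have h4 : A z = (μ + s) • z := sub_eq_zero.1 (hz z)
        simp [h4, h3]
    linarith
end
end

section
/- Let (V, Φ) be a 3-dimensional Banach–Minkowski space and S ⊆ V*∖{0} an open set such that for every g ∈ S there exists τ ∈ V∖{0} with DΦ_u(τ) = 0 for every u ∈ ker g with Φ(u) = 1. Then for every g ∈ S and every v ∈ ker g with Φ(v) = 1, setting v' := −v/Φ(−v), the kernels of the derivatives DΦ_v and DΦ_{v'} coincide; that is, the tangent planes to the unit sphere {Φ = 1} at the opposite points v and v' are parallel. -/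
noncomputable section

section Helpers

variable {V : Type*} [NormedAddCommGroup V] [NormedSpace ℝ V]

lemma bm_diffAt {Φ : V → ℝ} (hsm : ContDiffOn ℝ (⊤ : ℕ∞) Φ {(0 : V)}ᶜ) {x : V} (hx : x ≠ 0) :
    DifferentiableAt ℝ Φ x := by
  have h := hsm.contDiffAt (isOpen_compl_singleton.mem_nhds (by simpa using hx))
  exact h.differentiableAt (by simp)

lemma bm_fderiv_smul {Φ : V → ℝ} (hsm : ContDiffOn ℝ (⊤ : ℕ∞) Φ {(0 : V)}ᶜ)
    (hhom : ∀ t : ℝ, 0 ≤ t → ∀ v : V, Φ (t • v) = t * Φ v)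
    {c : ℝ} (hc : 0 < c) {x : V} (hx : x ≠ 0) :
    fderiv ℝ Φ (c • x) = fderiv ℝ Φ x := by
  have hcx : c • x ≠ 0 := smul_ne_zero hc.ne' hx
  have h1 : HasFDerivAt (fun y : V => Φ (c • y))
      ((fderiv ℝ Φ (c • x)).comp (c • ContinuousLinearMap.id ℝ V)) x := by
    have hmap : HasFDerivAt (fun y : V => c • y) (c • ContinuousLinearMap.id ℝ V) x := by
      exact (hasFDerivAt_id x).const_smul c
    exact ((bm_diffAt hsm hcx).hasFDerivAt).comp x hmap
  have h2 : HasFDerivAt (fun y : V => Φ (c • y)) (c • fderiv ℝ Φ x) x := by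
    have : (fun y : V => Φ (c • y)) = fun y : V => c * Φ y := by
      funext y; exact hhom c hc.le y
    rw [this]
    exact ((bm_diffAt hsm hx).hasFDerivAt).const_mul c
  have := h1.unique h2
  ext y
  have hy := congrArg (fun L : V →L[ℝ] ℝ => L y) this
  simp only [ContinuousLinearMap.comp_apply, ContinuousLinearMap.smul_apply,
    ContinuousLinearMap.id_apply, map_smul, smul_eq_mul] at hy ⊢
  exact mul_left_cancel₀ hc.ne' hy

lemma bm_euler {Φ : V → ℝ} (hsm : ContDiffOn ℝ (⊤ : ℕ∞) Φ {(0 : V)}ᶜ)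
    (hhom : ∀ t : ℝ, 0 ≤ t → ∀ v : V, Φ (t • v) = t * Φ v)
    {x : V} (hx : x ≠ 0) : fderiv ℝ Φ x x = Φ x := by
  have hmap : HasDerivAt (fun t : ℝ => t • x) x 1 := by
    simpa using (hasDerivAt_id (1 : ℝ)).smul_const x
  have h1 : HasDerivAt (fun t : ℝ => Φ (t • x)) (fderiv ℝ Φ x x) 1 := by
    have hx1 : HasFDerivAt Φ (fderiv ℝ Φ x) ((1:ℝ) • x) := by
      rw [one_smul]; exact (bm_diffAt hsm hx).hasFDerivAt
    exact hx1.comp_hasDerivAt 1 hmap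
  have h2 : HasDerivAt (fun t : ℝ => Φ (t • x)) (Φ x) 1 := by
    have heq : (fun t : ℝ => t * Φ x) =ᶠ[nhds (1 : ℝ)] fun t : ℝ => Φ (t • x) := by
      filter_upwards [eventually_gt_nhds (show (0:ℝ) < 1 by norm_num)] with t ht
      exact (hhom t ht.le x).symm
    have hbase : HasDerivAt (fun t : ℝ => t * Φ x) (Φ x) 1 := by
      simpa using (hasDerivAt_id (1:ℝ)).mul_const (Φ x)
    exact hbase.congr_of_eventuallyEq heq.symm
  exact h1.unique h2

lemma bm_ker_rank2 [FiniteDimensional ℝ V] (hdim : Module.finrank ℝ V = 3)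
    (f : V →ₗ[ℝ] ℝ) {x : V} (hx : f x = 1) :
    Module.finrank ℝ (LinearMap.ker f) = 2 := by
  have hsurj : Function.Surjective f := by
    intro c
    exact ⟨c • x, by simp [map_smul, hx]⟩
  have hrange : LinearMap.range f = ⊤ := LinearMap.range_eq_top.mpr hsurj
  have h := LinearMap.finrank_range_add_finrank_ker f
  rw [hrange, finrank_top, Module.finrank_self, hdim] at h
  omega

lemma bm_ker_eq_span [FiniteDimensional ℝ V] (hdim : Module.finrank ℝ V = 3)
    (D : V →L[ℝ] ℝ) {x τ σ : V} (hx : D x = 1) (hτ : D τ = 0) (hσ : D σ = 0)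
    (hli : LinearIndependent ℝ ![τ, σ]) :
    LinearMap.ker (D : V →ₗ[ℝ] ℝ) = Submodule.span ℝ {τ, σ} := by
  have hkr : Module.finrank ℝ (LinearMap.ker (D : V →ₗ[ℝ] ℝ)) = 2 :=
    bm_ker_rank2 hdim _ (by simpa using hx)
  have hrange : Set.range ![τ, σ] = ({τ, σ} : Set V) := by
    ext y
    simp [Fin.exists_fin_two, or_comm]
  have hspan : Module.finrank ℝ (Submodule.span ℝ ({τ, σ} : Set V)) = 2 := by
    rw [← hrange, finrank_span_eq_card hli]
    simp
  have hle : Submodule.span ℝ ({τ, σ} : Set V) ≤ LinearMap.ker (D : V →ₗ[ℝ] ℝ) := by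
    rw [Submodule.span_le]
    rintro y (rfl | rfl) <;> simp [LinearMap.mem_ker, hτ, hσ]
  exact (Submodule.eq_of_le_of_finrank_le hle (by rw [hkr, hspan])).symm

end Helpers

/-- first step of Proposition 3.5: if for every `g` in an open set `S`
of nonzero functionals there is `τ ≠ 0` tangent to the unit sphere of `Φ` at each point of
`ker g ∩ {Φ = 1}`, then for every such `g` and every unit vector `v ∈ ker g`, the tangent
planes to `{Φ = 1}` at `v` and at the opposite unit vector `v' = −v / Φ(−v)` are parallel:
`ker DΦ_v = ker DΦ_{v'}`. -/
theorem statement19 (V : Type*) [NormedAddCommGroup V] [NormedSpace ℝ V]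
    [FiniteDimensional ℝ V] (hdim : Module.finrank ℝ V = 3)
    (Φ : V → ℝ) (hΦ : IsBanachMinkowski Φ)
    (S : Set (V →L[ℝ] ℝ)) (hSopen : IsOpen S) (hS0 : ∀ g ∈ S, g ≠ 0)
    (htau : ∀ g ∈ S, ∃ τ : V, τ ≠ 0 ∧
      ∀ u : V, u ∈ LinearMap.ker (g : V →ₗ[ℝ] ℝ) → Φ u = 1 → fderiv ℝ Φ u τ = 0) :
    ∀ g ∈ S, ∀ v : V, v ∈ LinearMap.ker (g : V →ₗ[ℝ] ℝ) → Φ v = 1 →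
      LinearMap.ker (fderiv ℝ Φ v : V →ₗ[ℝ] ℝ) =
        LinearMap.ker (fderiv ℝ Φ ((Φ (-v))⁻¹ • (-v)) : V →ₗ[ℝ] ℝ) := by
  obtain ⟨h0, hpos, hhom, hsub, hsm, hconv⟩ := hΦ
  intro g hg v hvk hv1
  have hmem : ∀ (g' : V →L[ℝ] ℝ) (u : V), g' u = 0 → u ∈ LinearMap.ker (g' : V →ₗ[ℝ] ℝ) :=
    fun g' u h => LinearMap.mem_ker.mpr (by simpa using h)
  have hgv : g v = 0 := by simpa using hvk
  have hv0 : v ≠ 0 := by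
    rintro rfl
    rw [h0] at hv1
    norm_num at hv1
  have hnv0 : (-v : V) ≠ 0 := neg_ne_zero.mpr hv0
  have hΦnv : 0 < Φ (-v) := hpos _ hnv0
  have hv'1 : Φ ((Φ (-v))⁻¹ • (-v)) = 1 := by
    rw [hhom _ (inv_nonneg.mpr hΦnv.le)]
    exact inv_mul_cancel₀ hΦnv.ne'
  have hv'0 : (Φ (-v))⁻¹ • (-v) ≠ 0 := smul_ne_zero (inv_ne_zero hΦnv.ne') hnv0
  have hker' : ∀ g' : V →L[ℝ] ℝ, g' v = 0 → g' ((Φ (-v))⁻¹ • (-v)) = 0 := by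
    intro g' h
    rw [map_smul, map_neg, h]
    simp
  obtain ⟨τ, hτ0, hτ⟩ := htau g hg
  have hτv : fderiv ℝ Φ v τ = 0 := hτ v hvk hv1
  have hτv' : fderiv ℝ Φ ((Φ (-v))⁻¹ • (-v)) τ = 0 :=
    hτ _ (hmem g _ (hker' g hgv)) hv'1
  have hDv : fderiv ℝ Φ v v = 1 := by rw [bm_euler hsm hhom hv0, hv1]
  have hDv' : fderiv ℝ Φ ((Φ (-v))⁻¹ • (-v)) ((Φ (-v))⁻¹ • (-v)) = 1 := by
    rw [bm_euler hsm hhom hv'0, hv'1]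
  by_cases hcase : ∃ σ : V, fderiv ℝ Φ v σ = 0 ∧ fderiv ℝ Φ ((Φ (-v))⁻¹ • (-v)) σ = 0 ∧
      σ ∉ Submodule.span ℝ {τ}
  · obtain ⟨σ, hσv, hσv', hσsp⟩ := hcase
    have hσ0 : σ ≠ 0 := fun h => hσsp (h ▸ Submodule.zero_mem _)
    have hli : LinearIndependent ℝ ![τ, σ] := by
      rw [linearIndependent_fin2]
      refine ⟨by simpa using hσ0, fun a ha => ?_⟩
      simp only [Matrix.cons_val_one, Matrix.head_cons, Matrix.cons_val_zero] at ha
      rcases eq_or_ne a 0 with rfl | ha0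
      · rw [zero_smul] at ha
        exact hτ0 ha.symm
      · exact hσsp (Submodule.mem_span_singleton.mpr ⟨a⁻¹, by rw [← ha, inv_smul_smul₀ ha0]⟩)
    rw [bm_ker_eq_span hdim _ hDv hτv hσv hli,
      bm_ker_eq_span hdim _ hDv' hτv' hσv' hli]
  · push_neg at hcase
    have hA : ∀ g' : V →L[ℝ] ℝ, g' ∈ S → g' v = 0 → ∀ u : V, g' u = 0 → u ≠ 0 →
        fderiv ℝ Φ u τ = 0 := by
      intro g' hg'S hg'v u hu hu0
      obtain ⟨σ, hσ0, hσ⟩ := htau g' hg'S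
      have h1 : fderiv ℝ Φ v σ = 0 := hσ v (hmem g' v hg'v) hv1
      have h2 : fderiv ℝ Φ ((Φ (-v))⁻¹ • (-v)) σ = 0 :=
        hσ _ (hmem g' _ (hker' g' hg'v)) hv'1
      obtain ⟨a, ha⟩ := Submodule.mem_span_singleton.mp (hcase σ h1 h2)
      have ha0 : a ≠ 0 := by
        rintro rfl
        rw [zero_smul] at ha
        exact hσ0 ha.symm
      have hΦu : 0 < Φ u := hpos u hu0
      have hw1 : Φ ((Φ u)⁻¹ • u) = 1 := by
        rw [hhom _ (inv_nonneg.mpr hΦu.le)]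
        exact inv_mul_cancel₀ hΦu.ne'
      have hw0 : (Φ u)⁻¹ • u ≠ 0 := smul_ne_zero (inv_ne_zero hΦu.ne') hu0
      have hwker : g' ((Φ u)⁻¹ • u) = 0 := by rw [map_smul, hu]; simp
      have hσw : fderiv ℝ Φ ((Φ u)⁻¹ • u) σ = 0 := hσ _ (hmem g' _ hwker) hw1
      have hτw : fderiv ℝ Φ ((Φ u)⁻¹ • u) τ = 0 := by
        rw [← ha, map_smul, smul_eq_mul] at hσw
        exact (mul_eq_zero.mp hσw).resolve_left ha0
      have hfe : fderiv ℝ Φ u = fderiv ℝ Φ ((Φ u)⁻¹ • u) := by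
        have h := bm_fderiv_smul hsm hhom hΦu hw0
        rwa [smul_inv_smul₀ hΦu.ne'] at h
      rw [hfe]
      exact hτw
    -- find w₀ ∈ ker g, not in span {v}
    have hkerg : Module.finrank ℝ (LinearMap.ker (g : V →ₗ[ℝ] ℝ)) = 2 := by
      obtain ⟨x, hx⟩ : ∃ x, g x ≠ 0 := by
        by_contra h
        push_neg at h
        exact hS0 g hg (by ext x; simpa using h x)
      refine bm_ker_rank2 hdim _ (x := (g x)⁻¹ • x) ?_
      simp only [ContinuousLinearMap.coe_coe, map_smul, smul_eq_mul]
      exact inv_mul_cancel₀ hx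
    have hle : Submodule.span ℝ {v} ≤ LinearMap.ker (g : V →ₗ[ℝ] ℝ) := by
      rw [Submodule.span_le, Set.singleton_subset_iff]
      exact hvk
    have hlt : Submodule.span ℝ {v} < LinearMap.ker (g : V →ₗ[ℝ] ℝ) := by
      refine lt_of_le_of_ne hle fun h => ?_
      rw [← h, finrank_span_singleton hv0] at hkerg
      norm_num at hkerg
    obtain ⟨w₀, hw₀k, hw₀sp⟩ := SetLike.exists_of_lt hlt
    have hw₀0 : w₀ ≠ 0 := fun h => hw₀sp (h ▸ Submodule.zero_mem _)
    have hgw₀ : g w₀ = 0 := by simpa using hw₀k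
    -- functional φ with φ v = 0, φ w₀ ≠ 0
    obtain ⟨ψ, hψ⟩ : ∃ ψ : Module.Dual ℝ (V ⧸ Submodule.span ℝ {v}),
        ψ (Submodule.Quotient.mk w₀) ≠ 0 := by
      by_contra h
      push_neg at h
      have := (Module.forall_dual_apply_eq_zero_iff ℝ
        (Submodule.Quotient.mk (p := Submodule.span ℝ {v}) w₀)).mp h
      exact hw₀sp ((Submodule.Quotient.mk_eq_zero _).mp this)
    set φ : V →L[ℝ] ℝ :=
      LinearMap.toContinuousLinearMap (ψ ∘ₗ (Submodule.span ℝ {v}).mkQ) with hφdef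
    have hφv : φ v = 0 := by
      have : (Submodule.span ℝ {v}).mkQ v = 0 := by
        rw [Submodule.mkQ_apply]
        exact (Submodule.Quotient.mk_eq_zero _).mpr (Submodule.mem_span_singleton_self v)
      simp [hφdef, this]
    have hφw₀ : φ w₀ ≠ 0 := by simpa [hφdef] using hψ
    set G : V → (V →L[ℝ] ℝ) := fun w => g - ((g w) / (φ w)) • φ with hGdef
    have hGw₀ : G w₀ = g := by simp [hGdef, hgw₀]
    have hGcont : ContinuousAt G w₀ := by
      apply ContinuousAt.sub continuousAt_const
      exact ((g.continuous.continuousAt.div φ.continuous.continuousAt hφw₀).smul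
        continuousAt_const)
    have hev1 : ∀ᶠ w in nhds w₀, G w ∈ S := by
      refine hGcont.eventually_mem ?_
      rw [hGw₀]
      exact hSopen.mem_nhds hg
    have hev2 : ∀ᶠ w in nhds w₀, φ w ≠ 0 := φ.continuous.continuousAt.eventually_ne hφw₀
    have hev3 : ∀ᶠ w in nhds w₀, w ≠ 0 := eventually_ne_nhds hw₀0
    have hev : ∀ᶠ w in nhds w₀, fderiv ℝ Φ w τ = 0 := by
      filter_upwards [hev1, hev2, hev3] with w h1 h2 h3
      have hGv : G w v = 0 := by
        simp [hGdef, hgv, hφv]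
      have hGw : G w w = 0 := by
        simp only [hGdef, ContinuousLinearMap.sub_apply, ContinuousLinearMap.smul_apply,
          smul_eq_mul]
        field_simp
        ring
      exact hA (G w) h1 hGv w hGw h3
    exfalso
    have hpos2 := hconv w₀ hw₀0 τ hτ0
    have hΦat : ContDiffAt ℝ (⊤ : ℕ∞) Φ w₀ :=
      hsm.contDiffAt (isOpen_compl_singleton.mem_nhds (by simpa using hw₀0))
    have hFat : ContDiffAt ℝ (⊤ : ℕ∞) (fun u => Φ u ^ 2) w₀ := hΦat.pow 2
    have hevF : ∀ᶠ w in nhds w₀, fderiv ℝ (fun u => Φ u ^ 2) w τ = 0 := by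
      filter_upwards [hev, hev3] with w h1 h3
      have hd := (bm_diffAt hsm h3).hasFDerivAt
      have hF : HasFDerivAt (fun u => Φ u ^ 2)
          (Φ w • fderiv ℝ Φ w + Φ w • fderiv ℝ Φ w) w := by
        have heq : (fun u : V => Φ u ^ 2) = fun u => Φ u * Φ u := by
          funext u; ring
        rw [heq]
        exact hd.mul hd
      rw [hF.fderiv]
      simp [h1]
    have hD2 : HasFDerivAt (fderiv ℝ (fun u => Φ u ^ 2))
        (fderiv ℝ (fderiv ℝ (fun u => Φ u ^ 2)) w₀) w₀ := by
      have h2 : ContDiffAt ℝ 1 (fderiv ℝ (fun u => Φ u ^ 2)) w₀ := hFat.fderiv_right (WithTop.coe_le_coe.mpr le_top)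
      exact (h2.differentiableAt one_ne_zero).hasFDerivAt
    have happ : HasFDerivAt (fun w => fderiv ℝ (fun u => Φ u ^ 2) w τ)
        ((ContinuousLinearMap.apply ℝ ℝ τ).comp
          (fderiv ℝ (fderiv ℝ (fun u => Φ u ^ 2)) w₀)) w₀ :=
      (ContinuousLinearMap.apply ℝ ℝ τ).hasFDerivAt.comp w₀ hD2
    have h0' : fderiv ℝ (fun w => fderiv ℝ (fun u => Φ u ^ 2) w τ) w₀ = 0 := by
      have heq : (fun w => fderiv ℝ (fun u => Φ u ^ 2) w τ) =ᶠ[nhds w₀]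
          fun _ => (0 : ℝ) := hevF
      rw [heq.fderiv_eq]
      exact fderiv_const_apply 0
    have hzero : fderiv ℝ (fderiv ℝ (fun u => Φ u ^ 2)) w₀ τ τ = 0 := by
      have h := happ.fderiv
      rw [h0'] at h
      have := congrArg (fun L : V →L[ℝ] ℝ => L τ) h.symm
      simpa using this
    rw [iteratedFDeriv_two_apply] at hpos2
    simp only [Matrix.cons_val_zero, Matrix.cons_val_one, Matrix.head_cons] at hpos2
    rw [hzero] at hpos2
    exact lt_irrefl 0 hpos2
end
end
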